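/- arXiv:math/0409043 — 4 statements merged into one kernel-verified Lean document; each statement's English description precedes it below -/
import Mathlib

section
/- Let G be a totally disconnected, locally compact Hausdorff topological group and α a bicontinuous automorphism of G such that α|_{M_α} is tidy. Then every compact open subgroup V of G satisfying condition (T1), i.e. V = V_+ V_-, is tidy for α; in other words, (T1) automatically implies that V_{++} and V_{--} are closed in G. -/
open Filter Topology Set Pointwise MeasureTheory
open scoped ENNReal

variable {G : Type*} [Group G] [TopologicalSpace G] [IsTopologicalGroup G]

/-- `V₊ = ⋂ n ≥ 0, α^n(V)`. -/
def posPart (α : MulAut G) (V : Set G) : Set G := ⋂ n : ℕ, ⇑(α ^ n) '' V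

/-- `V₋ = ⋂ n ≥ 0, α^{-n}(V)`. -/
def negPart (α : MulAut G) (V : Set G) : Set G := ⋂ n : ℕ, ⇑(α⁻¹ ^ n) '' V

/-- `V₊₊ = ⋃ n ≥ 0, α^n(V₊)`. -/
def ppPart (α : MulAut G) (V : Set G) : Set G := ⋃ n : ℕ, ⇑(α ^ n) '' posPart α V

/-- `V₋₋ = ⋃ n ≥ 0, α^{-n}(V₋)`. -/
def mmPart (α : MulAut G) (V : Set G) : Set G := ⋃ n : ℕ, ⇑(α⁻¹ ^ n) '' negPart α V

/-- A compact open subgroup `V ⊆ G` is tidy for `α` if (T1) `V = V₊V₋` and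
(T2) `V₊₊` and `V₋₋` are closed in `G`. -/
def IsTidyFor (α : MulAut G) (V : Subgroup G) : Prop :=
  IsCompact (V : Set G) ∧ IsOpen (V : Set G) ∧
  (V : Set G) = posPart α (V : Set G) * negPart α (V : Set G) ∧
  IsClosed (ppPart α (V : Set G)) ∧ IsClosed (mmPart α (V : Set G))

/-- `α` is tidy if every identity neighbourhood of `G` contains a compact open
subgroup of `G` tidy for `α`. -/
def IsTidy (α : MulAut G) : Prop :=
  ∀ U ∈ 𝓝 (1 : G), ∃ V : Subgroup G, IsTidyFor α V ∧ (V : Set G) ⊆ U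

/-- The contraction group `U_α = {x : α^n(x) → 1}`. -/
def contractionGroup (α : MulAut G) : Set G :=
  {x : G | Tendsto (fun n : ℕ => (α ^ n) x) atTop (𝓝 1)}

/-- `P_α = {x : {α^n(x), n ∈ ℕ} relatively compact}`. -/
def parSet (α : MulAut G) : Set G :=
  {x : G | IsCompact (closure (Set.range fun n : ℕ => (α ^ n) x))}

/-- `M_α = {x : {α^n(x), n ∈ ℤ} relatively compact}`. -/
def levSet (α : MulAut G) : Set G :=
  {x : G | IsCompact (closure (Set.range fun n : ℤ => (α ^ n) x))}

/-- A subgroup `V` of `G` contained in an `α`-stable subset `M ⊆ G` is a compact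
open subgroup of the topological group `M` tidy for the restriction `α|_M`
(openness and closedness of `V`, `V₊₊`, `V₋₋` being relative to `M`). -/
def IsTidyForIn (α : MulAut G) (M : Set G) (V : Subgroup G) : Prop :=
  (V : Set G) ⊆ M ∧ IsCompact (V : Set G) ∧
  IsOpen ((Subtype.val ⁻¹' (V : Set G)) : Set M) ∧
  (V : Set G) = posPart α (V : Set G) * negPart α (V : Set G) ∧
  IsClosed ((Subtype.val ⁻¹' ppPart α (V : Set G)) : Set M) ∧
  IsClosed ((Subtype.val ⁻¹' mmPart α (V : Set G)) : Set M)

/-- The restriction `α|_M` is tidy: every identity neighbourhood of the topological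
group `M` contains a compact open subgroup of `M` tidy for `α|_M`. -/
def IsTidyOn (α : MulAut G) (M : Set G) : Prop :=
  ∀ U ∈ 𝓝 (1 : G), ∃ V : Subgroup G, IsTidyForIn α M V ∧ (V : Set G) ⊆ U

/-- `U_{α/H}`: the set of `x ∈ G` with `α^n(x) → 1` modulo `H`. -/
def relContraction (α : MulAut G) (H : Set G) : Set G :=
  {x : G | ∀ V ∈ 𝓝 (1 : G), ∃ N : ℕ, ∀ n ≥ N, (α ^ n) x ∈ V * H}

/-- The set `K`: the intersection, over all compact open subgroups `O` of `G`, of the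
closures of `{x ∈ M_α : α^n(x) ∈ O for all sufficiently large n}`. -/
def KSet (α : MulAut G) : Set G :=
  ⋂ O ∈ {O : Subgroup G | IsCompact (O : Set G) ∧ IsOpen (O : Set G)},
    closure {x ∈ levSet α | ∃ N : ℕ, ∀ n ≥ N, (α ^ n) x ∈ O}

/-- `V₋ = ⋂ n ≥ 0, α^{-n}(V)` as a subgroup. -/
def negSubgroup (α : MulAut G) (V : Subgroup G) : Subgroup G :=
  ⨅ n : ℕ, V.map ((α⁻¹ ^ n : MulAut G) : G →* G)

/-- The index `[α^{-1}(H) : H]` of a subgroup `H` in `α^{-1}(H)` (equal to `0` if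
this index is infinite). -/
noncomputable def idx (α : MulAut G) (H : Subgroup G) : ℕ :=
  H.relIndex (H.map ((α⁻¹ : MulAut G) : G →* G))

set_option linter.unusedSectionVars false
set_option linter.unusedVariables false

section Aux
variable (α : MulAut G)

lemma aux_inv_pow_apply_pow (n : ℕ) (x : G) : (α⁻¹ ^ n) ((α ^ n) x) = x := by
  rw [← MulAut.mul_apply, inv_pow, inv_mul_cancel, MulAut.one_apply]

lemma aux_pow_apply_inv_pow (n : ℕ) (x : G) : (α ^ n) ((α⁻¹ ^ n) x) = x := by
  rw [← MulAut.mul_apply, inv_pow, mul_inv_cancel, MulAut.one_apply]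

lemma aux_mem_image_pow {V : Set G} {n : ℕ} {x : G} :
    x ∈ ⇑(α ^ n) '' V ↔ (α⁻¹ ^ n) x ∈ V := by
  constructor
  · rintro ⟨v, hv, rfl⟩; rwa [aux_inv_pow_apply_pow]
  · intro h; exact ⟨(α⁻¹ ^ n) x, h, aux_pow_apply_inv_pow α n x⟩

lemma aux_mem_posPart {V : Set G} {x : G} :
    x ∈ posPart α V ↔ ∀ n : ℕ, (α⁻¹ ^ n) x ∈ V := by
  simp only [_root_.posPart, Set.mem_iInter, aux_mem_image_pow]

lemma aux_mem_negPart {V : Set G} {x : G} :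
    x ∈ negPart α V ↔ ∀ n : ℕ, (α ^ n) x ∈ V := by
  simp only [_root_.negPart, Set.mem_iInter, aux_mem_image_pow, inv_inv]

lemma aux_pow_add_apply (β : MulAut G) (k m : ℕ) (x : G) :
    (β ^ (k + m)) x = (β ^ k) ((β ^ m) x) := by
  rw [pow_add, MulAut.mul_apply]

lemma aux_mem_ppPart {V : Set G} {x : G} :
    x ∈ ppPart α V ↔ ∃ m : ℕ, ∀ n ≥ m, (α⁻¹ ^ n) x ∈ V := by
  simp only [ppPart, Set.mem_iUnion, aux_mem_image_pow, aux_mem_posPart]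
  constructor
  · rintro ⟨m, hm⟩
    refine ⟨m, fun n hn => ?_⟩
    have := hm (n - m)
    rwa [← aux_pow_add_apply, Nat.sub_add_cancel hn] at this
  · rintro ⟨m, hm⟩
    refine ⟨m, fun k => ?_⟩
    rw [← aux_pow_add_apply]
    exact hm (k + m) (Nat.le_add_left m k)

lemma aux_mem_mmPart {V : Set G} {x : G} :
    x ∈ mmPart α V ↔ ∃ m : ℕ, ∀ n ≥ m, (α ^ n) x ∈ V := by
  have : mmPart α V = ppPart α⁻¹ V := rfl
  rw [this, aux_mem_ppPart, inv_inv]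

lemma aux_posPart_inv (V : Set G) : posPart α⁻¹ V = negPart α V := rfl

lemma aux_negPart_inv (V : Set G) : negPart α⁻¹ V = posPart α V := by
  simp only [_root_.negPart, _root_.posPart, inv_inv]

lemma aux_ppPart_inv (V : Set G) : ppPart α⁻¹ V = mmPart α V := rfl

lemma aux_mmPart_inv (V : Set G) : mmPart α⁻¹ V = ppPart α V := by
  simp only [mmPart, ppPart, inv_inv, aux_negPart_inv]

lemma aux_cont_pow {α : MulAut G} (hc : Continuous ⇑α) : ∀ n : ℕ, Continuous ⇑(α ^ n) := by
  intro n
  induction n with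
  | zero => simpa [pow_zero] using continuous_id
  | succ n ih =>
      have : ⇑(α ^ (n + 1)) = ⇑(α ^ n) ∘ ⇑α := by
        funext x; rw [Function.comp_apply, ← MulAut.mul_apply, pow_succ]
  -- (α^(n+1)) = α^n * α, and (σ*τ) x = σ (τ x)
      rw [this]; exact ih.comp hc

end Aux

section Aux2
variable (α : MulAut G)

lemma aux_zpow_ofNat (n : ℕ) : (α ^ (n : ℤ)) = α ^ n := zpow_natCast α n

lemma aux_zpow_neg (n : ℕ) : (α ^ (-(n : ℤ))) = α⁻¹ ^ n := by
  rw [zpow_neg, zpow_natCast, inv_pow]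

lemma aux_orbit_union (x : G) :
    (Set.range fun n : ℤ => (α ^ n) x) =
      (Set.range fun n : ℕ => (α ^ n) x) ∪ (Set.range fun n : ℕ => (α⁻¹ ^ n) x) := by
  ext y
  constructor
  · rintro ⟨n, rfl⟩
    rcases le_or_gt 0 n with h | h
    · refine Or.inl ⟨n.toNat, ?_⟩
      show (α ^ n.toNat) x = (α ^ n) x
      rw [← aux_zpow_ofNat, Int.toNat_of_nonneg h]
    · refine Or.inr ⟨(-n).toNat, ?_⟩
      show (α⁻¹ ^ (-n).toNat) x = (α ^ n) x
      rw [← aux_zpow_neg, Int.toNat_of_nonneg (by omega), neg_neg]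
  · rintro (⟨n, rfl⟩ | ⟨n, rfl⟩)
    · refine ⟨(n : ℤ), ?_⟩
      show (α ^ (n : ℤ)) x = (α ^ n) x
      rw [aux_zpow_ofNat]
    · refine ⟨-(n : ℤ), ?_⟩
      show (α ^ (-(n : ℤ))) x = (α⁻¹ ^ n) x
      rw [aux_zpow_neg]

lemma aux_orbit_shift (k : ℤ) (x : G) :
    (Set.range fun n : ℤ => (α ^ n) ((α ^ k) x)) = Set.range fun n : ℤ => (α ^ n) x := by
  ext y
  constructor
  · rintro ⟨n, rfl⟩
    refine ⟨n + k, ?_⟩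
    show (α ^ (n + k)) x = (α ^ n) ((α ^ k) x)
    rw [zpow_add, MulAut.mul_apply]
  · rintro ⟨n, rfl⟩
    refine ⟨n - k, ?_⟩
    show (α ^ (n - k)) ((α ^ k) x) = (α ^ n) x
    rw [← MulAut.mul_apply, ← zpow_add, sub_add_cancel]

variable [T2Space G]

lemma aux_levSet_one : (1 : G) ∈ levSet α := by
  have hsub : (Set.range fun n : ℤ => (α ^ n) (1 : G)) ⊆ {1} := by
    rintro y ⟨n, rfl⟩; simp [map_one]
  exact IsCompact.of_isClosed_subset isCompact_singleton isClosed_closure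
    (closure_minimal hsub isClosed_singleton)

lemma aux_levSet_mul {x y : G} (hx : x ∈ levSet α) (hy : y ∈ levSet α) :
    x * y ∈ levSet α := by
  have hK : IsCompact ((closure (Set.range fun n : ℤ => (α ^ n) x)) *
      (closure (Set.range fun n : ℤ => (α ^ n) y))) := hx.mul hy
  have : (Set.range fun n : ℤ => (α ^ n) (x * y)) ⊆
      (closure (Set.range fun n : ℤ => (α ^ n) x)) *
      (closure (Set.range fun n : ℤ => (α ^ n) y)) := by
    rintro z ⟨n, rfl⟩
    show (α ^ n) (x * y) ∈ _
    rw [map_mul]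
    exact Set.mul_mem_mul (subset_closure ⟨n, rfl⟩) (subset_closure ⟨n, rfl⟩)
  exact IsCompact.of_isClosed_subset hK isClosed_closure (closure_minimal this hK.isClosed)

lemma aux_levSet_inv {x : G} (hx : x ∈ levSet α) : x⁻¹ ∈ levSet α := by
  have hr : (Set.range fun n : ℤ => (α ^ n) x⁻¹) =
      (Set.range fun n : ℤ => (α ^ n) x)⁻¹ := by
    ext y
    simp only [Set.mem_inv, Set.mem_range]
    constructor
    · rintro ⟨n, rfl⟩
      refine ⟨n, ?_⟩
      rw [map_inv, inv_inv]
    · rintro ⟨n, hn⟩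
      refine ⟨n, ?_⟩
      show (α ^ n) x⁻¹ = y
      rw [map_inv, hn, inv_inv]
  rw [levSet, Set.mem_setOf_eq, hr, ← inv_closure]
  exact hx.inv

lemma aux_levSet_zpow_mem {x : G} (hx : x ∈ levSet α) (k : ℤ) : (α ^ k) x ∈ levSet α := by
  rw [levSet, Set.mem_setOf_eq, aux_orbit_shift]
  exact hx

lemma aux_levSet_apply {x : G} (hx : x ∈ levSet α) : α x ∈ levSet α := by
  have := aux_levSet_zpow_mem α hx 1
  rwa [zpow_one] at this

lemma aux_levSet_inv_apply {x : G} (hx : x ∈ levSet α) : α⁻¹ x ∈ levSet α := by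
  have := aux_levSet_zpow_mem α hx (-1)
  rwa [zpow_neg, zpow_one] at this

lemma aux_levSet_invAut : levSet α⁻¹ = levSet α := by
  ext x
  simp only [levSet, Set.mem_setOf_eq]
  have : (Set.range fun n : ℤ => (α⁻¹ ^ n) x) = Set.range fun n : ℤ => (α ^ n) x := by
    ext y
    constructor
    · rintro ⟨n, rfl⟩
      refine ⟨-n, ?_⟩
      show (α ^ (-n)) x = (α⁻¹ ^ n) x
      rw [zpow_neg, ← inv_zpow]
    · rintro ⟨n, rfl⟩
      refine ⟨-n, ?_⟩
      show (α⁻¹ ^ (-n)) x = (α ^ n) x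
      rw [inv_zpow, zpow_neg, inv_inv]
  rw [this]

end Aux2
section Aux3
variable (α : MulAut G)

/-- `V₊` as a subgroup. -/
def auxPosSub (V : Subgroup G) : Subgroup G where
  carrier := posPart α (V : Set G)
  one_mem' := (aux_mem_posPart α).2 fun n => by
    rw [map_one]; exact V.one_mem
  mul_mem' := fun {a b} ha hb => (aux_mem_posPart α).2 fun n => by
    rw [map_mul]
    exact V.mul_mem ((aux_mem_posPart α).1 ha n) ((aux_mem_posPart α).1 hb n)
  inv_mem' := fun {a} ha => (aux_mem_posPart α).2 fun n => by
    rw [map_inv]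
    exact V.inv_mem ((aux_mem_posPart α).1 ha n)

/-- `V₊₊` as a subgroup. -/
def auxPpSub (V : Subgroup G) : Subgroup G where
  carrier := ppPart α (V : Set G)
  one_mem' := (aux_mem_ppPart α).2 ⟨0, fun n _ => by rw [map_one]; exact V.one_mem⟩
  mul_mem' := fun {a b} ha hb => by
    obtain ⟨m₁, h₁⟩ := (aux_mem_ppPart α).1 ha
    obtain ⟨m₂, h₂⟩ := (aux_mem_ppPart α).1 hb
    exact (aux_mem_ppPart α).2 ⟨max m₁ m₂, fun n hn => by
      rw [map_mul]
      exact V.mul_mem (h₁ n (le_trans (le_max_left _ _) hn))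
        (h₂ n (le_trans (le_max_right _ _) hn))⟩
  inv_mem' := fun {a} ha => by
    obtain ⟨m, h⟩ := (aux_mem_ppPart α).1 ha
    exact (aux_mem_ppPart α).2 ⟨m, fun n hn => by
      rw [map_inv]; exact V.inv_mem (h n hn)⟩

lemma aux_coe_posSub (V : Subgroup G) : (auxPosSub α V : Set G) = posPart α (V : Set G) := rfl
lemma aux_coe_ppSub (V : Subgroup G) : (auxPpSub α V : Set G) = ppPart α (V : Set G) := rfl

lemma aux_posPart_subset (V : Subgroup G) : posPart α (V : Set G) ⊆ (V : Set G) := by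
  intro x hx
  have := (aux_mem_posPart α).1 hx 0
  simpa [pow_zero] using this

lemma aux_negPart_subset (V : Subgroup G) : negPart α (V : Set G) ⊆ (V : Set G) := by
  rw [← aux_posPart_inv]
  exact aux_posPart_subset α⁻¹ V

lemma aux_posPart_subset_ppPart (V : Set G) : posPart α V ⊆ ppPart α V := by
  intro x hx
  exact Set.mem_iUnion.2 ⟨0, by simpa [pow_zero] using hx⟩

variable {α} in
lemma aux_posPart_closed {V : Set G} (hc : Continuous ⇑α) (hVc : IsCompact V)
    [T2Space G] : IsClosed (posPart α V) :=
  isClosed_iInter fun n => (hVc.image (aux_cont_pow hc n)).isClosed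

variable {α} in
lemma aux_posPart_compact {V : Subgroup G} (hc : Continuous ⇑α) (hVc : IsCompact (V : Set G))
    [T2Space G] : IsCompact (posPart α (V : Set G)) :=
  IsCompact.of_isClosed_subset hVc (aux_posPart_closed hc hVc) (aux_posPart_subset α V)

variable {α} in
lemma aux_negPart_closed {V : Set G} (hc' : Continuous ⇑α⁻¹) (hVc : IsCompact V)
    [T2Space G] : IsClosed (negPart α V) := by
  rw [← aux_posPart_inv]
  exact aux_posPart_closed hc' hVc

variable {α} in
lemma aux_negPart_compact {V : Subgroup G} (hc' : Continuous ⇑α⁻¹) (hVc : IsCompact (V : Set G))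
    [T2Space G] : IsCompact (negPart α (V : Set G)) := by
  rw [← aux_posPart_inv]
  exact aux_posPart_compact hc' hVc

/-- Points in `V₊₊ ∩ V₋` have relatively compact two-sided orbit. -/
lemma aux_D_sub_levSet [T2Space G] (V : Subgroup G) (hVc : IsCompact (V : Set G)) {x : G}
    (hpp : x ∈ ppPart α (V : Set G)) (hneg : x ∈ negPart α (V : Set G)) :
    x ∈ levSet α := by
  obtain ⟨m, hm⟩ := (aux_mem_ppPart α).1 hpp
  have hneg' := (aux_mem_negPart α).1 hneg
  have hFfin : ((fun k : ℕ => (α⁻¹ ^ k) x) '' Set.Iio m).Finite :=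
    (Set.finite_Iio m).image _
  have hsub : (Set.range fun n : ℤ => (α ^ n) x) ⊆
      (V : Set G) ∪ ((fun k : ℕ => (α⁻¹ ^ k) x) '' Set.Iio m) := by
    rw [aux_orbit_union]
    rintro y (⟨n, rfl⟩ | ⟨n, rfl⟩)
    · exact Or.inl (hneg' n)
    · rcases le_or_gt m n with h | h
      · exact Or.inl (hm n h)
      · exact Or.inr ⟨n, h, rfl⟩
  have hK : IsCompact ((V : Set G) ∪ ((fun k : ℕ => (α⁻¹ ^ k) x) '' Set.Iio m)) :=
    hVc.union hFfin.isCompact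
  exact IsCompact.of_isClosed_subset hK isClosed_closure
    (closure_minimal hsub (hVc.isClosed.union hFfin.isClosed))

end Aux3
section Aux4
variable (α : MulAut G) [T2Space G]

/-- If `M = levSet α` contains a compact subgroup that is relatively open in `M`,
then `M` is closed. -/
lemma aux_levSet_isClosed (W : Subgroup G) (hWc : IsCompact (W : Set G))
    (hWM : (W : Set G) ⊆ levSet α)
    (hWo : IsOpen ((Subtype.val ⁻¹' (W : Set G)) : Set (levSet α))) :
    IsClosed (levSet α) := by
  obtain ⟨O, hOopen, hOW⟩ := isOpen_induced_iff.1 hWo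
  have hMO : ∀ y ∈ levSet α, (y ∈ O ↔ y ∈ (W : Set G)) := by
    intro y hy
    constructor
    · intro h
      have : (⟨y, hy⟩ : levSet α) ∈ Subtype.val ⁻¹' O := h
      rw [hOW] at this; exact this
    · intro h
      have : (⟨y, hy⟩ : levSet α) ∈ Subtype.val ⁻¹' (W : Set G) := h
      rw [← hOW] at this; exact this
  have hO1 : O ∈ 𝓝 (1 : G) :=
    hOopen.mem_nhds ((hMO 1 (aux_levSet_one α)).2 W.one_mem)
  obtain ⟨S, hS, hsplit⟩ := exists_nhds_split_inv hO1
  obtain ⟨S₀, hS₀sub, hS₀open, hS₀1⟩ := mem_nhds_iff.1 hS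
  refine isClosed_of_closure_subset ?_
  intro x hx
  set U : Set G := (fun g => g * x) '' S₀ with hU
  have hUopen : IsOpen U := (isOpenMap_mul_right x) S₀ hS₀open
  have hxU : x ∈ U := ⟨1, hS₀1, one_mul x⟩
  have hxcl : x ∈ closure (U ∩ levSet α) :=
    hUopen.inter_closure ⟨hxU, hx⟩
  have hne : (U ∩ levSet α).Nonempty := by
    rcases closure_nonempty_iff.1 ⟨x, hxcl⟩ with h; exact h
  obtain ⟨m₀, ⟨w₀, hw₀, hw₀x⟩, hm₀M⟩ := hne
  have key : U ∩ levSet α ⊆ (fun g => g * m₀) '' (W : Set G) := by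
    rintro m ⟨⟨v, hv, rfl⟩, hmM⟩
    have hdiv : (v * x) * m₀⁻¹ = v / w₀ := by
      rw [← hw₀x, div_eq_mul_inv, mul_inv_rev, ← mul_assoc, mul_assoc v x x⁻¹,
        mul_inv_cancel, mul_one]
    have hO' : (v * x) * m₀⁻¹ ∈ O := by
      rw [hdiv]; exact hsplit v (hS₀sub hv) w₀ (hS₀sub hw₀)
    have hM' : (v * x) * m₀⁻¹ ∈ levSet α :=
      aux_levSet_mul α hmM (aux_levSet_inv α hm₀M)
    have hW' : (v * x) * m₀⁻¹ ∈ (W : Set G) := (hMO _ hM').1 hO'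
    refine ⟨(v * x) * m₀⁻¹, hW', ?_⟩
    show (v * x) * m₀⁻¹ * m₀ = v * x
    rw [inv_mul_cancel_right]
  have hcl : IsClosed ((fun g => g * m₀) '' (W : Set G)) :=
    (hWc.image (continuous_mul_right m₀)).isClosed
  have hxW : x ∈ (fun g => g * m₀) '' (W : Set G) := by
    have := closure_mono key hxcl
    rwa [hcl.closure_eq] at this
  obtain ⟨w, hw, rfl⟩ := hxW
  exact aux_levSet_mul α (hWM hw) hm₀M

end Aux4
section Aux5
variable (α : MulAut G)

lemma aux_mem_posPart_z {V : Set G} {x : G} :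
    x ∈ posPart α V ↔ ∀ k : ℤ, k ≤ 0 → (α ^ k) x ∈ V := by
  rw [aux_mem_posPart]
  constructor
  · intro h k hk
    have : (α ^ k) = α⁻¹ ^ (-k).toNat := by
      rw [← aux_zpow_neg, Int.toNat_of_nonneg (by omega), neg_neg]
    rw [this]; exact h _
  · intro h n
    have : (α⁻¹ ^ n) = α ^ (-(n : ℤ)) := (aux_zpow_neg α n).symm
    rw [this]; exact h _ (by omega)

lemma aux_posPart_inv_apply {V : Set G} {x : G} (hx : x ∈ posPart α V) :
    α⁻¹ x ∈ posPart α V := by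
  rw [aux_mem_posPart] at hx ⊢
  intro n
  have : (α⁻¹ ^ n) (α⁻¹ x) = (α⁻¹ ^ (n + 1)) x := by
    rw [aux_pow_add_apply, pow_one]
  rw [this]; exact hx (n + 1)

lemma aux_posPart_inv_pow_apply {V : Set G} {x : G} (hx : x ∈ posPart α V) (k : ℕ) :
    (α⁻¹ ^ k) x ∈ posPart α V := by
  induction k with
  | zero => simpa [pow_zero] using hx
  | succ k ih =>
      have : (α⁻¹ ^ (k + 1)) x = α⁻¹ ((α⁻¹ ^ k) x) := by
        rw [pow_succ', MulAut.mul_apply]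
      rw [this]; exact aux_posPart_inv_apply α ih

lemma aux_image_pow_posPart_mono {V : Set G} {m n : ℕ} (h : m ≤ n) :
    ⇑(α ^ m) '' posPart α V ⊆ ⇑(α ^ n) '' posPart α V := by
  intro x hx
  rw [aux_mem_image_pow] at hx ⊢
  have : (α⁻¹ ^ n) x = (α⁻¹ ^ (n - m)) ((α⁻¹ ^ m) x) := by
    rw [← aux_pow_add_apply, Nat.sub_add_cancel h]
  rw [this]
  exact aux_posPart_inv_pow_apply α hx (n - m)

/-- orbit points of an element with `α⁻¹ x ∈ W₊` all lie in `W₊₊`. -/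
lemma aux_orbit_sub_ppPart {W : Subgroup G} {x : G}
    (hx : α⁻¹ x ∈ posPart α (W : Set G)) (k : ℤ) :
    (α ^ k) x ∈ ppPart α (W : Set G) := by
  rw [aux_mem_ppPart]
  refine ⟨(k + 1).toNat, fun n hn => ?_⟩
  have h1 : (α⁻¹ ^ n) ((α ^ k) x) = (α ^ (k - n + 1)) (α⁻¹ x) := by
    have : (α⁻¹ ^ n : MulAut G) = α ^ (-(n : ℤ)) := (aux_zpow_neg α n).symm
    rw [this, ← MulAut.mul_apply, ← zpow_add]
    have : α⁻¹ = α ^ (-1 : ℤ) := by rw [zpow_neg, zpow_one]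
    rw [this, ← MulAut.mul_apply, ← zpow_add]
    have he : -(n : ℤ) + k = k - ↑n + 1 + -1 := by omega
    rw [he]
  rw [h1]
  exact (aux_mem_posPart_z α).1 hx (k - n + 1) (by omega)

end Aux5
section Aux6
variable [T2Space G] [LocallyCompactSpace G]

/-- Key Baire-category step: if all orbits of points of `W` are relatively compact and
`W₊₊` is closed, then `W₊` is `α`-invariant. -/
lemma aux_posPart_invariant {α : MulAut G} (hc : Continuous ⇑α)
    (W : Subgroup G) (hWc : IsCompact (W : Set G)) (hWM : (W : Set G) ⊆ levSet α)
    (hppc : IsClosed (ppPart α (W : Set G))) :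
    ∀ x : G, α⁻¹ x ∈ posPart α (W : Set G) → x ∈ posPart α (W : Set G) := by
  intro x hx'
  by_contra hxc
  set Hpp : Subgroup G := auxPpSub α W with hHppdef
  have hHppc : IsClosed (Hpp : Set G) := hppc
  haveI : LocallyCompactSpace ↥Hpp := hHppc.locallyCompactSpace
  haveI : Nonempty ↥Hpp := ⟨⟨1, Hpp.one_mem⟩⟩
  have hPoscpt : IsCompact (posPart α (W : Set G)) := aux_posPart_compact hc hWc
  -- the closed covering of `Hpp`
  have hfcl : ∀ n : ℕ,
      IsClosed ((Subtype.val ⁻¹' (⇑(α ^ n) '' posPart α (W : Set G))) : Set ↥Hpp) :=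
    fun n => ((hPoscpt.image (aux_cont_pow hc n)).isClosed).preimage continuous_subtype_val
  have hfU : (⋃ n : ℕ,
      ((Subtype.val ⁻¹' (⇑(α ^ n) '' posPart α (W : Set G))) : Set ↥Hpp)) = Set.univ := by
    apply Set.eq_univ_iff_forall.2
    rintro ⟨y, hy⟩
    have hy' : y ∈ ppPart α (W : Set G) := hy
    obtain ⟨n, hn⟩ := Set.mem_iUnion.1 hy'
    exact Set.mem_iUnion.2 ⟨n, hn⟩
  obtain ⟨N, hNne⟩ := nonempty_interior_of_iUnion_of_closed hfcl hfU
  obtain ⟨u, hu⟩ := hNne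
  -- the subgroups `α^n(W₊)` of `Hpp`
  have hcoe : ∀ n : ℕ,
      (((((auxPosSub α W).map (((α ^ n : MulAut G) : G ≃* G) : G →* G))).comap
        Hpp.subtype : Subgroup ↥Hpp) : Set ↥Hpp) =
      Subtype.val ⁻¹' (⇑(α ^ n) '' posPart α (W : Set G)) := by
    intro n
    rw [Subgroup.coe_comap, Subgroup.coe_map, Subgroup.coe_subtype]
    rfl
  set SN : Subgroup ↥Hpp :=
    (((auxPosSub α W).map (((α ^ N : MulAut G) : G ≃* G) : G →* G))).comap Hpp.subtype with hSN
  have hSNopen : IsOpen (SN : Set ↥Hpp) := by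
    apply Subgroup.isOpen_of_mem_nhds (g := u)
    rw [hcoe N]
    exact mem_interior_iff_mem_nhds.1 hu
  -- the orbit closure of `x`
  have hxM : x ∈ levSet α := by
    have h1 : α⁻¹ x ∈ levSet α := hWM (aux_posPart_subset α W hx')
    have h2 := aux_levSet_apply α h1
    rwa [MulAut.apply_inv_self] at h2
  have hCcpt : IsCompact (closure (Set.range fun n : ℤ => (α ^ n) x)) := hxM
  have hCsub : closure (Set.range fun n : ℤ => (α ^ n) x) ⊆ (Hpp : Set G) :=
    closure_minimal (by rintro y ⟨k, rfl⟩; exact aux_orbit_sub_ppPart α hx' k) hHppc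
  have hval : Topology.IsClosedEmbedding (Subtype.val : ↥Hpp → G) :=
    hHppc.isClosedEmbedding_subtypeVal
  have hKcpt : IsCompact
      ((Subtype.val ⁻¹' closure (Set.range fun n : ℤ => (α ^ n) x)) : Set ↥Hpp) :=
    hval.isCompact_preimage hCcpt
  -- the open cover
  have hopen : ∀ n : ℕ,
      IsOpen ((Subtype.val ⁻¹' (⇑(α ^ (N + n)) '' posPart α (W : Set G))) : Set ↥Hpp) := by
    intro n
    rw [← hcoe (N + n)]
    apply Subgroup.isOpen_mono (H₁ := SN) _ hSNopen
    rw [← SetLike.coe_subset_coe, hcoe, hcoe]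
    exact Set.preimage_mono (aux_image_pow_posPart_mono α (Nat.le_add_right N n))
  have hcover : ((Subtype.val ⁻¹' closure (Set.range fun n : ℤ => (α ^ n) x)) : Set ↥Hpp) ⊆
      ⋃ n : ℕ, ((Subtype.val ⁻¹' (⇑(α ^ (N + n)) '' posPart α (W : Set G))) : Set ↥Hpp) := by
    rintro ⟨y, hy⟩ _
    have hy' : y ∈ ppPart α (W : Set G) := hy
    obtain ⟨m, hm⟩ := Set.mem_iUnion.1 hy'
    refine Set.mem_iUnion.2 ⟨m, ?_⟩
    exact aux_image_pow_posPart_mono α (Nat.le_add_left m N) hm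
  obtain ⟨t, ht⟩ := hKcpt.elim_finite_subcover _ hopen hcover
  set n₁ : ℕ := t.sup id with hn₁
  -- every element of the orbit closure lies in `α^(N+n₁)(W₊)`
  have hfinal : ∀ y, y ∈ closure (Set.range fun n : ℤ => (α ^ n) x) →
      y ∈ ⇑(α ^ (N + n₁)) '' posPart α (W : Set G) := by
    intro y hy
    have hyH : (⟨y, hCsub hy⟩ : ↥Hpp) ∈
        ⋃ n ∈ t, ((Subtype.val ⁻¹' (⇑(α ^ (N + n)) '' posPart α (W : Set G))) : Set ↥Hpp) :=
      ht hy
    obtain ⟨n, hnt, hn⟩ := Set.mem_iUnion₂.1 hyH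
    exact aux_image_pow_posPart_mono α
      (Nat.add_le_add_left (Finset.le_sup (f := id) hnt) N) hn
  have horb : (α ^ ((N + n₁ : ℕ) : ℤ)) x ∈ closure (Set.range fun n : ℤ => (α ^ n) x) :=
    subset_closure ⟨((N + n₁ : ℕ) : ℤ), rfl⟩
  have hxin := hfinal _ horb
  rw [aux_zpow_ofNat, aux_mem_image_pow, aux_inv_pow_apply_pow] at hxin
  exact hxc hxin

end Aux6
section Aux7
variable (α : MulAut G)

lemma aux_coe_set_inv (H : Subgroup G) : (H : Set G)⁻¹ = (H : Set G) := inv_coe_set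

lemma aux_posPart_set_inv (V : Subgroup G) :
    (posPart α (V : Set G))⁻¹ = posPart α (V : Set G) := by
  rw [← aux_coe_posSub]; exact inv_coe_set

lemma aux_negPart_set_inv (V : Subgroup G) :
    (negPart α (V : Set G))⁻¹ = negPart α (V : Set G) := by
  rw [← aux_posPart_inv]
  exact aux_posPart_set_inv α⁻¹ V

/-- (T1) for `α` gives (T1) for `α⁻¹`. -/
lemma aux_T1_inv (V : Subgroup G)
    (hT1 : (V : Set G) = posPart α (V : Set G) * negPart α (V : Set G)) :
    (V : Set G) = posPart α⁻¹ (V : Set G) * negPart α⁻¹ (V : Set G) := by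
  rw [aux_posPart_inv, aux_negPart_inv]
  calc (V : Set G) = ((V : Set G))⁻¹ := (aux_coe_set_inv V).symm
    _ = (posPart α (V : Set G) * negPart α (V : Set G))⁻¹ := by rw [← hT1]
    _ = (negPart α (V : Set G))⁻¹ * (posPart α (V : Set G))⁻¹ := by rw [mul_inv_rev]
    _ = negPart α (V : Set G) * posPart α (V : Set G) := by
        rw [aux_negPart_set_inv, aux_posPart_set_inv]

lemma aux_ppPart_sub_levSet [T2Space G] (W : Subgroup G) (hWM : (W : Set G) ⊆ levSet α) :
    ppPart α (W : Set G) ⊆ levSet α := by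
  intro y hy
  obtain ⟨m, hm⟩ := (aux_mem_ppPart α).1 hy
  have h1 : (α⁻¹ ^ m) y ∈ posPart α (W : Set G) := by
    rw [aux_mem_posPart]
    intro n
    rw [← aux_pow_add_apply]
    exact hm (n + m) (Nat.le_add_left m n)
  have h2 : (α⁻¹ ^ m) y ∈ levSet α := hWM (aux_posPart_subset α W h1)
  have h3 := aux_levSet_zpow_mem α h2 (m : ℤ)
  rwa [aux_zpow_ofNat, aux_pow_apply_inv_pow] at h3

lemma aux_closed_of_rel_closed {M S : Set G} (hM : IsClosed M) (hS : S ⊆ M)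
    (h : IsClosed ((Subtype.val ⁻¹' S) : Set M)) : IsClosed S := by
  have h2 := (hM.isClosedEmbedding_subtypeVal).isClosedMap _ h
  rwa [Subtype.image_preimage_coe, Set.inter_eq_self_of_subset_right hS] at h2

lemma aux_negPart_apply {V : Set G} {x : G} (hx : x ∈ negPart α V) : α x ∈ negPart α V := by
  have := aux_posPart_inv_apply α⁻¹ (x := x) (by rw [aux_posPart_inv]; exact hx)
  rw [aux_posPart_inv, inv_inv] at this
  exact this

/-- Full invariance of `W₊` under `α`. -/
lemma aux_image_posPart_eq [T2Space G] [LocallyCompactSpace G]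
    (hc : Continuous ⇑α) (W : Subgroup G) (hWc : IsCompact (W : Set G))
    (hWM : (W : Set G) ⊆ levSet α) (hppc : IsClosed (ppPart α (W : Set G))) :
    ⇑α '' posPart α (W : Set G) = posPart α (W : Set G) := by
  apply Set.Subset.antisymm
  · rintro y ⟨z, hz, rfl⟩
    refine aux_posPart_invariant hc W hWc hWM hppc (α z) ?_
    rwa [MulAut.inv_apply_self]
  · intro z hz
    exact ⟨α⁻¹ z, aux_posPart_inv_apply α hz, MulAut.apply_inv_self G α z⟩

/-- Full invariance of `W` itself under `α`, given tidiness data. -/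
lemma aux_image_W_eq [T2Space G] [LocallyCompactSpace G]
    (hc : Continuous ⇑α) (hc' : Continuous ⇑α⁻¹)
    (W : Subgroup G) (hWc : IsCompact (W : Set G))
    (hWM : (W : Set G) ⊆ levSet α)
    (hWT1 : (W : Set G) = posPart α (W : Set G) * negPart α (W : Set G))
    (hppc : IsClosed (ppPart α (W : Set G))) (hmmc : IsClosed (mmPart α (W : Set G))) :
    ⇑α '' (W : Set G) = (W : Set G) := by
  have hpos : ⇑α '' posPart α (W : Set G) = posPart α (W : Set G) :=
    aux_image_posPart_eq α hc W hWc hWM hppc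
  have hcinv2 : Continuous ⇑α⁻¹⁻¹ := by rw [inv_inv]; exact hc
  have hneg' : ⇑α⁻¹ '' posPart α⁻¹ (W : Set G) = posPart α⁻¹ (W : Set G) := by
    apply aux_image_posPart_eq α⁻¹ hc' W hWc
    · rw [aux_levSet_invAut]; exact hWM
    · exact hmmc
  have hneg : ⇑α '' negPart α (W : Set G) = negPart α (W : Set G) := by
    rw [aux_posPart_inv] at hneg'
    apply Set.Subset.antisymm
    · rintro y ⟨z, hz, rfl⟩
      exact aux_negPart_apply α hz
    · intro z hz
      have : α⁻¹ z ∈ negPart α (W : Set G) := by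
        rw [← hneg']
        exact ⟨z, hz, rfl⟩
      exact ⟨α⁻¹ z, this, MulAut.apply_inv_self G α z⟩
  calc ⇑α '' (W : Set G)
      = ⇑α '' (posPart α (W : Set G) * negPart α (W : Set G)) := by rw [← hWT1]
    _ = (⇑α '' posPart α (W : Set G)) * (⇑α '' negPart α (W : Set G)) := Set.image_mul α
    _ = (W : Set G) := by rw [hpos, hneg, ← hWT1]

lemma aux_W_mem_iff [T2Space G] [LocallyCompactSpace G]
    {α : MulAut G} {W : Subgroup G} (hinv : ⇑α '' (W : Set G) = (W : Set G)) {x : G} :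
    (x ∈ W → (∀ n : ℕ, (α ^ n) x ∈ W) ∧ ∀ n : ℕ, (α⁻¹ ^ n) x ∈ W) := by
  intro hx
  constructor
  · intro n
    induction n with
    | zero => simpa [pow_zero] using hx
    | succ n ih =>
        have : (α ^ (n + 1)) x = α ((α ^ n) x) := by rw [pow_succ', MulAut.mul_apply]
        rw [this, ← SetLike.mem_coe, ← hinv]
        exact ⟨(α ^ n) x, ih, rfl⟩
  · intro n
    induction n with
    | zero => simpa [pow_zero] using hx
    | succ n ih =>
        have h1 : (α⁻¹ ^ (n + 1)) x = α⁻¹ ((α⁻¹ ^ n) x) := by rw [pow_succ', MulAut.mul_apply]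
        have h2 : (α⁻¹ ^ n) x ∈ (W : Set G) := ih
        rw [← hinv] at h2
        obtain ⟨y, hy, hyx⟩ := h2
        rw [h1, ← hyx, MulAut.inv_apply_self]
        exact hy

end Aux7
section Aux8
variable [T2Space G] [LocallyCompactSpace G]

lemma aux_mem_ppSub {α : MulAut G} {V : Subgroup G} {x : G} :
    x ∈ auxPpSub α V ↔ x ∈ ppPart α (V : Set G) := Iff.rfl

/-- `D = V₊₊ ∩ V₋` is compact. -/
lemma aux_D_compact (α : MulAut G) (hc : Continuous ⇑α) (hc' : Continuous ⇑α⁻¹)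
    (V : Subgroup G) (hVc : IsCompact (V : Set G))
    (W : Subgroup G) (hWc : IsCompact (W : Set G)) (hWM : (W : Set G) ⊆ levSet α)
    (hWV : (W : Set G) ⊆ (V : Set G))
    (hWo : IsOpen ((Subtype.val ⁻¹' (W : Set G)) : Set (levSet α)))
    (hMcl : IsClosed (levSet α))
    (hWinv : ⇑α '' (W : Set G) = (W : Set G)) :
    IsCompact (ppPart α (V : Set G) ∩ negPart α (V : Set G)) := by
  classical
  set D : Set G := ppPart α (V : Set G) ∩ negPart α (V : Set G) with hDdef
  have hDmul : ∀ a b, a ∈ D → b ∈ D → a * b ∈ D := by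
    intro a b ha hb
    exact ⟨(auxPpSub α V).mul_mem ha.1 hb.1,
      (auxPosSub α⁻¹ V).mul_mem ha.2 hb.2⟩
  have h1D : (1 : G) ∈ D := ⟨(auxPpSub α V).one_mem, (auxPosSub α⁻¹ V).one_mem⟩
  have hDinv : ∀ a, a ∈ D → a⁻¹ ∈ D := by
    intro a ha
    exact ⟨(auxPpSub α V).inv_mem ha.1, (auxPosSub α⁻¹ V).inv_mem ha.2⟩
  -- `W ⊆ D`
  have hWD : (W : Set G) ⊆ D := by
    intro x hx
    obtain ⟨hfwd, hbwd⟩ := aux_W_mem_iff hWinv hx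
    exact ⟨(aux_mem_ppPart α).2 ⟨0, fun n _ => hWV (hbwd n)⟩,
      (aux_mem_negPart α).2 fun n => hWV (hfwd n)⟩
  have hDlev : D ⊆ levSet α := fun x hx => aux_D_sub_levSet α V hVc hx.1 hx.2
  have hLC : IsCompact (closure D) :=
    IsCompact.of_isClosed_subset (aux_negPart_compact hc' hVc) isClosed_closure
      (closure_minimal Set.inter_subset_right (aux_negPart_closed hc' hVc))
  have hLlev : closure D ⊆ levSet α := closure_minimal hDlev hMcl
  obtain ⟨O, hOopen, hOW⟩ := isOpen_induced_iff.1 hWo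
  have hMO : ∀ y ∈ levSet α, (y ∈ O ↔ y ∈ (W : Set G)) := by
    intro y hy
    constructor
    · intro h
      have h' : (⟨y, hy⟩ : levSet α) ∈ Subtype.val ⁻¹' O := h
      rw [hOW] at h'; exact h'
    · intro h
      have h' : (⟨y, hy⟩ : levSet α) ∈ Subtype.val ⁻¹' (W : Set G) := h
      rw [← hOW] at h'; exact h'
  have hO1 : O ∈ 𝓝 (1 : G) :=
    hOopen.mem_nhds ((hMO 1 (aux_levSet_one α)).2 W.one_mem)
  obtain ⟨S, hS, hsplit⟩ := exists_nhds_split_inv hO1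
  obtain ⟨S₀, hS₀sub, hS₀open, hS₀1⟩ := mem_nhds_iff.1 hS
  have hcov : closure D ⊆ ⋃ y : ↥(closure D), (fun g => g * (y : G)) '' S₀ := by
    intro z hz
    exact Set.mem_iUnion.2 ⟨⟨z, hz⟩, ⟨1, hS₀1, one_mul z⟩⟩
  obtain ⟨t, ht⟩ := hLC.elim_finite_subcover _
    (fun y : ↥(closure D) => (isOpenMap_mul_right (y : G)) S₀ hS₀open) hcov
  set d : ↥(closure D) → G :=
    fun y => if h : (D ∩ ((fun g => g * (y : G)) '' S₀)).Nonempty then h.some else 1 with hd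
  have hdD : ∀ y, d y ∈ D := by
    intro y
    by_cases h : (D ∩ ((fun g => g * (y : G)) '' S₀)).Nonempty
    · simp only [hd, dif_pos h]; exact h.some_mem.1
    · simp only [hd, dif_neg h]; exact h1D
  have hDsubU : D ⊆ ⋃ y ∈ t, (fun g => g * d y) '' (W : Set G) := by
    intro z hz
    have hzL : z ∈ closure D := subset_closure hz
    obtain ⟨y, hyt, v, hv, hvz⟩ := Set.mem_iUnion₂.1 (ht hzL)
    have hne : (D ∩ ((fun g => g * (y : G)) '' S₀)).Nonempty := ⟨z, hz, ⟨v, hv, hvz⟩⟩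
    have hdy : d y ∈ D ∩ ((fun g => g * (y : G)) '' S₀) := by
      simp only [hd, dif_pos hne]; exact hne.some_mem
    obtain ⟨hdyD, w, hw, hwy⟩ := hdy
    have hzdO : z * (d y)⁻¹ ∈ O := by
      have heq : z * (d y)⁻¹ = v / w := by
        rw [← hvz, ← hwy, div_eq_mul_inv, mul_inv_rev, ← mul_assoc,
          mul_assoc v, mul_inv_cancel, mul_one]
      rw [heq]
      exact hsplit v (hS₀sub hv) w (hS₀sub hw)
    have hzdM : z * (d y)⁻¹ ∈ levSet α :=
      aux_levSet_mul α (hDlev hz) (aux_levSet_inv α (hDlev (hdD y)))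
    have hzdW : z * (d y)⁻¹ ∈ (W : Set G) := (hMO _ hzdM).1 hzdO
    refine Set.mem_iUnion₂.2 ⟨y, hyt, z * (d y)⁻¹, hzdW, ?_⟩
    show z * (d y)⁻¹ * d y = z
    rw [inv_mul_cancel_right]
  have hUD : (⋃ y ∈ t, (fun g => g * d y) '' (W : Set G)) ⊆ D := by
    rintro z hz
    obtain ⟨y, _, w, hw, rfl⟩ := Set.mem_iUnion₂.1 hz
    exact hDmul _ _ (hWD hw) (hdD y)
  have hDeq : D = ⋃ y ∈ t, (fun g => g * d y) '' (W : Set G) :=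
    Set.Subset.antisymm hDsubU hUD
  rw [hDeq]
  exact t.isCompact_biUnion fun y _ => hWc.image (continuous_mul_right (d y))

end Aux8
section Aux9
variable [T2Space G] [LocallyCompactSpace G]

lemma aux_subgroup_closed_of_inter (H V : Subgroup G) (hVo : IsOpen (V : Set G))
    (h : IsClosed ((H : Set G) ∩ (V : Set G))) : IsClosed (H : Set G) := by
  refine isClosed_of_closure_subset ?_
  intro x hx
  have hUopen : IsOpen ((fun g => x * g) '' (V : Set G)) := (isOpenMap_mul_left x) _ hVo
  have hxU : x ∈ (fun g => x * g) '' (V : Set G) := ⟨1, V.one_mem, mul_one x⟩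
  have hxcl : x ∈ closure (((fun g => x * g) '' (V : Set G)) ∩ (H : Set G)) :=
    hUopen.inter_closure ⟨hxU, hx⟩
  obtain ⟨h₀, ⟨⟨v, hv, hvx⟩, hh₀⟩⟩ := closure_nonempty_iff.1 ⟨x, hxcl⟩
  have hinvx : h₀⁻¹ * x = v⁻¹ := by
    rw [← hvx, mul_inv_rev, mul_assoc]
    show v⁻¹ * (x⁻¹ * x) = v⁻¹
    rw [inv_mul_cancel, mul_one]
  have hmem1 : h₀⁻¹ * x ∈ closure (H : Set G) := by
    have hcl : h₀⁻¹ ∈ closure (H : Set G) := subset_closure (H.inv_mem hh₀)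
    exact map_mem_closure₂ continuous_mul hcl hx fun a ha b hb => H.mul_mem ha hb
  have hmem2 : h₀⁻¹ * x ∈ (V : Set G) := by
    rw [hinvx]; exact V.inv_mem hv
  have : h₀⁻¹ * x ∈ (H : Set G) ∩ (V : Set G) := by
    have hsub : (V : Set G) ∩ closure (H : Set G) ⊆ closure ((V : Set G) ∩ (H : Set G)) :=
      hVo.inter_closure
    have h' := hsub ⟨hmem2, hmem1⟩
    rw [Set.inter_comm] at h'
    rwa [h.closure_eq] at h'
  have : x ∈ H := by
    have := H.mul_mem hh₀ (this.1 : h₀⁻¹ * x ∈ H)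
    rwa [mul_inv_cancel_left] at this
  exact this

/-- Main auxiliary result: under the hypotheses of the theorem, `V₊₊` is closed. -/
lemma aux_main (α : MulAut G) (hc : Continuous ⇑α) (hc' : Continuous ⇑α⁻¹)
    (htidy : IsTidyOn α (levSet α))
    (V : Subgroup G) (hVc : IsCompact (V : Set G)) (hVo : IsOpen (V : Set G))
    (hT1 : (V : Set G) = posPart α (V : Set G) * negPart α (V : Set G)) :
    IsClosed (ppPart α (V : Set G)) := by
  obtain ⟨W, ⟨hWM, hWc, hWo, hWT1, hWpp, hWmm⟩, hWV⟩ := htidy V (hVo.mem_nhds V.one_mem)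
  have hMcl : IsClosed (levSet α) := aux_levSet_isClosed α W hWc hWM hWo
  have hppG : IsClosed (ppPart α (W : Set G)) :=
    aux_closed_of_rel_closed hMcl (aux_ppPart_sub_levSet α W hWM) hWpp
  have hmm_sub : mmPart α (W : Set G) ⊆ levSet α := by
    have h := aux_ppPart_sub_levSet α⁻¹ W (by rw [aux_levSet_invAut]; exact hWM)
    rw [aux_levSet_invAut] at h
    exact h
  have hmmG : IsClosed (mmPart α (W : Set G)) := aux_closed_of_rel_closed hMcl hmm_sub hWmm
  have hWinv : ⇑α '' (W : Set G) = (W : Set G) :=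
    aux_image_W_eq α hc hc' W hWc hWM hWT1 hppG hmmG
  have hDc : IsCompact (ppPart α (V : Set G) ∩ negPart α (V : Set G)) :=
    aux_D_compact α hc hc' V hVc W hWc hWM hWV hWo hMcl hWinv
  have hPV : ppPart α (V : Set G) ∩ (V : Set G) =
      posPart α (V : Set G) * (ppPart α (V : Set G) ∩ negPart α (V : Set G)) := by
    apply Set.Subset.antisymm
    · rintro x ⟨hxpp, hxV⟩
      rw [hT1] at hxV
      obtain ⟨a, ha, b, hb, rfl⟩ := Set.mem_mul.1 hxV
      have hbpp : b ∈ ppPart α (V : Set G) := by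
        have h1 : a ∈ auxPpSub α V := aux_posPart_subset_ppPart α (V : Set G) ha
        have h2 : a⁻¹ * (a * b) ∈ auxPpSub α V :=
          (auxPpSub α V).mul_mem ((auxPpSub α V).inv_mem h1) hxpp
        rwa [inv_mul_cancel_left] at h2
      exact Set.mul_mem_mul ha ⟨hbpp, hb⟩
    · rintro z hz
      obtain ⟨a, ha, b, ⟨hbpp, hbneg⟩, rfl⟩ := Set.mem_mul.1 hz
      constructor
      · exact (auxPpSub α V).mul_mem (aux_posPart_subset_ppPart α (V : Set G) ha) hbpp
      · exact V.mul_mem (aux_posPart_subset α V ha) (aux_negPart_subset α V hbneg)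
  have hPVc : IsClosed (ppPart α (V : Set G) ∩ (V : Set G)) := by
    rw [hPV]
    exact ((aux_posPart_compact hc hVc).mul hDc).isClosed
  exact aux_subgroup_closed_of_inter (auxPpSub α V) V hVo hPVc

end Aux9

/-- If `α|_{M_α}` is tidy, then every compact open subgroup `V` of `G`
satisfying (T1), i.e. `V = V₊V₋`, is tidy for `α`. -/
theorem tidy_of_T1
    {G : Type*} [Group G] [TopologicalSpace G] [IsTopologicalGroup G]
    [T2Space G] [LocallyCompactSpace G] [TotallyDisconnectedSpace G]
    (α : MulAut G) (hc : Continuous ⇑α) (hc' : Continuous ⇑α⁻¹)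
    (htidy : IsTidyOn α (levSet α))
    (V : Subgroup G) (hVc : IsCompact (V : Set G)) (hVo : IsOpen (V : Set G))
    (hT1 : (V : Set G) = posPart α (V : Set G) * negPart α (V : Set G)) :
    IsTidyFor α V := by
  have hpp := aux_main α hc hc' htidy V hVc hVo hT1
  have hc2 : Continuous ⇑α⁻¹⁻¹ := by rw [inv_inv]; exact hc
  have htidy' : IsTidyOn α⁻¹ (levSet α⁻¹) := by
    rw [aux_levSet_invAut]
    intro U hU
    obtain ⟨W, ⟨h1, h2, h3, h4, h5, h6⟩, h7⟩ := htidy U hU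
    refine ⟨W, ⟨h1, h2, h3, aux_T1_inv α W h4, ?_, ?_⟩, h7⟩
    · exact h6
    · rw [aux_mmPart_inv]
      exact h5
  have hmm := aux_main α⁻¹ hc' hc2 htidy' V hVc hVo (aux_T1_inv α V hT1)
  exact ⟨hVc, hVo, hT1, hpp, hmm⟩
end

section
/- Let G be a totally disconnected, locally compact Hausdorff topological group and α a tidy bicontinuous automorphism of G. Then P_α is the internal topological semidirect product U_α ⋊ M_α: U_α is a normal subgroup of P_α, U_α ∩ M_α = {1}, P_α = U_α · M_α, and the multiplication map U_α × M_α → P_α, (x, y) ↦ xy, is a homeomorphism (with respect to the product of the subspace topologies). The analogous statement holds with α^{-1} in place of α: P_{α^{-1}} = U_{α^{-1}} ⋊ M_α. -/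
open Filter Topology Set Pointwise MeasureTheory
open scoped ENNReal

variable {G : Type*} [Group G] [TopologicalSpace G] [IsTopologicalGroup G]

section TidyAux
variable {G : Type*} [Group G]

namespace TidyAux

theorem pow_mul_apply (α : MulAut G) (a b : ℕ) (x : G) :
    (α ^ a) ((α ^ b) x) = (α ^ (a + b)) x := by
  rw [pow_add, MulAut.mul_apply]

theorem pow_invpow_cancel (α : MulAut G) (n : ℕ) (x : G) :
    (α ^ n) ((α⁻¹ ^ n) x) = x := by
  rw [← MulAut.mul_apply, inv_pow, mul_inv_cancel, MulAut.one_apply]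

theorem invpow_pow_cancel (α : MulAut G) (n : ℕ) (x : G) :
    (α⁻¹ ^ n) ((α ^ n) x) = x := by
  rw [← MulAut.mul_apply, inv_pow, inv_mul_cancel, MulAut.one_apply]

theorem pow_invpow_apply_of_le (α : MulAut G) {a b : ℕ} (h : b ≤ a) (x : G) :
    (α ^ a) ((α⁻¹ ^ b) x) = (α ^ (a - b)) x := by
  conv_lhs => rw [← Nat.sub_add_cancel h, pow_add, MulAut.mul_apply, pow_invpow_cancel]

theorem invpow_pow_apply_of_le (α : MulAut G) {a b : ℕ} (h : b ≤ a) (x : G) :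
    (α⁻¹ ^ a) ((α ^ b) x) = (α⁻¹ ^ (a - b)) x := by
  conv_lhs => rw [← Nat.sub_add_cancel h, pow_add, MulAut.mul_apply, invpow_pow_cancel]

theorem pow_invpow_apply_of_ge (α : MulAut G) {a b : ℕ} (h : a ≤ b) (x : G) :
    (α ^ a) ((α⁻¹ ^ b) x) = (α⁻¹ ^ (b - a)) x := by
  conv_lhs => rw [← Nat.sub_add_cancel h, add_comm, pow_add, MulAut.mul_apply]
  rw [pow_invpow_cancel]

theorem invpow_pow_apply_of_ge (α : MulAut G) {a b : ℕ} (h : a ≤ b) (x : G) :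
    (α⁻¹ ^ a) ((α ^ b) x) = (α ^ (b - a)) x := by
  conv_lhs => rw [← Nat.sub_add_cancel h, add_comm, pow_add, MulAut.mul_apply]
  rw [invpow_pow_cancel]

theorem mem_image_pow {α : MulAut G} {S : Set G} {x : G} {n : ℕ} :
    x ∈ ⇑(α ^ n) '' S ↔ (α⁻¹ ^ n) x ∈ S :=
  ⟨by rintro ⟨y, hy, rfl⟩; rwa [invpow_pow_cancel],
   fun h => ⟨(α⁻¹ ^ n) x, h, pow_invpow_cancel α n x⟩⟩

theorem mem_image_invpow {α : MulAut G} {S : Set G} {x : G} {n : ℕ} :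
    x ∈ ⇑(α⁻¹ ^ n) '' S ↔ (α ^ n) x ∈ S := by
  have h := @mem_image_pow G _ α⁻¹ S x n
  rwa [inv_inv] at h

theorem mem_negPart {α : MulAut G} {V : Set G} {x : G} :
    x ∈ negPart α V ↔ ∀ n : ℕ, (α ^ n) x ∈ V := by
  simp only [_root_.negPart, Set.mem_iInter, mem_image_invpow]

theorem mem_posPart {α : MulAut G} {V : Set G} {x : G} :
    x ∈ posPart α V ↔ ∀ n : ℕ, (α⁻¹ ^ n) x ∈ V := by
  simp only [_root_.posPart, Set.mem_iInter, mem_image_pow]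

theorem mem_mmPart {α : MulAut G} {V : Set G} {x : G} :
    x ∈ mmPart α V ↔ ∃ k : ℕ, ∀ n, k ≤ n → (α ^ n) x ∈ V := by
  simp only [_root_.mmPart, Set.mem_iUnion, mem_image_invpow, mem_negPart]
  constructor
  · rintro ⟨k, hk⟩
    refine ⟨k, fun n hn => ?_⟩
    have := hk (n - k)
    rwa [pow_mul_apply, Nat.sub_add_cancel hn] at this
  · rintro ⟨k, hk⟩
    refine ⟨k, fun m => ?_⟩
    rw [pow_mul_apply]
    exact hk (m + k) (Nat.le_add_left _ _)

theorem posPart_inv (α : MulAut G) (V : Set G) : posPart α⁻¹ V = negPart α V := rfl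

theorem negPart_inv (α : MulAut G) (V : Set G) : negPart α⁻¹ V = posPart α V := by
  simp only [_root_.negPart, _root_.posPart, inv_inv]

theorem ppPart_inv (α : MulAut G) (V : Set G) : ppPart α⁻¹ V = mmPart α V := by
  simp only [_root_.ppPart, _root_.mmPart, posPart_inv]

theorem mmPart_inv (α : MulAut G) (V : Set G) : mmPart α⁻¹ V = ppPart α V := by
  simp only [_root_.ppPart, _root_.mmPart, negPart_inv, inv_inv]

theorem mem_ppPart {α : MulAut G} {V : Set G} {x : G} :
    x ∈ ppPart α V ↔ ∃ k : ℕ, ∀ n, k ≤ n → (α⁻¹ ^ n) x ∈ V := by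
  rw [← mmPart_inv, mem_mmPart]


/-! ### zeroPart and group-set properties -/

def zeroPart (α : MulAut G) (V : Set G) : Set G := posPart α V ∩ negPart α V

theorem mem_zeroPart {α : MulAut G} {V : Set G} {x : G} :
    x ∈ zeroPart α V ↔ (∀ n : ℕ, (α ^ n) x ∈ V) ∧ ∀ n : ℕ, (α⁻¹ ^ n) x ∈ V := by
  rw [zeroPart, Set.mem_inter_iff, mem_posPart, mem_negPart, and_comm]

theorem zeroPart_inv (α : MulAut G) (V : Set G) : zeroPart α⁻¹ V = zeroPart α V := by
  rw [zeroPart, zeroPart, posPart_inv, negPart_inv, Set.inter_comm]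

section SubgroupSets
variable {α : MulAut G} {V : Subgroup G}

theorem one_mem_negPart : (1 : G) ∈ negPart α (V : Set G) :=
  mem_negPart.2 fun n => by rw [map_one]; exact V.one_mem

theorem mul_mem_negPart {x y : G} (hx : x ∈ negPart α (V : Set G))
    (hy : y ∈ negPart α (V : Set G)) : x * y ∈ negPart α (V : Set G) := by
  rw [mem_negPart] at *
  exact fun n => by rw [map_mul]; exact V.mul_mem (hx n) (hy n)

theorem inv_mem_negPart {x : G} (hx : x ∈ negPart α (V : Set G)) :
    x⁻¹ ∈ negPart α (V : Set G) := by
  rw [mem_negPart] at *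
  exact fun n => by rw [map_inv]; exact V.inv_mem (hx n)

theorem inv_mem_posPart {x : G} (hx : x ∈ posPart α (V : Set G)) :
    x⁻¹ ∈ posPart α (V : Set G) := by
  rw [mem_posPart] at *
  exact fun n => by rw [map_inv]; exact V.inv_mem (hx n)

theorem posPart_inv_eq : (posPart α (V : Set G))⁻¹ = posPart α (V : Set G) := by
  ext x
  rw [Set.mem_inv]
  exact ⟨fun h => by have := inv_mem_posPart h; rwa [inv_inv] at this, inv_mem_posPart⟩

theorem negPart_inv_eq : (negPart α (V : Set G))⁻¹ = negPart α (V : Set G) := by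
  ext x
  rw [Set.mem_inv]
  exact ⟨fun h => by have := inv_mem_negPart h; rwa [inv_inv] at this, inv_mem_negPart⟩

theorem one_mem_zeroPart : (1 : G) ∈ zeroPart α (V : Set G) :=
  mem_zeroPart.2 ⟨fun n => by rw [map_one]; exact V.one_mem,
    fun n => by rw [map_one]; exact V.one_mem⟩

theorem mul_mem_zeroPart {x y : G} (hx : x ∈ zeroPart α (V : Set G))
    (hy : y ∈ zeroPart α (V : Set G)) : x * y ∈ zeroPart α (V : Set G) := by
  rw [mem_zeroPart] at *
  exact ⟨fun n => by rw [map_mul]; exact V.mul_mem (hx.1 n) (hy.1 n),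
    fun n => by rw [map_mul]; exact V.mul_mem (hx.2 n) (hy.2 n)⟩

theorem inv_mem_zeroPart {x : G} (hx : x ∈ zeroPart α (V : Set G)) :
    x⁻¹ ∈ zeroPart α (V : Set G) := by
  rw [mem_zeroPart] at *
  exact ⟨fun n => by rw [map_inv]; exact V.inv_mem (hx.1 n),
    fun n => by rw [map_inv]; exact V.inv_mem (hx.2 n)⟩

theorem mul_mem_mmPart {x y : G} (hx : x ∈ mmPart α (V : Set G))
    (hy : y ∈ mmPart α (V : Set G)) : x * y ∈ mmPart α (V : Set G) := by
  rw [mem_mmPart] at *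
  obtain ⟨k, hk⟩ := hx; obtain ⟨l, hl⟩ := hy
  refine ⟨max k l, fun n hn => ?_⟩
  rw [map_mul]
  exact V.mul_mem (hk n (le_trans (le_max_left _ _) hn)) (hl n (le_trans (le_max_right _ _) hn))

theorem inv_mem_mmPart {x : G} (hx : x ∈ mmPart α (V : Set G)) :
    x⁻¹ ∈ mmPart α (V : Set G) := by
  rw [mem_mmPart] at *
  obtain ⟨k, hk⟩ := hx
  exact ⟨k, fun n hn => by rw [map_inv]; exact V.inv_mem (hk n hn)⟩

theorem zeroPart_subset : zeroPart α (V : Set G) ⊆ (V : Set G) := fun x hx => by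
  have := (mem_zeroPart.1 hx).1 0
  rwa [pow_zero, MulAut.one_apply] at this

theorem negPart_subset : negPart α (V : Set G) ⊆ (V : Set G) := fun x hx => by
  have := mem_negPart.1 hx 0
  rwa [pow_zero, MulAut.one_apply] at this

theorem posPart_subset : posPart α (V : Set G) ⊆ (V : Set G) := fun x hx => by
  have := mem_posPart.1 hx 0
  rwa [pow_zero, MulAut.one_apply] at this

theorem negPart_subset_mmPart : negPart α (V : Set G) ⊆ mmPart α (V : Set G) := fun x hx =>
  mem_mmPart.2 ⟨0, fun n _ => mem_negPart.1 hx n⟩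

theorem zeroPart_subset_negPart : zeroPart α (V : Set G) ⊆ negPart α (V : Set G) :=
  Set.inter_subset_right

/-- stability of `zeroPart` under `α` -/
theorem zeroPart_apply_mem {x : G} (hx : x ∈ zeroPart α (V : Set G)) :
    α x ∈ zeroPart α (V : Set G) := by
  rw [mem_zeroPart] at *
  constructor
  · intro n
    have := hx.1 (n + 1)
    rwa [pow_succ, MulAut.mul_apply] at this
  · intro n
    cases n with
    | zero =>
      have := hx.1 1
      rw [pow_one] at this
      rwa [pow_zero, MulAut.one_apply]
    | succ m =>
      have := hx.2 m
      have h3 := invpow_pow_cancel α 1 x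
      rw [pow_one, pow_one] at h3
      have h2 : (α⁻¹ ^ (m + 1)) (α x) = (α⁻¹ ^ m) x := by
        rw [pow_succ, MulAut.mul_apply, h3]
      rwa [h2]

theorem zeroPart_inv_apply_mem {x : G} (hx : x ∈ zeroPart α (V : Set G)) :
    α⁻¹ x ∈ zeroPart α (V : Set G) := by
  have := @zeroPart_apply_mem G _ α⁻¹ V x (by rwa [zeroPart_inv])
  rwa [zeroPart_inv] at this

theorem zeroPart_pow_apply_mem {x : G} (hx : x ∈ zeroPart α (V : Set G)) (n : ℕ) :
    (α ^ n) x ∈ zeroPart α (V : Set G) := by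
  induction n with
  | zero => rwa [pow_zero, MulAut.one_apply]
  | succ m ih =>
    have := zeroPart_apply_mem ih
    rwa [← MulAut.mul_apply, ← pow_succ'] at this

theorem zeroPart_invpow_apply_mem {x : G} (hx : x ∈ zeroPart α (V : Set G)) (n : ℕ) :
    (α⁻¹ ^ n) x ∈ zeroPart α (V : Set G) := by
  induction n with
  | zero => rwa [pow_zero, MulAut.one_apply]
  | succ m ih =>
    have := zeroPart_inv_apply_mem ih
    rwa [← MulAut.mul_apply, ← pow_succ'] at this

theorem negPart_apply_mem {x : G} (hx : x ∈ negPart α (V : Set G)) :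
    α x ∈ negPart α (V : Set G) := by
  rw [mem_negPart] at *
  intro n
  have := hx (n + 1)
  rwa [pow_succ, MulAut.mul_apply] at this

theorem negPart_pow_apply_mem {x : G} (hx : x ∈ negPart α (V : Set G)) (n : ℕ) :
    (α ^ n) x ∈ negPart α (V : Set G) := by
  induction n with
  | zero => rwa [pow_zero, MulAut.one_apply]
  | succ m ih =>
    have := negPart_apply_mem ih
    rwa [← MulAut.mul_apply, ← pow_succ'] at this

/-- `mmPart` is stable under `α` and `α⁻¹`. -/
theorem mmPart_apply_mem {x : G} (hx : x ∈ mmPart α (V : Set G)) :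
    α x ∈ mmPart α (V : Set G) := by
  rw [mem_mmPart] at *
  obtain ⟨k, hk⟩ := hx
  refine ⟨k, fun n hn => ?_⟩
  have h2 : (α ^ n) (α x) = (α ^ (n + 1)) x := by rw [pow_succ, MulAut.mul_apply]
  rw [h2]
  exact hk (n + 1) (le_trans hn (Nat.le_succ n))

theorem mmPart_inv_apply_mem {x : G} (hx : x ∈ mmPart α (V : Set G)) :
    α⁻¹ x ∈ mmPart α (V : Set G) := by
  rw [mem_mmPart] at *
  obtain ⟨k, hk⟩ := hx
  refine ⟨k + 1, fun n hn => ?_⟩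
  have h2 : (α ^ n) (α⁻¹ x) = (α ^ (n - 1)) x := by
    have : (α ^ n) (α⁻¹ x) = (α ^ n) ((α⁻¹ ^ 1) x) := by rw [pow_one]
    rw [this, pow_invpow_apply_of_le α (le_trans (Nat.le_add_left 1 k) hn)]
  rw [h2]
  exact hk (n - 1) (by omega)

end SubgroupSets

/-! ### Dset -/

def Dset (α : MulAut G) (V : Set G) (k : ℕ) : Set G := {x | ∀ n, k ≤ n → (α ^ n) x ∈ V}

theorem mem_Dset {α : MulAut G} {V : Set G} {k : ℕ} {x : G} :
    x ∈ Dset α V k ↔ ∀ n, k ≤ n → (α ^ n) x ∈ V := Iff.rfl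

theorem Dset_mono {α : MulAut G} {V : Set G} {j k : ℕ} (h : j ≤ k) :
    Dset α V j ⊆ Dset α V k := fun _ hx n hn => hx n (le_trans h hn)

theorem mmPart_eq_iUnion {α : MulAut G} {V : Set G} :
    mmPart α V = ⋃ k, Dset α V k := by
  ext x; rw [mem_mmPart, Set.mem_iUnion]; rfl

theorem Dset_eq_image {α : MulAut G} {V : Set G} (k : ℕ) :
    Dset α V k = ⇑(α⁻¹ ^ k) '' negPart α V := by
  ext x
  rw [mem_image_invpow, mem_Dset, mem_negPart]
  constructor
  · intro h n
    rw [pow_mul_apply]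
    exact h (n + k) (Nat.le_add_left _ _)
  · intro h n hn
    have := h (n - k)
    rwa [pow_mul_apply, Nat.sub_add_cancel hn] at this

theorem mul_mem_Dset {α : MulAut G} {V : Subgroup G} {k : ℕ} {x y : G}
    (hx : x ∈ Dset α (V : Set G) k) (hy : y ∈ Dset α (V : Set G) k) :
    x * y ∈ Dset α (V : Set G) k :=
  fun n hn => by rw [map_mul]; exact V.mul_mem (hx n hn) (hy n hn)

theorem inv_mem_Dset {α : MulAut G} {V : Subgroup G} {k : ℕ} {x : G}
    (hx : x ∈ Dset α (V : Set G) k) : x⁻¹ ∈ Dset α (V : Set G) k :=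
  fun n hn => by rw [map_inv]; exact V.inv_mem (hx n hn)

theorem one_mem_mmPart {α : MulAut G} {V : Subgroup G} : (1 : G) ∈ mmPart α (V : Set G) :=
  negPart_subset_mmPart one_mem_negPart

theorem mmPart_invpow_apply_mem {α : MulAut G} {V : Subgroup G} {x : G}
    (hx : x ∈ mmPart α (V : Set G)) (n : ℕ) : (α⁻¹ ^ n) x ∈ mmPart α (V : Set G) := by
  induction n with
  | zero => rwa [pow_zero, MulAut.one_apply]
  | succ m ih =>
    have := mmPart_inv_apply_mem ih
    rwa [← MulAut.mul_apply, ← pow_succ'] at this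

/-! ### Topological lemmas -/

section Topology
variable [TopologicalSpace G] [IsTopologicalGroup G]

theorem continuous_powAut {α : MulAut G} (hc : Continuous ⇑α) (n : ℕ) :
    Continuous ⇑(α ^ n) := by
  induction n with
  | zero =>
    have h : ⇑(α ^ 0) = id := by funext x; rw [pow_zero, MulAut.one_apply]; rfl
    rw [h]; exact continuous_id
  | succ m ih =>
    have h : ⇑(α ^ (m + 1)) = fun x => (α ^ m) (α x) := by
      funext x; rw [pow_succ, MulAut.mul_apply]
    rw [h]; exact ih.comp hc

variable [T2Space G]

theorem isCompact_negPart {α : MulAut G} (hc' : Continuous ⇑α⁻¹) {V : Subgroup G}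
    (hVc : IsCompact (V : Set G)) : IsCompact (negPart α (V : Set G)) :=
  IsCompact.of_isClosed_subset hVc
    (isClosed_iInter fun n => (hVc.image (continuous_powAut hc' n)).isClosed)
    negPart_subset

theorem isCompact_posPart {α : MulAut G} (hc : Continuous ⇑α) {V : Subgroup G}
    (hVc : IsCompact (V : Set G)) : IsCompact (posPart α (V : Set G)) :=
  IsCompact.of_isClosed_subset hVc
    (isClosed_iInter fun n => (hVc.image (continuous_powAut hc n)).isClosed)
    posPart_subset

theorem isCompact_zeroPart {α : MulAut G} (hc : Continuous ⇑α) (hc' : Continuous ⇑α⁻¹)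
    {V : Subgroup G} (hVc : IsCompact (V : Set G)) : IsCompact (zeroPart α (V : Set G)) :=
  (isCompact_posPart hc hVc).inter_right
    (isClosed_iInter fun n => (hVc.image (continuous_powAut hc' n)).isClosed)

theorem isCompact_Dset {α : MulAut G} (hc' : Continuous ⇑α⁻¹) {V : Subgroup G}
    (hVc : IsCompact (V : Set G)) (k : ℕ) : IsCompact (Dset α (V : Set G) k) := by
  rw [Dset_eq_image]
  exact (isCompact_negPart hc' hVc).image (continuous_powAut hc' k)

theorem conj_tube {K O : Set G} (hK : IsCompact K) (hO : O ∈ 𝓝 (1 : G)) :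
    ∃ Z ∈ 𝓝 (1 : G), ∀ k ∈ K, ∀ z ∈ Z, k * z * k⁻¹ ∈ O := by
  obtain ⟨O', hO'sub, hO'open, hO'mem⟩ := mem_nhds_iff.1 hO
  have hcont : Continuous fun p : G × G => p.1 * p.2 * p.1⁻¹ :=
    (continuous_fst.mul continuous_snd).mul continuous_fst.inv
  have hsub : K ×ˢ ({1} : Set G) ⊆ (fun p : G × G => p.1 * p.2 * p.1⁻¹) ⁻¹' O' := by
    rintro ⟨k, z⟩ ⟨hk, hz⟩
    have : z = 1 := hz
    subst this
    simpa using hO'mem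
  obtain ⟨u, v, _, hvopen, hKu, h1v, huv⟩ :=
    generalized_tube_lemma hK isCompact_singleton (hO'open.preimage hcont) hsub
  refine ⟨v, hvopen.mem_nhds (h1v rfl), fun k hk z hz => ?_⟩
  have h2 : (k, z) ∈ u ×ˢ v := ⟨hKu hk, hz⟩
  exact hO'sub (huv h2)

theorem absorption [LocallyCompactSpace G] {α : MulAut G} (hc' : Continuous ⇑α⁻¹)
    {V : Subgroup G} (hV : IsTidyFor α V) {B : Set G} (hB : IsCompact B)
    (hBsub : B ⊆ mmPart α (V : Set G)) : ∃ k, B ⊆ Dset α (V : Set G) k := by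
  obtain ⟨hVc, hVo, hT1, hppc, hmmc⟩ := hV
  haveI : LocallyCompactSpace (mmPart α (V : Set G)) := hmmc.locallyCompactSpace
  haveI : Nonempty (mmPart α (V : Set G)) := ⟨⟨1, one_mem_mmPart⟩⟩
  have hfc : ∀ k : ℕ,
      IsClosed (Subtype.val ⁻¹' Dset α (V : Set G) k : Set (mmPart α (V : Set G))) :=
    fun k => ((isCompact_Dset hc' hVc k).isClosed).preimage continuous_subtype_val
  have hcover : ⋃ k, (Subtype.val ⁻¹' Dset α (V : Set G) k : Set (mmPart α (V : Set G)))
      = univ := by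
    ext z
    simp only [mem_iUnion, mem_preimage, mem_univ, iff_true]
    exact mem_mmPart.1 z.2
  obtain ⟨k0, b0, hb0⟩ := nonempty_interior_of_iUnion_of_closed hfc hcover
  obtain ⟨O, hOopen, hOeq⟩ := isOpen_induced_iff.1
    (isOpen_interior (s := (Subtype.val ⁻¹' Dset α (V : Set G) k0 : Set (mmPart α (V : Set G)))))
  have hOD : ∀ z, z ∈ O → z ∈ mmPart α (V : Set G) → z ∈ Dset α (V : Set G) k0 := by
    intro z hzO hzM
    have : (⟨z, hzM⟩ : mmPart α (V : Set G)) ∈ Subtype.val ⁻¹' Dset α (V : Set G) k0 :=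
      interior_subset (by rw [← hOeq]; exact hzO)
    exact this
  have hbO : (b0 : G) ∈ O := by
    have := hb0
    rw [← hOeq] at this
    exact this
  have hbM : (b0 : G) ∈ mmPart α (V : Set G) := b0.2
  have hbD : (b0 : G) ∈ Dset α (V : Set G) k0 := hOD _ hbO hbM
  have hj : ∀ c : G, ∃ j, c ∈ B → c ∈ Dset α (V : Set G) j := by
    intro c
    by_cases hcB : c ∈ B
    · obtain ⟨j, hjc⟩ := mem_mmPart.1 (hBsub hcB)
      exact ⟨j, fun _ => hjc⟩
    · exact ⟨0, fun h => absurd h hcB⟩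
  choose jf hjf using hj
  have hU : ∀ c ∈ B, {g : G | (b0 : G) * c⁻¹ * g ∈ O} ∈ 𝓝 c := by
    intro c _
    have hcont : Continuous fun g : G => (b0 : G) * c⁻¹ * g := continuous_const.mul continuous_id
    have : O ∈ 𝓝 ((b0 : G) * c⁻¹ * c) := by
      rw [inv_mul_cancel_right]
      exact hOopen.mem_nhds hbO
    exact hcont.continuousAt.preimage_mem_nhds this
  obtain ⟨t, htB, htcov⟩ := hB.elim_nhds_subcover _ hU
  refine ⟨max (t.sup jf) k0, fun z hzB => ?_⟩
  obtain ⟨c, hct, hzU⟩ := mem_iUnion₂.1 (htcov hzB)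
  have hcB : c ∈ B := htB c hct
  have hwM : (b0 : G) * c⁻¹ * z ∈ mmPart α (V : Set G) :=
    mul_mem_mmPart (mul_mem_mmPart hbM (inv_mem_mmPart (hBsub hcB))) (hBsub hzB)
  have hwD : (b0 : G) * c⁻¹ * z ∈ Dset α (V : Set G) k0 := hOD _ hzU hwM
  have hzeq : z = c * (b0 : G)⁻¹ * ((b0 : G) * c⁻¹ * z) := by group
  rw [hzeq]
  refine mul_mem_Dset (mul_mem_Dset ?_ ?_) ?_
  · exact Dset_mono (le_trans (Finset.le_sup hct) (le_max_left _ _)) (hjf c hcB)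
  · exact Dset_mono (le_max_right _ _) (inv_mem_Dset hbD)
  · exact Dset_mono (le_max_right _ _) hwD

/-- Lemma B: if `V₋₋` is closed then `V₋₋ ∩ P_{α⁻¹} ⊆ V₀`. -/
theorem mmPart_inter_parSet_inv_subset [LocallyCompactSpace G] {α : MulAut G}
    (hc' : Continuous ⇑α⁻¹) {V : Subgroup G} (hV : IsTidyFor α V) {x : G}
    (hx : x ∈ mmPart α (V : Set G)) (hx' : x ∈ parSet α⁻¹) :
    x ∈ zeroPart α (V : Set G) := by
  have hmmc : IsClosed (mmPart α (V : Set G)) := hV.2.2.2.2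
  have hrange : (Set.range fun n : ℕ => (α⁻¹ ^ n) x) ⊆ mmPart α (V : Set G) := by
    rintro _ ⟨n, rfl⟩
    exact mmPart_invpow_apply_mem hx n
  have hBsub : closure (Set.range fun n : ℕ => (α⁻¹ ^ n) x) ⊆ mmPart α (V : Set G) :=
    closure_minimal hrange hmmc
  have hBc : IsCompact (closure (Set.range fun n : ℕ => (α⁻¹ ^ n) x)) := hx'
  obtain ⟨k, hk⟩ := absorption hc' hV hBc hBsub
  rw [mem_zeroPart]
  constructor
  · intro n
    have h1 : (α⁻¹ ^ k) x ∈ Dset α (V : Set G) k :=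
      hk (subset_closure (Set.mem_range_self k))
    have h2 := h1 (n + k) (Nat.le_add_left _ _)
    rwa [pow_invpow_apply_of_le α (Nat.le_add_left _ _), Nat.add_sub_cancel] at h2
  · intro n
    have h1 : (α⁻¹ ^ (k + n)) x ∈ Dset α (V : Set G) k :=
      hk (subset_closure (Set.mem_range_self (k + n)))
    have h2 := h1 k le_rfl
    rwa [pow_invpow_apply_of_ge α (Nat.le_add_right _ _), Nat.add_sub_cancel_left] at h2

end Topology

/-! ### parSet, levSet, contractionGroup basics -/

section Dynamics
variable [TopologicalSpace G] [IsTopologicalGroup G] [T2Space G]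

theorem one_mem_parSet {α : MulAut G} : (1 : G) ∈ parSet α := by
  have hsub : (Set.range fun n : ℕ => (α ^ n) (1 : G)) ⊆ {1} := by
    rintro _ ⟨n, rfl⟩
    beta_reduce; simp [map_one]
  exact IsCompact.of_isClosed_subset isCompact_singleton isClosed_closure
    (closure_minimal hsub isClosed_singleton)

theorem mul_mem_parSet {α : MulAut G} {x y : G} (hx : x ∈ parSet α) (hy : y ∈ parSet α) :
    x * y ∈ parSet α := by
  have hsub : (Set.range fun n : ℕ => (α ^ n) (x * y)) ⊆
      closure (Set.range fun n : ℕ => (α ^ n) x) * closure (Set.range fun n : ℕ => (α ^ n) y) := by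
    rintro _ ⟨n, rfl⟩
    beta_reduce
    rw [map_mul]
    exact Set.mul_mem_mul (subset_closure (Set.mem_range_self n))
      (subset_closure (Set.mem_range_self n))
  exact IsCompact.of_isClosed_subset (hx.mul hy) isClosed_closure
    (closure_minimal hsub (hx.mul hy).isClosed)

theorem inv_mem_parSet {α : MulAut G} {x : G} (hx : x ∈ parSet α) : x⁻¹ ∈ parSet α := by
  have hsub : (Set.range fun n : ℕ => (α ^ n) x⁻¹) ⊆
      (closure (Set.range fun n : ℕ => (α ^ n) x))⁻¹ := by
    rintro _ ⟨n, rfl⟩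
    beta_reduce
    rw [map_inv]
    exact Set.inv_mem_inv.2 (subset_closure (Set.mem_range_self n))
  exact IsCompact.of_isClosed_subset hx.inv isClosed_closure
    (closure_minimal hsub hx.inv.isClosed)

theorem mul_mem_levSet {α : MulAut G} {x y : G} (hx : x ∈ levSet α) (hy : y ∈ levSet α) :
    x * y ∈ levSet α := by
  have hsub : (Set.range fun n : ℤ => (α ^ n) (x * y)) ⊆
      closure (Set.range fun n : ℤ => (α ^ n) x) * closure (Set.range fun n : ℤ => (α ^ n) y) := by
    rintro _ ⟨n, rfl⟩
    beta_reduce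
    rw [map_mul]
    exact Set.mul_mem_mul (subset_closure (Set.mem_range_self n))
      (subset_closure (Set.mem_range_self n))
  exact IsCompact.of_isClosed_subset (hx.mul hy) isClosed_closure
    (closure_minimal hsub (hx.mul hy).isClosed)

theorem inv_mem_levSet {α : MulAut G} {x : G} (hx : x ∈ levSet α) : x⁻¹ ∈ levSet α := by
  have hsub : (Set.range fun n : ℤ => (α ^ n) x⁻¹) ⊆
      (closure (Set.range fun n : ℤ => (α ^ n) x))⁻¹ := by
    rintro _ ⟨n, rfl⟩
    beta_reduce
    rw [map_inv]
    exact Set.inv_mem_inv.2 (subset_closure (Set.mem_range_self n))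
  exact IsCompact.of_isClosed_subset hx.inv isClosed_closure
    (closure_minimal hsub hx.inv.isClosed)

theorem levSet_subset_parSet {α : MulAut G} : levSet α ⊆ parSet α := by
  intro x hx
  have hsub : (Set.range fun n : ℕ => (α ^ n) x) ⊆ Set.range fun n : ℤ => (α ^ n) x := by
    rintro _ ⟨n, rfl⟩
    beta_reduce
    exact ⟨(n : ℤ), by beta_reduce; rw [zpow_natCast]⟩
  exact IsCompact.of_isClosed_subset hx isClosed_closure (closure_mono hsub)

theorem levSet_inv (α : MulAut G) : levSet α⁻¹ = levSet α := by
  have hr : ∀ x : G, (Set.range fun n : ℤ => (α⁻¹ ^ n) x) = Set.range fun n : ℤ => (α ^ n) x := by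
    intro x
    ext y
    constructor
    · rintro ⟨n, rfl⟩
      exact ⟨-n, by beta_reduce; rw [zpow_neg, ← inv_zpow]⟩
    · rintro ⟨n, rfl⟩
      exact ⟨-n, by beta_reduce; rw [inv_zpow, zpow_neg, inv_inv]⟩
  unfold levSet
  ext x
  rw [Set.mem_setOf_eq, Set.mem_setOf_eq, hr]

theorem levSet_subset_parSet_inv {α : MulAut G} : levSet α ⊆ parSet α⁻¹ := by
  rw [← levSet_inv α]
  exact levSet_subset_parSet

theorem apply_mem_levSet {α : MulAut G} {x : G} (hx : x ∈ levSet α) : α x ∈ levSet α := by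
  have hsub : (Set.range fun n : ℤ => (α ^ n) (α x)) ⊆ Set.range fun n : ℤ => (α ^ n) x := by
    rintro _ ⟨n, rfl⟩
    beta_reduce
    refine ⟨n + 1, ?_⟩
    beta_reduce
    rw [zpow_add, zpow_one, MulAut.mul_apply]
  exact IsCompact.of_isClosed_subset hx isClosed_closure (closure_mono hsub)

theorem inv_apply_mem_levSet {α : MulAut G} {x : G} (hx : x ∈ levSet α) :
    α⁻¹ x ∈ levSet α := by
  have hsub : (Set.range fun n : ℤ => (α ^ n) (α⁻¹ x)) ⊆ Set.range fun n : ℤ => (α ^ n) x := by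
    rintro _ ⟨n, rfl⟩
    beta_reduce
    refine ⟨n - 1, ?_⟩
    beta_reduce
    rw [sub_eq_add_neg, zpow_add, MulAut.mul_apply, zpow_neg, zpow_one]
  exact IsCompact.of_isClosed_subset hx isClosed_closure (closure_mono hsub)

theorem pow_apply_mem_levSet {α : MulAut G} {x : G} (hx : x ∈ levSet α) (n : ℕ) :
    (α ^ n) x ∈ levSet α := by
  induction n with
  | zero => rwa [pow_zero, MulAut.one_apply]
  | succ m ih =>
    have := apply_mem_levSet ih
    rwa [← MulAut.mul_apply, ← pow_succ'] at this

theorem invpow_apply_mem_levSet {α : MulAut G} {x : G} (hx : x ∈ levSet α) (n : ℕ) :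
    (α⁻¹ ^ n) x ∈ levSet α := by
  induction n with
  | zero => rwa [pow_zero, MulAut.one_apply]
  | succ m ih =>
    have := inv_apply_mem_levSet ih
    rwa [← MulAut.mul_apply, ← pow_succ'] at this

theorem zeroPart_subset_levSet {α : MulAut G} {V : Subgroup G} (hVc : IsCompact (V : Set G)) :
    zeroPart α (V : Set G) ⊆ levSet α := by
  intro x hx
  rw [mem_zeroPart] at hx
  have hsub : (Set.range fun n : ℤ => (α ^ n) x) ⊆ (V : Set G) := by
    rintro _ ⟨n, rfl⟩
    beta_reduce
    cases n with
    | ofNat m => beta_reduce; rw [Int.ofNat_eq_coe, zpow_natCast]; exact hx.1 m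
    | negSucc m =>
      beta_reduce
      rw [zpow_negSucc, ← inv_pow]
      exact hx.2 (m + 1)
  exact IsCompact.of_isClosed_subset hVc isClosed_closure (closure_minimal hsub hVc.isClosed)

theorem one_mem_contraction {α : MulAut G} : (1 : G) ∈ contractionGroup α := by
  have h : (fun n : ℕ => (α ^ n) (1 : G)) = fun _ => (1 : G) := by
    funext n; rw [map_one]
  rw [contractionGroup, Set.mem_setOf_eq, h]
  exact tendsto_const_nhds

theorem mul_mem_contraction {α : MulAut G} {x y : G} (hx : x ∈ contractionGroup α)
    (hy : y ∈ contractionGroup α) : x * y ∈ contractionGroup α := by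
  have h : (fun n : ℕ => (α ^ n) (x * y)) = fun n => (α ^ n) x * (α ^ n) y := by
    funext n; rw [map_mul]
  rw [contractionGroup, Set.mem_setOf_eq, h]
  simpa using Filter.Tendsto.mul hx hy

theorem inv_mem_contraction {α : MulAut G} {x : G} (hx : x ∈ contractionGroup α) :
    x⁻¹ ∈ contractionGroup α := by
  have h : (fun n : ℕ => (α ^ n) x⁻¹) = fun n => ((α ^ n) x)⁻¹ := by
    funext n; rw [map_inv]
  rw [contractionGroup, Set.mem_setOf_eq, h]
  simpa using Filter.Tendsto.inv hx

theorem contraction_subset_parSet {α : MulAut G} : contractionGroup α ⊆ parSet α := by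
  intro x hx
  have h1 : IsCompact (insert (1 : G) (Set.range fun n : ℕ => (α ^ n) x)) :=
    Filter.Tendsto.isCompact_insert_range hx
  exact IsCompact.of_isClosed_subset h1 isClosed_closure
    (closure_minimal (Set.subset_insert _ _) h1.isClosed)


/-! ### omega-limit sets -/

section Omega
variable [TopologicalSpace G] [IsTopologicalGroup G] [T2Space G]

def Cset (α : MulAut G) (x : G) (N : ℕ) : Set G :=
  closure (Set.range fun k : ℕ => (α ^ (k + N)) x)

def omegaSet (α : MulAut G) (x : G) : Set G := ⋂ N : ℕ, Cset α x N

theorem Cset_antitone {α : MulAut G} {x : G} {M N : ℕ} (h : M ≤ N) :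
    Cset α x N ⊆ Cset α x M := by
  apply closure_mono
  rintro _ ⟨k, rfl⟩
  exact ⟨k + (N - M), by beta_reduce; rw [add_assoc, Nat.sub_add_cancel h]⟩

theorem isCompact_Cset {α : MulAut G} {x : G} (hx : x ∈ parSet α) (N : ℕ) :
    IsCompact (Cset α x N) := by
  refine IsCompact.of_isClosed_subset hx isClosed_closure (closure_mono ?_)
  rintro _ ⟨k, rfl⟩
  exact ⟨k + N, rfl⟩

theorem Cset_nonempty {α : MulAut G} {x : G} (N : ℕ) : (Cset α x N).Nonempty :=
  ⟨(α ^ N) x, subset_closure ⟨0, by beta_reduce; rw [Nat.zero_add]⟩⟩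

theorem omegaSet_nonempty {α : MulAut G} {x : G} (hx : x ∈ parSet α) :
    (omegaSet α x).Nonempty := by
  refine IsCompact.nonempty_iInter_of_directed_nonempty_isCompact_isClosed _
    (fun a b => ⟨max a b, Cset_antitone (le_max_left a b), Cset_antitone (le_max_right a b)⟩)
    (fun N => Cset_nonempty N) (fun N => isCompact_Cset hx N) (fun N => isClosed_closure)

theorem isClosed_omegaSet {α : MulAut G} {x : G} : IsClosed (omegaSet α x) :=
  isClosed_iInter fun _ => isClosed_closure

theorem isCompact_omegaSet {α : MulAut G} {x : G} (hx : x ∈ parSet α) :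
    IsCompact (omegaSet α x) :=
  IsCompact.of_isClosed_subset (isCompact_Cset hx 0) isClosed_omegaSet
    (Set.iInter_subset _ 0)

theorem omegaSet_subset_Cset {α : MulAut G} {x : G} (N : ℕ) :
    omegaSet α x ⊆ Cset α x N := Set.iInter_subset _ N

theorem eventually_mem_of_omega_subset {α : MulAut G} {x : G} (hx : x ∈ parSet α)
    {O : Set G} (hOopen : IsOpen O) (hLO : omegaSet α x ⊆ O) :
    ∃ N, ∀ n, N ≤ n → (α ^ n) x ∈ O := by
  have hdir : Directed (fun a b : Set G => a ⊇ b) (Cset α x) := fun a b =>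
    ⟨max a b, Cset_antitone (le_max_left a b), Cset_antitone (le_max_right a b)⟩
  obtain ⟨N, hN⟩ := exists_subset_nhds_of_isCompact' hdir (fun N => isCompact_Cset hx N)
    (fun N => isClosed_closure)
    (fun y hy => hOopen.mem_nhds (hLO hy))
  refine ⟨N, fun n hn => hN ?_⟩
  exact subset_closure ⟨n - N, by beta_reduce; rw [Nat.sub_add_cancel hn]⟩

theorem apply_mem_omegaSet {α : MulAut G} (hc : Continuous ⇑α) {x y : G}
    (hy : y ∈ omegaSet α x) : α y ∈ omegaSet α x := by
  refine Set.mem_iInter.2 fun N => ?_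
  have h1 : y ∈ Cset α x N := Set.mem_iInter.1 hy N
  have h2 : α y ∈ closure (⇑α '' Set.range fun k : ℕ => (α ^ (k + N)) x) :=
    image_closure_subset_closure_image hc ⟨y, h1, rfl⟩
  refine Cset_antitone (Nat.le_succ N) (closure_mono ?_ h2)
  rintro _ ⟨_, ⟨k, rfl⟩, rfl⟩
  refine ⟨k, ?_⟩
  beta_reduce
  rw [← MulAut.mul_apply, ← pow_succ']
  rfl

theorem inv_apply_mem_omegaSet {α : MulAut G} (hc' : Continuous ⇑α⁻¹) {x y : G}
    (hy : y ∈ omegaSet α x) : α⁻¹ y ∈ omegaSet α x := by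
  refine Set.mem_iInter.2 fun N => ?_
  have h1 : y ∈ Cset α x (N + 1) := Set.mem_iInter.1 hy (N + 1)
  have h2 : α⁻¹ y ∈ closure (⇑α⁻¹ '' Set.range fun k : ℕ => (α ^ (k + (N + 1))) x) :=
    image_closure_subset_closure_image hc' ⟨y, h1, rfl⟩
  refine closure_mono ?_ h2
  rintro _ ⟨_, ⟨k, rfl⟩, rfl⟩
  refine ⟨k, ?_⟩
  beta_reduce
  have h3 := invpow_pow_apply_of_ge α (a := 1) (b := k + (N + 1)) (by omega) x
  rw [pow_one] at h3
  rw [h3]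
  have h4 : k + (N + 1) - 1 = k + N := by omega
  rw [h4]

theorem pow_apply_mem_omegaSet {α : MulAut G} (hc : Continuous ⇑α) {x y : G}
    (hy : y ∈ omegaSet α x) (n : ℕ) : (α ^ n) y ∈ omegaSet α x := by
  induction n with
  | zero => rwa [pow_zero, MulAut.one_apply]
  | succ m ih =>
    have := apply_mem_omegaSet hc ih
    rwa [← MulAut.mul_apply, ← pow_succ'] at this

theorem invpow_apply_mem_omegaSet {α : MulAut G} (hc' : Continuous ⇑α⁻¹) {x y : G}
    (hy : y ∈ omegaSet α x) (n : ℕ) : (α⁻¹ ^ n) y ∈ omegaSet α x := by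
  induction n with
  | zero => rwa [pow_zero, MulAut.one_apply]
  | succ m ih =>
    have := inv_apply_mem_omegaSet hc' ih
    rwa [← MulAut.mul_apply, ← pow_succ'] at this

theorem omegaSet_subset_levSet {α : MulAut G} (hc : Continuous ⇑α) (hc' : Continuous ⇑α⁻¹)
    {x : G} (hx : x ∈ parSet α) : omegaSet α x ⊆ levSet α := by
  intro y hy
  have hsub : (Set.range fun n : ℤ => (α ^ n) y) ⊆ omegaSet α x := by
    rintro _ ⟨n, rfl⟩
    beta_reduce
    cases n with
    | ofNat m =>
      rw [Int.ofNat_eq_coe, zpow_natCast]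
      exact pow_apply_mem_omegaSet hc hy m
    | negSucc m =>
      rw [zpow_negSucc, ← inv_pow]
      exact invpow_apply_mem_omegaSet hc' hy (m + 1)
  exact IsCompact.of_isClosed_subset (isCompact_omegaSet hx) isClosed_closure
    (closure_minimal hsub isClosed_omegaSet)

end Omega

/-- Statement (a): `U_α` is normalised by `P_α`. -/
theorem conj_mem_contraction {α : MulAut G} {p u : G} (hp : p ∈ parSet α)
    (hu : u ∈ contractionGroup α) : p * u * p⁻¹ ∈ contractionGroup α := by
  rw [contractionGroup, Set.mem_setOf_eq, Filter.tendsto_def]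
  intro O hO
  obtain ⟨Z, hZ, hZO⟩ := conj_tube hp hO
  have hev : ∀ᶠ n : ℕ in atTop, (α ^ n) u ∈ Z := hu.eventually_mem hZ
  filter_upwards [hev] with n hn
  have heq : (α ^ n) (p * u * p⁻¹) = (α ^ n) p * (α ^ n) u * ((α ^ n) p)⁻¹ := by
    rw [map_mul, map_mul, map_inv]
  show (α ^ n) (p * u * p⁻¹) ∈ O
  rw [heq]
  exact hZO _ (subset_closure (Set.mem_range_self n)) _ hn

end Dynamics




/-! ### Tidy symmetry and the key structure lemmas -/

section Structure
variable [TopologicalSpace G] [IsTopologicalGroup G] [T2Space G]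

theorem isTidyFor_inv {α : MulAut G} {V : Subgroup G} (hV : IsTidyFor α V) :
    IsTidyFor α⁻¹ V := by
  obtain ⟨hVc, hVo, hT1, hppc, hmmc⟩ := hV
  refine ⟨hVc, hVo, ?_, ?_, ?_⟩
  · rw [posPart_inv, negPart_inv]
    have hVinv : ((V : Set G))⁻¹ = (V : Set G) := by
      ext x
      rw [Set.mem_inv, SetLike.mem_coe, SetLike.mem_coe, V.inv_mem_iff]
    calc (V : Set G) = ((V : Set G))⁻¹ := hVinv.symm
      _ = (posPart α (V : Set G) * negPart α (V : Set G))⁻¹ := by rw [← hT1]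
      _ = (negPart α (V : Set G))⁻¹ * (posPart α (V : Set G))⁻¹ := mul_inv_rev _ _
      _ = negPart α (V : Set G) * posPart α (V : Set G) := by
          rw [negPart_inv_eq, posPart_inv_eq]
  · rw [ppPart_inv]; exact hmmc
  · rw [mmPart_inv]; exact hppc

theorem isTidy_inv {α : MulAut G} (hα : IsTidy α) : IsTidy α⁻¹ := fun U hU => by
  obtain ⟨V, hV, hVsub⟩ := hα U hU
  exact ⟨V, isTidyFor_inv hV, hVsub⟩

variable [LocallyCompactSpace G]

theorem ppPart_inter_parSet_subset {α : MulAut G} (hc : Continuous ⇑α)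
    {V : Subgroup G} (hV : IsTidyFor α V) {x : G}
    (hx : x ∈ ppPart α (V : Set G)) (hx' : x ∈ parSet α) :
    x ∈ zeroPart α (V : Set G) := by
  have hcc : Continuous ⇑α⁻¹⁻¹ := by rw [inv_inv]; exact hc
  have h1 : x ∈ mmPart α⁻¹ (V : Set G) := by rwa [mmPart_inv]
  have h2 : x ∈ parSet α⁻¹⁻¹ := by rwa [inv_inv]
  have := mmPart_inter_parSet_inv_subset hcc (isTidyFor_inv hV) h1 h2
  rwa [zeroPart_inv] at this

theorem negPart_subset_parSet {α : MulAut G} {V : Subgroup G} (hVc : IsCompact (V : Set G)) :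
    negPart α (V : Set G) ⊆ parSet α := by
  intro x hx
  have hsub : (Set.range fun n : ℕ => (α ^ n) x) ⊆ (V : Set G) := by
    rintro _ ⟨n, rfl⟩
    exact mem_negPart.1 hx n
  exact IsCompact.of_isClosed_subset hVc isClosed_closure (closure_minimal hsub hVc.isClosed)

/-- `M_α ∩ V = V₀` for tidy `V`. -/
theorem levSet_inter_coe {α : MulAut G} (hc : Continuous ⇑α) (hc' : Continuous ⇑α⁻¹)
    {V : Subgroup G} (hV : IsTidyFor α V) :
    levSet α ∩ (V : Set G) = zeroPart α (V : Set G) := by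
  apply Set.Subset.antisymm
  · rintro x ⟨hxM, hxV⟩
    have hT1 := hV.2.2.1
    have hxmul : x ∈ posPart α (V : Set G) * negPart α (V : Set G) := by rw [← hT1]; exact hxV
    obtain ⟨a, ha, b, hb, hab⟩ := Set.mem_mul.1 hxmul
    have hbP : b ∈ parSet α := negPart_subset_parSet hV.1 hb
    have haeq : a = x * b⁻¹ := by rw [← hab, mul_inv_cancel_right]
    have haP : a ∈ parSet α := by
      rw [haeq]
      exact mul_mem_parSet (levSet_subset_parSet hxM) (inv_mem_parSet hbP)
    have happ : a ∈ ppPart α (V : Set G) := mem_ppPart.2 ⟨0, fun n _ => mem_posPart.1 ha n⟩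
    have haZ : a ∈ zeroPart α (V : Set G) := ppPart_inter_parSet_subset hc hV happ haP
    have hbeq : b = a⁻¹ * x := by rw [← hab, inv_mul_cancel_left]
    have hbM : b ∈ levSet α := by
      rw [hbeq]
      exact mul_mem_levSet (inv_mem_levSet (zeroPart_subset_levSet hV.1 haZ)) hxM
    have hbZ : b ∈ zeroPart α (V : Set G) :=
      mmPart_inter_parSet_inv_subset hc' hV (negPart_subset_mmPart hb)
        (levSet_subset_parSet_inv hbM)
    rw [← hab]
    exact mul_mem_zeroPart haZ hbZ
  · intro x hx
    exact ⟨zeroPart_subset_levSet hV.1 hx, zeroPart_subset hx⟩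

/-- `P_α ∩ V = V₋` for tidy `V`. -/
theorem parSet_inter_subset_negPart {α : MulAut G} (hc : Continuous ⇑α)
    {V : Subgroup G} (hV : IsTidyFor α V) {x : G}
    (hxP : x ∈ parSet α) (hxV : x ∈ (V : Set G)) : x ∈ negPart α (V : Set G) := by
  have hT1 := hV.2.2.1
  have hxmul : x ∈ posPart α (V : Set G) * negPart α (V : Set G) := by rw [← hT1]; exact hxV
  obtain ⟨a, ha, b, hb, hab⟩ := Set.mem_mul.1 hxmul
  have hbP : b ∈ parSet α := negPart_subset_parSet hV.1 hb
  have haeq : a = x * b⁻¹ := by rw [← hab, mul_inv_cancel_right]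
  have haP : a ∈ parSet α := by
    rw [haeq]
    exact mul_mem_parSet hxP (inv_mem_parSet hbP)
  have happ : a ∈ ppPart α (V : Set G) := mem_ppPart.2 ⟨0, fun n _ => mem_posPart.1 ha n⟩
  have haZ : a ∈ zeroPart α (V : Set G) := ppPart_inter_parSet_subset hc hV happ haP
  rw [← hab]
  exact mul_mem_negPart (zeroPart_subset_negPart haZ) hb

theorem one_mem_levSet {α : MulAut G} : (1 : G) ∈ levSet α := by
  have hsub : (Set.range fun n : ℤ => (α ^ n) (1 : G)) ⊆ {1} := by
    rintro _ ⟨n, rfl⟩; simp [map_one]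
  exact IsCompact.of_isClosed_subset isCompact_singleton isClosed_closure
    (closure_minimal hsub isClosed_singleton)

/-- Statement (b): `U_α ∩ M_α = {1}`. -/
theorem contraction_inter_levSet {α : MulAut G} (hc : Continuous ⇑α) (hc' : Continuous ⇑α⁻¹)
    (hα : IsTidy α) : contractionGroup α ∩ levSet α = {1} := by
  ext x
  constructor
  · rintro ⟨hxU, hxM⟩
    have key : ∀ O ∈ 𝓝 (1 : G), x ∈ O := by
      intro O hO
      obtain ⟨V, hV, hVsub⟩ := hα O hO
      have hev : ∀ᶠ n : ℕ in atTop, (α ^ n) x ∈ (V : Set G) :=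
        hxU.eventually_mem (hV.2.1.mem_nhds V.one_mem)
      obtain ⟨N, hN⟩ := Filter.eventually_atTop.1 hev
      have hxmm : x ∈ mmPart α (V : Set G) := mem_mmPart.2 ⟨N, hN⟩
      have hxZ := mmPart_inter_parSet_inv_subset hc' hV hxmm (levSet_subset_parSet_inv hxM)
      exact hVsub (zeroPart_subset hxZ)
    by_contra hne
    have h1 : (1 : G) ∈ ({x}ᶜ : Set G) := by
      simp only [Set.mem_compl_iff, Set.mem_singleton_iff]
      exact fun h => hne (by rw [Set.mem_singleton_iff, h])
    have := key _ ((isOpen_compl_singleton).mem_nhds h1)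
    exact this rfl
  · intro hx
    rw [Set.mem_singleton_iff] at hx
    subst hx
    exact ⟨one_mem_contraction, one_mem_levSet⟩

/-! ### The shadowing argument -/

theorem shadow_exists {α : MulAut G} (hc : Continuous ⇑α) (hc' : Continuous ⇑α⁻¹)
    (hα : IsTidy α) {x : G} (hx : x ∈ parSet α)
    {W : Subgroup G} (hW : IsTidyFor α W) :
    ∃ m ∈ omegaSet α x, ∃ N, ∀ n, N ≤ n →
      ((α ^ n) m)⁻¹ * (α ^ n) x ∈ (W : Set G) := by
  have hWo : IsOpen (W : Set G) := hW.2.1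
  -- a smaller tidy subgroup W' with W' ⊆ W and α(W') ⊆ W
  obtain ⟨W', hW', hW'sub⟩ := hα ((W : Set G) ∩ ⇑α ⁻¹' (W : Set G))
    ((hWo.inter (hWo.preimage hc)).mem_nhds
      ⟨W.one_mem, by simp only [Set.mem_preimage, map_one]; exact W.one_mem⟩)
  have hW'W : (W' : Set G) ⊆ (W : Set G) := fun y hy => (hW'sub hy).1
  have hW'α : ∀ y ∈ (W' : Set G), α y ∈ (W : Set G) := fun y hy => (hW'sub hy).2
  -- the orbit eventually lies in L * W'
  have hOopen : IsOpen (omegaSet α x * (W' : Set G)) := IsOpen.mul_left hW'.2.1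
  have hLO : omegaSet α x ⊆ omegaSet α x * (W' : Set G) := fun l hl =>
    ⟨l, hl, 1, W'.one_mem, mul_one l⟩
  obtain ⟨N₀, hN₀⟩ := eventually_mem_of_omega_subset hx hOopen hLO
  -- choose an itinerary
  have hch : ∀ n : ℕ, ∃ l w, N₀ ≤ n →
      l ∈ omegaSet α x ∧ w ∈ (W' : Set G) ∧ (α ^ n) x = l * w := by
    intro n
    by_cases h : N₀ ≤ n
    · obtain ⟨l, hl, w, hw, heq⟩ := Set.mem_mul.1 (hN₀ n h)
      exact ⟨l, w, fun _ => ⟨hl, hw, heq.symm⟩⟩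
    · exact ⟨1, 1, fun hcon => absurd hcon h⟩
  choose lf wf hlw using hch
  -- the consecutive defect lies in the zero part of W
  have hδ : ∀ n, N₀ ≤ n → (lf (n + 1))⁻¹ * α (lf n) ∈ zeroPart α (W : Set G) := by
    intro n hn
    obtain ⟨hl, hw, heq⟩ := hlw n hn
    obtain ⟨hl', hw', heq'⟩ := hlw (n + 1) (le_trans hn (Nat.le_succ n))
    have hMm : (lf (n + 1))⁻¹ * α (lf n) ∈ levSet α :=
      mul_mem_levSet (inv_mem_levSet (omegaSet_subset_levSet hc hc' hx hl'))
        (apply_mem_levSet (omegaSet_subset_levSet hc hc' hx hl))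
    have hpow : (α ^ (n + 1)) x = α ((α ^ n) x) := by
      rw [← MulAut.mul_apply, ← pow_succ']
    have h1 : lf (n + 1) = (α ^ (n + 1)) x * (wf (n + 1))⁻¹ := by
      rw [heq', mul_inv_cancel_right]
    have h2 : α (lf n) = (α ^ (n + 1)) x * (α (wf n))⁻¹ := by
      have h3 : lf n = (α ^ n) x * (wf n)⁻¹ := by rw [heq, mul_inv_cancel_right]
      rw [h3, map_mul, map_inv, hpow]
    have hcalc : (lf (n + 1))⁻¹ * α (lf n) = wf (n + 1) * (α (wf n))⁻¹ := by
      rw [h1, h2]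
      group
    have hWmem : (lf (n + 1))⁻¹ * α (lf n) ∈ (W : Set G) := by
      rw [hcalc]
      exact W.mul_mem (hW'W hw') (W.inv_mem (hW'α _ hw))
    have := Set.mem_inter hMm hWmem
    rwa [levSet_inter_coe hc hc' hW] at this
  -- by induction the itinerary is an exact orbit modulo `W₀`
  have hind : ∀ d : ℕ, ((α ^ d) (lf N₀))⁻¹ * lf (N₀ + d) ∈ zeroPart α (W : Set G) := by
    intro d
    induction d with
    | zero => simpa using one_mem_zeroPart
    | succ d ih =>
      have hδd := hδ (N₀ + d) (Nat.le_add_right _ _)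
      have heq : ((α ^ (d + 1)) (lf N₀))⁻¹ * lf (N₀ + (d + 1)) =
          α (((α ^ d) (lf N₀))⁻¹ * lf (N₀ + d)) *
            ((lf (N₀ + d + 1))⁻¹ * α (lf (N₀ + d)))⁻¹ := by
        have hp : α ((α ^ d) (lf N₀)) = (α ^ (d + 1)) (lf N₀) := by
          rw [← MulAut.mul_apply, ← pow_succ']
        rw [map_mul, map_inv, hp]
        have hNd : N₀ + (d + 1) = N₀ + d + 1 := by omega
        rw [hNd]
        group
      rw [heq]
      exact mul_mem_zeroPart (zeroPart_apply_mem ih) (inv_mem_zeroPart hδd)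
  -- the shadowing element
  refine ⟨(α⁻¹ ^ N₀) (lf N₀),
    invpow_apply_mem_omegaSet hc' (hlw N₀ le_rfl).1 N₀, N₀, fun n hn => ?_⟩
  obtain ⟨hl, hw, heq⟩ := hlw n hn
  have hmn : (α ^ n) ((α⁻¹ ^ N₀) (lf N₀)) = (α ^ (n - N₀)) (lf N₀) :=
    pow_invpow_apply_of_le α hn (lf N₀)
  have hd : N₀ + (n - N₀) = n := by omega
  have hz : ((α ^ (n - N₀)) (lf N₀))⁻¹ * lf n ∈ zeroPart α (W : Set G) := by
    have := hind (n - N₀)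
    rwa [hd] at this
  have hfinal : ((α ^ n) ((α⁻¹ ^ N₀) (lf N₀)))⁻¹ * (α ^ n) x =
      (((α ^ (n - N₀)) (lf N₀))⁻¹ * lf n) * wf n := by
    rw [hmn, heq]
    group
  rw [hfinal]
  exact W.mul_mem (zeroPart_subset hz) (hW'W hw)

/-- Main decomposition: every element of `P_α` factors as `u * m` with `u ∈ U_α`,
`m ∈ ω(x) ⊆ M_α`. -/
theorem exists_levSet_factor {α : MulAut G} (hc : Continuous ⇑α) (hc' : Continuous ⇑α⁻¹)
    (hα : IsTidy α) {x : G} (hx : x ∈ parSet α) :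
    ∃ m ∈ omegaSet α x, x * m⁻¹ ∈ contractionGroup α := by
  haveI hι : Nonempty {W : Subgroup G // IsTidyFor α W} := by
    obtain ⟨V, hV, _⟩ := hα Set.univ Filter.univ_mem
    exact ⟨⟨V, hV⟩⟩
  set Gs : {W : Subgroup G // IsTidyFor α W} → Set G := fun W =>
    {m | m ∈ omegaSet α x ∧ ∃ N, ∀ n, N ≤ n →
      ((α ^ n) m)⁻¹ * (α ^ n) x ∈ (W.1 : Set G)} with hGs
  have hmono : ∀ W W' : {W : Subgroup G // IsTidyFor α W},
      (W.1 : Set G) ⊆ (W'.1 : Set G) → Gs W ⊆ Gs W' := by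
    rintro W W' hsub m ⟨hmL, N, hN⟩
    exact ⟨hmL, N, fun n hn => hsub (hN n hn)⟩
  have hdir : Directed (fun a b : Set G => a ⊇ b) Gs := by
    intro W W'
    obtain ⟨W'', hW'', hsub⟩ := hα ((W.1 : Set G) ∩ (W'.1 : Set G))
      (Filter.inter_mem (W.2.2.1.mem_nhds W.1.one_mem) (W'.2.2.1.mem_nhds W'.1.one_mem))
    exact ⟨⟨W'', hW''⟩, hmono _ _ (fun y hy => (hsub hy).1),
      hmono _ _ (fun y hy => (hsub hy).2)⟩
  have hne : ∀ W : {W : Subgroup G // IsTidyFor α W}, (Gs W).Nonempty := by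
    intro W
    obtain ⟨m, hmL, N, hN⟩ := shadow_exists hc hc' hα hx W.2
    exact ⟨m, hmL, N, hN⟩
  -- saturation: membership in `Gs W` only depends on the coset modulo `W₀`
  have hsat : ∀ (W : {W : Subgroup G // IsTidyFor α W}) (m m' : G),
      m ∈ omegaSet α x → m' ∈ omegaSet α x → m⁻¹ * m' ∈ (W.1 : Set G) →
      m ∈ Gs W → m' ∈ Gs W := by
    rintro W m m' hmL hm'L hδW ⟨_, N, hN⟩
    have hδM : m⁻¹ * m' ∈ levSet α :=
      mul_mem_levSet (inv_mem_levSet (omegaSet_subset_levSet hc hc' hx hmL))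
        (omegaSet_subset_levSet hc hc' hx hm'L)
    have hδZ : m⁻¹ * m' ∈ zeroPart α (W.1 : Set G) := by
      have := Set.mem_inter hδM hδW
      rwa [levSet_inter_coe hc hc' W.2] at this
    refine ⟨hm'L, N, fun n hn => ?_⟩
    have heq : ((α ^ n) m')⁻¹ * (α ^ n) x =
        ((α ^ n) (m⁻¹ * m'))⁻¹ * (((α ^ n) m)⁻¹ * (α ^ n) x) := by
      rw [map_mul, map_inv]
      group
    rw [heq]
    exact W.1.mul_mem (W.1.inv_mem (zeroPart_subset (zeroPart_pow_apply_mem hδZ n)))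
      (hN n hn)
  have hcl : ∀ W : {W : Subgroup G // IsTidyFor α W}, IsClosed (Gs W) := by
    intro W
    have hkey : Gs W = omegaSet α x ∩ (((omegaSet α x \ Gs W) * (W.1 : Set G))ᶜ) := by
      ext m
      constructor
      · intro hm
        refine ⟨hm.1, ?_⟩
        rintro ⟨m'', hm'', w, hw, heq⟩
        refine hm''.2 ?_
        have hδ : m''⁻¹ * m ∈ (W.1 : Set G) := by
          have : m''⁻¹ * m = w := by rw [← heq]; group
          rw [this]; exact hw
        -- from m ∈ Gs W conclude m'' ∈ Gs W
        have hδ' : m⁻¹ * m'' ∈ (W.1 : Set G) := by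
          have : m⁻¹ * m'' = (m''⁻¹ * m)⁻¹ := by group
          rw [this]
          exact W.1.inv_mem hδ
        exact hsat W m m'' hm.1 hm''.1 hδ' hm
      · rintro ⟨hmL, hmO⟩
        by_contra hmG
        exact hmO ⟨m, ⟨hmL, hmG⟩, 1, W.1.one_mem, mul_one m⟩
    rw [hkey]
    exact isClosed_omegaSet.inter (IsOpen.mul_left W.2.2.1).isClosed_compl
  have hcpt : ∀ W : {W : Subgroup G // IsTidyFor α W}, IsCompact (Gs W) := fun W =>
    IsCompact.of_isClosed_subset (isCompact_omegaSet hx) (hcl W) (fun m hm => hm.1)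
  obtain ⟨m, hm⟩ :=
    IsCompact.nonempty_iInter_of_directed_nonempty_isCompact_isClosed Gs hdir hne hcpt hcl
  have hmL : m ∈ omegaSet α x := (Set.mem_iInter.1 hm (Classical.arbitrary _)).1
  refine ⟨m, hmL, ?_⟩
  rw [contractionGroup, Set.mem_setOf_eq, Filter.tendsto_def]
  intro O hO
  obtain ⟨Z, hZ, hZO⟩ := conj_tube (isCompact_omegaSet hx) hO
  obtain ⟨W, hW, hWsub⟩ := hα Z hZ
  obtain ⟨-, N, hN⟩ := Set.mem_iInter.1 hm ⟨W, hW⟩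
  rw [Filter.mem_atTop_sets]
  refine ⟨N, fun n hn => ?_⟩
  have hq : (α ^ n) m ∈ omegaSet α x := pow_apply_mem_omegaSet hc hmL n
  have heq : (α ^ n) (x * m⁻¹) =
      (α ^ n) m * (((α ^ n) m)⁻¹ * (α ^ n) x) * ((α ^ n) m)⁻¹ := by
    rw [map_mul, map_inv]
    group
  show (α ^ n) (x * m⁻¹) ∈ O
  rw [heq]
  exact hZO _ hq _ (hWsub (hN n hn))

theorem omegaSet_subset_zeroPart {α : MulAut G} (hc : Continuous ⇑α) (hc' : Continuous ⇑α⁻¹)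
    {V : Subgroup G} (hVc : IsCompact (V : Set G)) {v : G}
    (hv : v ∈ negPart α (V : Set G)) :
    omegaSet α v ⊆ zeroPart α (V : Set G) := by
  intro y hy
  have hstep : ∀ N : ℕ, y ∈ ⇑(α ^ N) '' negPart α (V : Set G) := by
    intro N
    have h1 : y ∈ Cset α v N := Set.mem_iInter.1 hy N
    have h2 : Cset α v N ⊆ ⇑(α ^ N) '' negPart α (V : Set G) := by
      apply closure_minimal
      · rintro _ ⟨k, rfl⟩
        beta_reduce
        have h3 : (α ^ (k + N)) v = (α ^ N) ((α ^ k) v) := by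
          rw [pow_mul_apply, Nat.add_comm]
        rw [h3]
        exact ⟨(α ^ k) v, negPart_pow_apply_mem hv k, rfl⟩
      · exact ((isCompact_negPart hc' hVc).image (continuous_powAut hc N)).isClosed
    exact h2 h1
  rw [mem_zeroPart]
  constructor
  · intro n
    have h0 := mem_image_pow.1 (hstep 0)
    rw [pow_zero, MulAut.one_apply] at h0
    exact mem_negPart.1 h0 n
  · intro n
    have := mem_image_pow.1 (hstep n)
    exact negPart_subset this

/-- Continuity estimate for the decomposition: if `a ∈ U_α`, `b ∈ M_α` and
`a * b` lies in a tidy subgroup `V`, then `a ∈ V` and `b ∈ V₀`. -/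
theorem factor_mem_of_mul_mem {α : MulAut G} (hc : Continuous ⇑α) (hc' : Continuous ⇑α⁻¹)
    (hα : IsTidy α) {V : Subgroup G} (hV : IsTidyFor α V) {a b : G}
    (ha : a ∈ contractionGroup α) (hb : b ∈ levSet α) (hab : a * b ∈ (V : Set G)) :
    a ∈ (V : Set G) ∧ b ∈ zeroPart α (V : Set G) := by
  have hvP : a * b ∈ parSet α :=
    mul_mem_parSet (contraction_subset_parSet ha) (levSet_subset_parSet hb)
  have hvm : a * b ∈ negPart α (V : Set G) := parSet_inter_subset_negPart hc hV hvP hab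
  obtain ⟨m, hmω, hu⟩ := exists_levSet_factor hc hc' hα hvP
  have hmZ : m ∈ zeroPart α (V : Set G) := omegaSet_subset_zeroPart hc hc' hV.1 hvm hmω
  have hw : ((a * b) * m⁻¹)⁻¹ * a ∈ contractionGroup α :=
    mul_mem_contraction (inv_mem_contraction hu) ha
  have hw' : ((a * b) * m⁻¹)⁻¹ * a = m * b⁻¹ := by group
  have hmb : m * b⁻¹ ∈ contractionGroup α ∩ levSet α := by
    refine ⟨by rwa [hw'] at hw, ?_⟩
    exact mul_mem_levSet (zeroPart_subset_levSet hV.1 hmZ) (inv_mem_levSet hb)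
  rw [contraction_inter_levSet hc hc' hα, Set.mem_singleton_iff, mul_inv_eq_one] at hmb
  have hbm : b = m := hmb.symm
  subst hbm
  constructor
  · have haeq : a = (a * b) * b⁻¹ := by group
    rw [haeq]
    exact negPart_subset
      (mul_mem_negPart hvm (inv_mem_negPart (zeroPart_subset_negPart hmZ)))
  · exact hmZ

/-- All five statements for a tidy automorphism. -/
theorem master {α : MulAut G} (hc : Continuous ⇑α) (hc' : Continuous ⇑α⁻¹)
    (hα : IsTidy α) :
    (∀ p ∈ parSet α, ∀ u ∈ contractionGroup α, p * u * p⁻¹ ∈ contractionGroup α) ∧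
      contractionGroup α ∩ levSet α = {1} ∧
      contractionGroup α * levSet α = parSet α ∧
      Topology.IsEmbedding
        (fun p : ↥(contractionGroup α) × ↥(levSet α) => (p.1 : G) * (p.2 : G)) ∧
      Set.range
        (fun p : ↥(contractionGroup α) × ↥(levSet α) => (p.1 : G) * (p.2 : G)) =
        parSet α := by
  have hmul : contractionGroup α * levSet α = parSet α := by
    apply Set.Subset.antisymm
    · rintro y hy
      obtain ⟨u, hu, m, hm, rfl⟩ := Set.mem_mul.1 hy
      exact mul_mem_parSet (contraction_subset_parSet hu) (levSet_subset_parSet hm)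
    · intro y hy
      obtain ⟨m, hmω, hu⟩ := exists_levSet_factor hc hc' hα hy
      exact Set.mem_mul.2 ⟨y * m⁻¹, hu, m, omegaSet_subset_levSet hc hc' hy hmω, by group⟩
  have hrange : Set.range
      (fun p : ↥(contractionGroup α) × ↥(levSet α) => (p.1 : G) * (p.2 : G)) =
      contractionGroup α * levSet α := by
    ext y
    constructor
    · rintro ⟨⟨u, m⟩, rfl⟩
      exact Set.mul_mem_mul u.2 m.2
    · intro hy
      obtain ⟨u, hu, m, hm, rfl⟩ := Set.mem_mul.1 hy
      exact ⟨(⟨u, hu⟩, ⟨m, hm⟩), rfl⟩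
  refine ⟨fun p hp u hu => conj_mem_contraction hp hu,
    contraction_inter_levSet hc hc' hα, hmul, ?_, hrange.trans hmul⟩
  rw [Topology.isEmbedding_iff]
  constructor
  · rw [Topology.isInducing_iff_nhds]
    rintro ⟨u₀, m₀⟩
    apply le_antisymm
    · exact (((continuous_subtype_val.comp continuous_fst).mul
        (continuous_subtype_val.comp continuous_snd)).tendsto _).le_comap
    · intro S hS
      rw [nhds_prod_eq] at hS
      obtain ⟨A, hA, B, hB, hAB⟩ := Filter.mem_prod_iff.1 hS
      rw [nhds_subtype] at hA hB
      obtain ⟨A', hA', hA'sub⟩ := Filter.mem_comap.1 hA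
      obtain ⟨B', hB', hB'sub⟩ := Filter.mem_comap.1 hB
      have hA1 : {a : G | (u₀ : G) * a ∈ A'} ∈ 𝓝 (1 : G) := by
        have hcont : Continuous fun a : G => (u₀ : G) * a := continuous_const.mul continuous_id
        have h1 : ((u₀ : G) * 1) = (u₀ : G) := mul_one _
        exact hcont.continuousAt.preimage_mem_nhds (by rw [h1]; exact hA')
      have hB1 : {b : G | b * (m₀ : G) ∈ B'} ∈ 𝓝 (1 : G) := by
        have hcont : Continuous fun b : G => b * (m₀ : G) := continuous_id.mul continuous_const
        have h1 : ((1 : G) * (m₀ : G)) = (m₀ : G) := one_mul _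
        exact hcont.continuousAt.preimage_mem_nhds (by rw [h1]; exact hB')
      obtain ⟨V, hV, hVsub⟩ := hα _ (Filter.inter_mem hA1 hB1)
      rw [Filter.mem_comap]
      refine ⟨{g : G | (u₀ : G)⁻¹ * g * (m₀ : G)⁻¹ ∈ (V : Set G)}, ?_, ?_⟩
      · have hcont : Continuous fun g : G => (u₀ : G)⁻¹ * g * (m₀ : G)⁻¹ :=
          (continuous_const.mul continuous_id).mul continuous_const
        apply hcont.continuousAt.preimage_mem_nhds
        show (V : Set G) ∈ 𝓝 ((u₀ : G)⁻¹ * ((u₀ : G) * (m₀ : G)) * (m₀ : G)⁻¹)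
        have h1 : (u₀ : G)⁻¹ * ((u₀ : G) * (m₀ : G)) * (m₀ : G)⁻¹ = 1 := by group
        rw [h1]
        exact hV.2.1.mem_nhds V.one_mem
      · rintro ⟨u, m⟩ hg
        have hg' : (u₀ : G)⁻¹ * ((u : G) * (m : G)) * (m₀ : G)⁻¹ ∈ (V : Set G) := hg
        have haU : (u₀ : G)⁻¹ * (u : G) ∈ contractionGroup α :=
          mul_mem_contraction (inv_mem_contraction u₀.2) u.2
        have hbM : (m : G) * (m₀ : G)⁻¹ ∈ levSet α :=
          mul_mem_levSet m.2 (inv_mem_levSet m₀.2)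
        have hab : ((u₀ : G)⁻¹ * (u : G)) * ((m : G) * (m₀ : G)⁻¹) ∈ (V : Set G) := by
          have heq2 : ((u₀ : G)⁻¹ * (u : G)) * ((m : G) * (m₀ : G)⁻¹)
              = (u₀ : G)⁻¹ * ((u : G) * (m : G)) * (m₀ : G)⁻¹ := by group
          rw [heq2]
          exact hg'
        obtain ⟨haV, hbZ⟩ := factor_mem_of_mul_mem hc hc' hα hV haU hbM hab
        apply hAB
        refine ⟨hA'sub ?_, hB'sub ?_⟩
        · show (u : G) ∈ A'
          have h3 : (u : G) = (u₀ : G) * ((u₀ : G)⁻¹ * (u : G)) := by group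
          rw [h3]
          exact (hVsub haV).1
        · show (m : G) ∈ B'
          have h4 : (m : G) = ((m : G) * (m₀ : G)⁻¹) * (m₀ : G) := by group
          rw [h4]
          exact (hVsub (zeroPart_subset hbZ)).2
  · rintro ⟨u, m⟩ ⟨u', m'⟩ heq
    have heq2 : (u : G) * (m : G) = (u' : G) * (m' : G) := heq
    have h2 : (u' : G)⁻¹ * (u : G) = (m' : G) * (m : G)⁻¹ := by
      calc (u' : G)⁻¹ * (u : G)
          = (u' : G)⁻¹ * ((u : G) * (m : G)) * (m : G)⁻¹ := by group
        _ = (u' : G)⁻¹ * ((u' : G) * (m' : G)) * (m : G)⁻¹ := by rw [heq2]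
        _ = (m' : G) * (m : G)⁻¹ := by group
    have hUM : (u' : G)⁻¹ * (u : G) ∈ contractionGroup α ∩ levSet α :=
      ⟨mul_mem_contraction (inv_mem_contraction u'.2) u.2,
       by rw [h2]; exact mul_mem_levSet m'.2 (inv_mem_levSet m.2)⟩
    rw [contraction_inter_levSet hc hc' hα, Set.mem_singleton_iff] at hUM
    have hu : (u' : G) = (u : G) := inv_mul_eq_one.1 hUM
    rw [hUM] at h2
    have hm : (m' : G) = (m : G) := mul_inv_eq_one.1 h2.symm
    exact Prod.ext (Subtype.ext hu.symm) (Subtype.ext hm.symm)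

end Structure
end TidyAux
end TidyAux





/-- If `α` is tidy, then `P_α = U_α ⋊ M_α` and
`P_{α⁻¹} = U_{α⁻¹} ⋊ M_α` as internal topological semidirect products. -/
theorem parSet_semidirect_of_tidy
    {G : Type*} [Group G] [TopologicalSpace G] [IsTopologicalGroup G]
    [T2Space G] [LocallyCompactSpace G] [TotallyDisconnectedSpace G]
    (α : MulAut G) (hc : Continuous ⇑α) (hc' : Continuous ⇑α⁻¹)
    (hα : IsTidy α) :
    ((∀ p ∈ parSet α, ∀ u ∈ contractionGroup α, p * u * p⁻¹ ∈ contractionGroup α) ∧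
      contractionGroup α ∩ levSet α = {1} ∧
      contractionGroup α * levSet α = parSet α ∧
      Topology.IsEmbedding
        (fun p : ↥(contractionGroup α) × ↥(levSet α) => (p.1 : G) * (p.2 : G)) ∧
      Set.range
        (fun p : ↥(contractionGroup α) × ↥(levSet α) => (p.1 : G) * (p.2 : G)) =
        parSet α) ∧
    ((∀ p ∈ parSet α⁻¹, ∀ u ∈ contractionGroup α⁻¹, p * u * p⁻¹ ∈ contractionGroup α⁻¹) ∧
      contractionGroup α⁻¹ ∩ levSet α = {1} ∧
      contractionGroup α⁻¹ * levSet α = parSet α⁻¹ ∧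
      Topology.IsEmbedding
        (fun p : ↥(contractionGroup α⁻¹) × ↥(levSet α) => (p.1 : G) * (p.2 : G)) ∧
      Set.range
        (fun p : ↥(contractionGroup α⁻¹) × ↥(levSet α) => (p.1 : G) * (p.2 : G)) =
        parSet α⁻¹) := by
  constructor
  · exact TidyAux.master hc hc' hα
  · have hc'' : Continuous ⇑α⁻¹⁻¹ := by rw [inv_inv]; exact hc
    have h2 := TidyAux.master hc' hc'' (TidyAux.isTidy_inv hα)
    rw [TidyAux.levSet_inv α] at h2
    exact h2
end

section
/- Let G be a totally disconnected, locally compact Hausdorff topological group and α a tidy bicontinuous automorphism of G. Then the product map μ : U_α × M_α × U_{α^{-1}} → G, (x, y, z) ↦ xyz, is injective. -/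
open Filter Topology Set Pointwise MeasureTheory
open scoped ENNReal

variable {G : Type*} [Group G] [TopologicalSpace G] [IsTopologicalGroup G]

section ProofHelpers

variable {G : Type*} [Group G] [TopologicalSpace G] [IsTopologicalGroup G]

private lemma mulAut_pow_apply_pow (β : MulAut G) (m n : ℕ) (g : G) :
    (β ^ m) ((β ^ n) g) = (β ^ (m + n)) g := by
  rw [← MulAut.mul_apply, ← pow_add]

private lemma mulAut_zpow_apply_zpow (β : MulAut G) (m n : ℤ) (g : G) :
    (β ^ m) ((β ^ n) g) = (β ^ (m + n)) g := by
  rw [← MulAut.mul_apply, ← zpow_add]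

private lemma continuous_mulAut_pow (β : MulAut G) (hc : Continuous ⇑β) (n : ℕ) :
    Continuous ⇑(β ^ n) := by
  induction n with
  | zero =>
      have : ⇑(β ^ 0) = id := by funext g; simp
      rw [this]; exact continuous_id
  | succ k ih =>
      have : ⇑(β ^ (k + 1)) = ⇑(β ^ k) ∘ ⇑β := by
        funext g; rw [Function.comp_apply, ← MulAut.mul_apply, ← pow_succ]
      rw [this]; exact ih.comp hc

private lemma mem_mulAut_image {β : MulAut G} {s : Set G} {g : G} :
    g ∈ ⇑β '' s ↔ β⁻¹ g ∈ s := by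
  constructor
  · rintro ⟨w, hw, rfl⟩; simpa [MulAut.inv_apply_self] using hw
  · intro h; exact ⟨β⁻¹ g, h, by simp⟩

private lemma mem_negPart_iff {β : MulAut G} {V : Set G} {g : G} :
    g ∈ negPart β V ↔ ∀ n : ℕ, (β ^ n) g ∈ V := by
  simp only [_root_.negPart, Set.mem_iInter]
  refine forall_congr' fun n => ?_
  rw [mem_mulAut_image]
  simp [inv_pow, inv_inv]

private lemma negPart_subset {β : MulAut G} {V : Set G} : negPart β V ⊆ V := fun g hg => by
  simpa using mem_negPart_iff.1 hg 0

private lemma pow_mem_negPart {β : MulAut G} {V : Set G} {g : G}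
    (hg : g ∈ negPart β V) (k : ℕ) : (β ^ k) g ∈ negPart β V :=
  mem_negPart_iff.2 fun n => by
    rw [mulAut_pow_apply_pow]; exact mem_negPart_iff.1 hg _

private lemma mem_mmPart_iff {β : MulAut G} {V : Set G} {g : G} :
    g ∈ mmPart β V ↔ ∃ N : ℕ, ∀ n ≥ N, (β ^ n) g ∈ V := by
  simp only [_root_.mmPart, Set.mem_iUnion]
  constructor
  · rintro ⟨m, hm⟩
    rw [mem_mulAut_image] at hm
    have hm' : (β ^ m) g ∈ negPart β V := by simpa [inv_pow, inv_inv] using hm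
    refine ⟨m, fun n hn => ?_⟩
    have h2 := mem_negPart_iff.1 hm' (n - m)
    rwa [mulAut_pow_apply_pow, Nat.sub_add_cancel hn] at h2
  · rintro ⟨N, hN⟩
    refine ⟨N, ?_⟩
    rw [mem_mulAut_image]
    have : (β ^ N) g ∈ negPart β V := mem_negPart_iff.2 fun k => by
      rw [mulAut_pow_apply_pow]; exact hN _ (by omega)
    simpa [inv_pow, inv_inv] using this

private lemma mem_mmPart_iff' {β : MulAut G} {V : Set G} {g : G} :
    g ∈ mmPart β V ↔ ∃ n : ℕ, (β ^ n) g ∈ negPart β V := by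
  rw [mem_mmPart_iff]
  constructor
  · rintro ⟨N, hN⟩
    exact ⟨N, mem_negPart_iff.2 fun k => by
      rw [mulAut_pow_apply_pow]; exact hN _ (by omega)⟩
  · rintro ⟨n, hn⟩
    refine ⟨n, fun m hm => ?_⟩
    have h2 := mem_negPart_iff.1 hn (m - n)
    rwa [mulAut_pow_apply_pow, Nat.sub_add_cancel hm] at h2

/-- `V₋` as a subgroup. -/
private def negPartSubgroup (β : MulAut G) (V : Subgroup G) : Subgroup G where
  carrier := negPart β (V : Set G)
  one_mem' := mem_negPart_iff.2 fun n => by simpa using V.one_mem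
  mul_mem' := fun ha hb => mem_negPart_iff.2 fun n => by
    rw [map_mul]; exact V.mul_mem (mem_negPart_iff.1 ha n) (mem_negPart_iff.1 hb n)
  inv_mem' := fun ha => mem_negPart_iff.2 fun n => by
    rw [map_inv]; exact V.inv_mem (mem_negPart_iff.1 ha n)

/-- `V₋₋` as a subgroup. -/
private def mmSubgroup (β : MulAut G) (V : Subgroup G) : Subgroup G where
  carrier := mmPart β (V : Set G)
  one_mem' := mem_mmPart_iff.2 ⟨0, fun n _ => by simpa using V.one_mem⟩
  mul_mem' := by
    intro a b ha hb
    obtain ⟨Na, hNa⟩ := mem_mmPart_iff.1 ha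
    obtain ⟨Nb, hNb⟩ := mem_mmPart_iff.1 hb
    exact mem_mmPart_iff.2 ⟨max Na Nb, fun n hn => by
      rw [map_mul]
      exact V.mul_mem (hNa n (le_trans (le_max_left _ _) hn))
        (hNb n (le_trans (le_max_right _ _) hn))⟩
  inv_mem' := by
    intro a ha
    obtain ⟨N, hN⟩ := mem_mmPart_iff.1 ha
    exact mem_mmPart_iff.2 ⟨N, fun n hn => by rw [map_inv]; exact V.inv_mem (hN n hn)⟩

/-- `α^{-n}(V₋)` as a subgroup. -/
private def wSub (β : MulAut G) (V : Subgroup G) (n : ℕ) : Subgroup G where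
  carrier := {g : G | (β ^ n) g ∈ negPart β (V : Set G)}
  one_mem' := by
    simp only [Set.mem_setOf_eq, map_one]
    exact (negPartSubgroup β V).one_mem
  mul_mem' := by
    intro a b ha hb
    simp only [Set.mem_setOf_eq, map_mul] at *
    exact (negPartSubgroup β V).mul_mem ha hb
  inv_mem' := by
    intro a ha
    simp only [Set.mem_setOf_eq, map_inv] at *
    exact (negPartSubgroup β V).inv_mem ha

private lemma mem_wSub {β : MulAut G} {V : Subgroup G} {n : ℕ} {g : G} :
    g ∈ wSub β V n ↔ (β ^ n) g ∈ negPart β (V : Set G) := Iff.rfl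

private lemma wSub_mono {β : MulAut G} {V : Subgroup G} {m n : ℕ} (h : m ≤ n) :
    wSub β V m ≤ wSub β V n := by
  intro g hg
  rw [mem_wSub] at hg ⊢
  have := pow_mem_negPart hg (n - m)
  rwa [mulAut_pow_apply_pow, Nat.sub_add_cancel h] at this

private lemma isClosed_negPart [T2Space G] {β : MulAut G} (hc' : Continuous ⇑β⁻¹)
    {V : Set G} (hV : IsCompact V) : IsClosed (negPart β V) :=
  isClosed_iInter fun n => (hV.image (continuous_mulAut_pow β⁻¹ hc' n)).isClosed

private lemma contraction_mul {β : MulAut G} {a b : G}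
    (ha : a ∈ contractionGroup β) (hb : b ∈ contractionGroup β) :
    a * b ∈ contractionGroup β := by
  simp only [contractionGroup, Set.mem_setOf_eq] at *
  simpa [map_mul] using ha.mul hb

private lemma contraction_inv {β : MulAut G} {a : G}
    (ha : a ∈ contractionGroup β) : a⁻¹ ∈ contractionGroup β := by
  simp only [contractionGroup, Set.mem_setOf_eq] at *
  simpa [map_inv] using ha.inv

private lemma levSet_mul [T2Space G] {β : MulAut G} {a b : G}
    (ha : a ∈ levSet β) (hb : b ∈ levSet β) : a * b ∈ levSet β := by
  simp only [levSet, Set.mem_setOf_eq] at *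
  have hcomp : IsCompact (closure (Set.range fun n : ℤ => (β ^ n) a) *
      closure (Set.range fun n : ℤ => (β ^ n) b)) := ha.mul hb
  refine hcomp.of_isClosed_subset isClosed_closure (closure_minimal ?_ hcomp.isClosed)
  rintro g ⟨n, rfl⟩
  simp only [map_mul]
  exact Set.mul_mem_mul (subset_closure ⟨n, rfl⟩) (subset_closure ⟨n, rfl⟩)

private lemma levSet_inv [T2Space G] {β : MulAut G} {a : G}
    (ha : a ∈ levSet β) : a⁻¹ ∈ levSet β := by
  simp only [levSet, Set.mem_setOf_eq] at *
  have hcomp : IsCompact (closure (Set.range fun n : ℤ => (β ^ n) a))⁻¹ := ha.inv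
  refine hcomp.of_isClosed_subset isClosed_closure (closure_minimal ?_ hcomp.isClosed)
  rintro g ⟨n, rfl⟩
  show ((β ^ n) a⁻¹) ∈ _
  rw [map_inv]
  exact Set.inv_mem_inv.2 (subset_closure ⟨n, rfl⟩)

private lemma levSet_inv_aut {β : MulAut G} {a : G} (ha : a ∈ levSet β) :
    a ∈ levSet β⁻¹ := by
  simp only [levSet, Set.mem_setOf_eq] at *
  have : (Set.range fun n : ℤ => (β⁻¹ ^ n) a) = Set.range fun n : ℤ => (β ^ n) a := by
    ext g
    constructor
    · rintro ⟨n, rfl⟩; exact ⟨-n, by simp [inv_zpow, zpow_neg]⟩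
    · rintro ⟨n, rfl⟩; exact ⟨-n, by simp [inv_zpow, zpow_neg]⟩
  rwa [this]

private lemma mmPart_inv_eq_ppPart (β : MulAut G) (V : Set G) :
    mmPart β⁻¹ V = ppPart β V := by
  simp only [_root_.mmPart, _root_.ppPart, _root_.negPart, _root_.posPart, inv_inv]

/-- Key lemma: an element of both the contraction group and `M_β` is trivial,
provided every identity neighbourhood contains a compact open subgroup `V`
with `V₋₋` closed. -/
private lemma eq_one_of_contraction_lev [T2Space G] [LocallyCompactSpace G]
    (β : MulAut G) (hcb : Continuous ⇑β) (hcb' : Continuous ⇑β⁻¹)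
    (htidy : ∀ U ∈ 𝓝 (1 : G), ∃ V : Subgroup G,
      IsCompact (V : Set G) ∧ IsOpen (V : Set G) ∧
      IsClosed (mmPart β (V : Set G)) ∧ (V : Set G) ⊆ U)
    {x : G} (hxc : x ∈ contractionGroup β) (hxl : x ∈ levSet β) : x = 1 := by
  by_contra hne
  have hU : ({x}ᶜ : Set G) ∈ 𝓝 (1 : G) :=
    isOpen_compl_singleton.mem_nhds (by simpa using Ne.symm hne)
  obtain ⟨V, hVc, hVo, hVmm, hVU⟩ := htidy _ hU
  have hxc' : Tendsto (fun n : ℕ => (β ^ n) x) atTop (𝓝 1) := hxc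
  obtain ⟨N, hN⟩ := Filter.eventually_atTop.1
    (hxc'.eventually (hVo.eventually_mem V.one_mem))
  set K := closure (Set.range fun n : ℤ => (β ^ n) x) with hKdef
  have hKc : IsCompact K := hxl
  have horb : ∀ n : ℤ, (β ^ n) x ∈ mmPart β (V : Set G) := by
    intro n
    refine mem_mmPart_iff.2 ⟨N + n.natAbs, fun m hm => ?_⟩
    have h1 : (β ^ m) ((β ^ n) x) = (β ^ ((m : ℤ) + n)) x := by
      rw [← zpow_natCast β m, mulAut_zpow_apply_zpow]
    rw [h1]
    have h2 : (N : ℤ) ≤ (m : ℤ) + n := by omega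
    have ht0 : 0 ≤ (m : ℤ) + n := by omega
    have h3 : (β ^ ((m : ℤ) + n)) x = (β ^ ((m : ℤ) + n).toNat) x := by
      rw [← zpow_natCast β ((m : ℤ) + n).toNat, Int.toNat_of_nonneg ht0]
    rw [h3]
    exact hN _ (by omega)
  have hKmm : K ⊆ mmPart β (V : Set G) :=
    closure_minimal (by rintro g ⟨n, rfl⟩; exact horb n) hVmm
  set M : Subgroup G := mmSubgroup β V with hMdef
  have hMcoe : (M : Set G) = mmPart β (V : Set G) := rfl
  have hMclosed : IsClosed (M : Set G) := hVmm
  haveI : LocallyCompactSpace M := hMclosed.locallyCompactSpace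
  haveI : Nonempty M := ⟨1⟩
  have hnegclosed : IsClosed (negPart β (V : Set G)) := isClosed_negPart hcb' hVc
  have hWclosed : ∀ n : ℕ, IsClosed ((wSub β V n : Set G)) := fun n =>
    hnegclosed.preimage (continuous_mulAut_pow β hcb n)
  set T : ℕ → Subgroup M := fun n => (wSub β V n).comap M.subtype with hTdef
  have hTcoe : ∀ n, (T n : Set M) = Subtype.val ⁻¹' (wSub β V n : Set G) := fun n => by
    rw [hTdef]; rw [Subgroup.coe_comap, Subgroup.coe_subtype]
  have hTclosed : ∀ n, IsClosed (T n : Set M) := fun n => by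
    rw [hTcoe]; exact (hWclosed n).preimage continuous_subtype_val
  have hTmem : ∀ (n : ℕ) (z : M), z ∈ T n ↔ (β ^ n) (z : G) ∈ negPart β (V : Set G) := by
    intro n z
    rw [hTdef, Subgroup.mem_comap]
    exact mem_wSub
  have hTcover : ⋃ n, (T n : Set M) = Set.univ := by
    ext z
    simp only [Set.mem_iUnion, Set.mem_univ, iff_true, SetLike.mem_coe]
    obtain ⟨n, hn⟩ := mem_mmPart_iff'.1 z.2
    exact ⟨n, (hTmem n z).2 hn⟩
  obtain ⟨n₀, hn₀⟩ := nonempty_interior_of_iUnion_of_closed hTclosed hTcover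
  obtain ⟨z₀, hz₀⟩ := hn₀
  have hTopen : IsOpen (T n₀ : Set M) :=
    Subgroup.isOpen_of_mem_nhds _ (mem_interior_iff_mem_nhds.1 hz₀)
  have hTmono : ∀ {a b : ℕ}, a ≤ b → T a ≤ T b := by
    intro a b hab z hz
    rw [hTmem] at hz ⊢
    have := pow_mem_negPart hz (b - a)
    rwa [mulAut_pow_apply_pow, Nat.sub_add_cancel hab] at this
  have hTopen' : ∀ m : ℕ, IsOpen ((T (n₀ + m) : Set M)) := fun m =>
    Subgroup.isOpen_mono (hTmono (Nat.le_add_right _ _)) hTopen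
  set K' : Set M := Subtype.val ⁻¹' K with hK'def
  have hK'c : IsCompact K' :=
    hMclosed.isClosedEmbedding_subtypeVal.isCompact_preimage hKc
  have hK'cover : K' ⊆ ⋃ m : ℕ, (T (n₀ + m) : Set M) := by
    intro z _
    have hz : z ∈ ⋃ n, (T n : Set M) := by rw [hTcover]; trivial
    obtain ⟨n, hn⟩ := Set.mem_iUnion.1 hz
    exact Set.mem_iUnion.2 ⟨n, hTmono (Nat.le_add_left _ _) hn⟩
  obtain ⟨F, hF⟩ := hK'c.elim_finite_subcover _ hTopen' hK'cover
  set Mx := n₀ + F.sup id with hMx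
  have hKM : ∀ g ∈ K, (β ^ Mx) g ∈ negPart β (V : Set G) := by
    intro g hg
    have hgM : g ∈ (M : Set G) := hKmm hg
    have hgK' : (⟨g, hgM⟩ : M) ∈ K' := hg
    have := hF hgK'
    simp only [Set.mem_iUnion, SetLike.mem_coe] at this
    obtain ⟨m, hmF, hmem⟩ := this
    have hle : n₀ + m ≤ Mx := Nat.add_le_add_left (Finset.le_sup (f := id) hmF) _
    exact (hTmem Mx _).1 (hTmono hle hmem)
  have hxV : x ∈ (V : Set G) := by
    have h1 : (β ^ (-(Mx : ℤ))) x ∈ K := subset_closure ⟨-(Mx : ℤ), rfl⟩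
    have h2 := hKM _ h1
    have h3 : (β ^ Mx) ((β ^ (-(Mx : ℤ))) x) = x := by
      rw [← zpow_natCast β Mx, mulAut_zpow_apply_zpow]
      simp
    rw [h3] at h2
    exact negPart_subset h2
  exact hVU hxV rfl

end ProofHelpers

/-- If `α` is tidy, the product map
`U_α × M_α × U_{α⁻¹} → G`, `(x, y, z) ↦ xyz`, is injective. -/
theorem product_map_injective_of_tidy
    {G : Type*} [Group G] [TopologicalSpace G] [IsTopologicalGroup G]
    [T2Space G] [LocallyCompactSpace G] [TotallyDisconnectedSpace G]
    (α : MulAut G) (hc : Continuous ⇑α) (hc' : Continuous ⇑α⁻¹)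
    (hα : IsTidy α) :
    Function.Injective
      (fun p : ↥(contractionGroup α) × ↥(levSet α) × ↥(contractionGroup α⁻¹) =>
        (p.1 : G) * (p.2.1 : G) * (p.2.2 : G)) := by
  rintro ⟨⟨x, hx⟩, ⟨y, hy⟩, ⟨z, hz⟩⟩ ⟨⟨x', hx'⟩, ⟨y', hy'⟩, ⟨z', hz'⟩⟩ h
  simp only at h
  have htidyα : ∀ U ∈ 𝓝 (1 : G), ∃ V : Subgroup G,
      IsCompact (V : Set G) ∧ IsOpen (V : Set G) ∧
      IsClosed (mmPart α (V : Set G)) ∧ (V : Set G) ⊆ U := by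
    intro U hU
    obtain ⟨V, ⟨h1, h2, _, _, h5⟩, h6⟩ := hα U hU
    exact ⟨V, h1, h2, h5, h6⟩
  have htidyα' : ∀ U ∈ 𝓝 (1 : G), ∃ V : Subgroup G,
      IsCompact (V : Set G) ∧ IsOpen (V : Set G) ∧
      IsClosed (mmPart α⁻¹ (V : Set G)) ∧ (V : Set G) ⊆ U := by
    intro U hU
    obtain ⟨V, ⟨h1, h2, _, h4, _⟩, h6⟩ := hα U hU
    exact ⟨V, h1, h2, by rw [mmPart_inv_eq_ppPart]; exact h4, h6⟩
  have hcα'inv : Continuous ⇑(α⁻¹)⁻¹ := by rw [inv_inv]; exact hc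
  have h2 := eq_mul_inv_of_mul_eq (eq_mul_inv_of_mul_eq h)
  have hwc : z' * z⁻¹ ∈ contractionGroup α⁻¹ := contraction_mul hz' (contraction_inv hz)
  have hac : x'⁻¹ * x ∈ contractionGroup α := contraction_mul (contraction_inv hx') hx
  have haeq : x'⁻¹ * x = y' * (z' * z⁻¹) * y⁻¹ := by rw [h2]; group
  have hal : x'⁻¹ * x ∈ levSet α := by
    have hac' : Tendsto (fun n : ℕ => (α ^ n) (x'⁻¹ * x)) atTop (𝓝 1) := hac
    have hwc' : Tendsto (fun n : ℕ => (α⁻¹ ^ n) (z' * z⁻¹)) atTop (𝓝 1) := hwc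
    have hCf : IsCompact (insert (1 : G) (Set.range fun k : ℕ => (α ^ k) (x'⁻¹ * x))) :=
      hac'.isCompact_insert_range
    have hK1 : IsCompact (closure (Set.range fun m : ℤ => (α ^ m) y')) := hy'
    have hK2 : IsCompact (insert (1 : G) (Set.range fun k : ℕ => (α⁻¹ ^ k) (z' * z⁻¹))) :=
      hwc'.isCompact_insert_range
    have hK3 : IsCompact (closure (Set.range fun m : ℤ => (α ^ m) y))⁻¹ := hy.inv
    have hD : IsCompact (insert (1 : G) (Set.range fun k : ℕ => (α ^ k) (x'⁻¹ * x)) ∪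
        closure (Set.range fun m : ℤ => (α ^ m) y') *
          insert (1 : G) (Set.range fun k : ℕ => (α⁻¹ ^ k) (z' * z⁻¹)) *
          (closure (Set.range fun m : ℤ => (α ^ m) y))⁻¹) :=
      hCf.union ((hK1.mul hK2).mul hK3)
    show IsCompact (closure (Set.range fun n : ℤ => (α ^ n) (x'⁻¹ * x)))
    refine hD.of_isClosed_subset isClosed_closure (closure_minimal ?_ hD.isClosed)
    rintro g ⟨n, rfl⟩
    show (α ^ n) (x'⁻¹ * x) ∈ _
    rcases le_or_gt 0 n with hn | hn
    · left
      refine Set.mem_insert_of_mem _ ⟨n.toNat, ?_⟩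
      show (α ^ n.toNat) (x'⁻¹ * x) = (α ^ n) (x'⁻¹ * x)
      rw [← zpow_natCast α n.toNat, Int.toNat_of_nonneg hn]
    · right
      have hsplit : (α ^ n) (x'⁻¹ * x) =
          (α ^ n) (y' : G) * (α ^ n) (z' * z⁻¹) * (α ^ n) ((y : G)⁻¹) := by
        rw [haeq, map_mul, map_mul]
      rw [hsplit]
      refine Set.mul_mem_mul (Set.mul_mem_mul ?_ ?_) ?_
      · exact subset_closure ⟨n, rfl⟩
      · refine Set.mem_insert_of_mem _ ⟨(-n).toNat, ?_⟩
        show (α⁻¹ ^ (-n).toNat) (z' * z⁻¹) = (α ^ n) (z' * z⁻¹)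
        rw [← zpow_natCast (α⁻¹ : MulAut G) (-n).toNat,
          Int.toNat_of_nonneg (by omega), inv_zpow, ← zpow_neg, neg_neg]
      · rw [map_inv]
        exact Set.inv_mem_inv.2 (subset_closure ⟨n, rfl⟩)
  have ha1 : x'⁻¹ * x = 1 := eq_one_of_contraction_lev α hc hc' htidyα hac hal
  have hxx : x' = x := inv_mul_eq_one.1 ha1
  have h3 : y * z = y' * z' := by
    rw [hxx] at h
    rw [mul_assoc, mul_assoc] at h
    exact mul_left_cancel h
  have h4 := eq_mul_inv_of_mul_eq h3
  have hbeq : y'⁻¹ * y = z' * z⁻¹ := by rw [h4]; group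
  have hbl : y'⁻¹ * y ∈ levSet α⁻¹ := levSet_inv_aut (levSet_mul (levSet_inv hy') hy)
  have hbc : y'⁻¹ * y ∈ contractionGroup α⁻¹ := by rw [hbeq]; exact hwc
  have hb1 : y'⁻¹ * y = 1 := eq_one_of_contraction_lev α⁻¹ hc' hcα'inv htidyα' hbc hbl
  have hyy : y' = y := inv_mul_eq_one.1 hb1
  rw [hb1] at hbeq
  have hzz : z' = z := mul_inv_eq_one.1 hbeq.symm
  simp only [Prod.mk.injEq, Subtype.mk.injEq]
  exact ⟨hxx.symm, hyy.symm, hzz.symm⟩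
end

section
/- Let G be a totally disconnected, locally compact Hausdorff topological group and α a tidy bicontinuous automorphism of G. Then every compact open subgroup V of G that is tidy for α satisfies V = (U_α ∩ V) · (M_α ∩ V) · (U_{α^{-1}} ∩ V); in particular every subgroup tidy for α is contained in the set U_α · M_α · U_{α^{-1}}. -/
open Filter Topology Set Pointwise MeasureTheory
open scoped ENNReal

variable {G : Type*} [Group G] [TopologicalSpace G] [IsTopologicalGroup G]

set_option linter.unusedSectionVars false
set_option linter.unnecessarySimpa false

namespace St12

lemma pow_comm_apply (α : MulAut G) (a b : ℕ) (g : G) :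
    (α ^ a) ((α⁻¹ ^ b) g) = (α⁻¹ ^ b) ((α ^ a) g) := by
  have h : (α ^ a) * (α⁻¹ ^ b) = (α⁻¹ ^ b) * (α ^ a) :=
    ((Commute.refl α).inv_right.pow_pow a b)
  calc (α ^ a) ((α⁻¹ ^ b) g) = ((α ^ a) * (α⁻¹ ^ b)) g := rfl
    _ = ((α⁻¹ ^ b) * (α ^ a)) g := by rw [h]
    _ = (α⁻¹ ^ b) ((α ^ a) g) := rfl

lemma cancel₁ (α : MulAut G) (m k : ℕ) (g : G) :
    (α ^ (m + k)) ((α⁻¹ ^ m) g) = (α ^ k) g := by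
  have h : (α ^ (m + k)) * (α⁻¹ ^ m) = α ^ k := by
    rw [inv_pow, pow_add]; group
  calc (α ^ (m + k)) ((α⁻¹ ^ m) g) = ((α ^ (m + k)) * (α⁻¹ ^ m)) g := rfl
    _ = (α ^ k) g := by rw [h]

lemma cancel₂ (α : MulAut G) (m k : ℕ) (g : G) :
    (α⁻¹ ^ (m + k)) ((α ^ m) g) = (α⁻¹ ^ k) g := by
  simpa using cancel₁ α⁻¹ m k g

lemma pow_cancel_self (α : MulAut G) (m : ℕ) (g : G) :
    (α ^ m) ((α⁻¹ ^ m) g) = g := by simpa using cancel₁ α m 0 g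

lemma pow_cancel_self' (α : MulAut G) (m : ℕ) (g : G) :
    (α⁻¹ ^ m) ((α ^ m) g) = g := by simpa using cancel₂ α m 0 g

lemma apply_pow_add (α : MulAut G) (a b : ℕ) (g : G) :
    (α ^ (a + b)) g = (α ^ a) ((α ^ b) g) := by
  rw [pow_add]; rfl

lemma mem_image_pow {α : MulAut G} {S : Set G} {n : ℕ} {g : G} :
    g ∈ ⇑(α ^ n) '' S ↔ (α⁻¹ ^ n) g ∈ S := by
  constructor
  · rintro ⟨s, hs, rfl⟩; rwa [pow_cancel_self']
  · intro h; exact ⟨(α⁻¹ ^ n) g, h, pow_cancel_self α n g⟩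

lemma mem_image_pow_inv {α : MulAut G} {S : Set G} {n : ℕ} {g : G} :
    g ∈ ⇑(α⁻¹ ^ n) '' S ↔ (α ^ n) g ∈ S := by
  simpa using (mem_image_pow (α := α⁻¹) (S := S) (n := n) (g := g))

lemma cont_pow {α : MulAut G} (hc : Continuous ⇑α) (n : ℕ) : Continuous ⇑(α ^ n) := by
  induction n with
  | zero => simpa [pow_zero, MulAut.coe_one] using continuous_id
  | succ n ih =>
      have h : ⇑(α ^ (n + 1)) = ⇑(α ^ n) ∘ ⇑α := by rw [pow_succ, MulAut.coe_mul]
      rw [h]; exact ih.comp hc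

/-! ### membership in pos/neg parts -/

section Parts
variable (α : MulAut G) (V : Subgroup G)

lemma mem_posPart {g : G} : g ∈ posPart α (V : Set G) ↔ ∀ n : ℕ, (α⁻¹ ^ n) g ∈ V := by
  simp only [_root_.posPart, Set.mem_iInter, mem_image_pow, SetLike.mem_coe]

lemma mem_negPart {g : G} : g ∈ negPart α (V : Set G) ↔ ∀ n : ℕ, (α ^ n) g ∈ V := by
  simp only [_root_.negPart, Set.mem_iInter, mem_image_pow_inv, inv_inv, SetLike.mem_coe]

lemma posPart_subset : posPart α (V : Set G) ⊆ (V : Set G) := fun g hg => by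
  simpa using ((mem_posPart α V).1 hg) 0

lemma negPart_subset : negPart α (V : Set G) ⊆ (V : Set G) := fun g hg => by
  simpa using ((mem_negPart α V).1 hg) 0

lemma one_mem_posPart : (1 : G) ∈ posPart α (V : Set G) :=
  (mem_posPart α V).2 fun n => by rw [map_one]; exact one_mem V

lemma one_mem_negPart : (1 : G) ∈ negPart α (V : Set G) :=
  (mem_negPart α V).2 fun n => by rw [map_one]; exact one_mem V

lemma mul_mem_posPart {a b : G} (ha : a ∈ posPart α (V : Set G))
    (hb : b ∈ posPart α (V : Set G)) : a * b ∈ posPart α (V : Set G) :=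
  (mem_posPart α V).2 fun n => by
    rw [map_mul]; exact mul_mem ((mem_posPart α V).1 ha n) ((mem_posPart α V).1 hb n)

lemma inv_mem_posPart {a : G} (ha : a ∈ posPart α (V : Set G)) :
    a⁻¹ ∈ posPart α (V : Set G) :=
  (mem_posPart α V).2 fun n => by
    rw [map_inv]; exact inv_mem ((mem_posPart α V).1 ha n)

lemma mul_mem_negPart {a b : G} (ha : a ∈ negPart α (V : Set G))
    (hb : b ∈ negPart α (V : Set G)) : a * b ∈ negPart α (V : Set G) :=
  (mem_negPart α V).2 fun n => by
    rw [map_mul]; exact mul_mem ((mem_negPart α V).1 ha n) ((mem_negPart α V).1 hb n)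

lemma inv_mem_negPart {a : G} (ha : a ∈ negPart α (V : Set G)) :
    a⁻¹ ∈ negPart α (V : Set G) :=
  (mem_negPart α V).2 fun n => by
    rw [map_inv]; exact inv_mem ((mem_negPart α V).1 ha n)

/-- forward stability of `V₋` -/
lemma apply_mem_negPart {g : G} (hg : g ∈ negPart α (V : Set G)) :
    α g ∈ negPart α (V : Set G) :=
  (mem_negPart α V).2 fun n => by
    have : (α ^ n) (α g) = (α ^ (n + 1)) g := by
      rw [pow_succ]; rfl
    rw [this]; exact (mem_negPart α V).1 hg (n + 1)

lemma pow_apply_mem_negPart {g : G} (hg : g ∈ negPart α (V : Set G)) (n : ℕ) :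
    (α ^ n) g ∈ negPart α (V : Set G) := by
  induction n generalizing g with
  | zero => simpa using hg
  | succ n ih =>
      have h : (α ^ (n + 1)) g = (α ^ n) (α g) := by rw [pow_succ]; rfl
      rw [h]
      exact ih (apply_mem_negPart α V hg)

/-- `V₀ = V₊ ∩ V₋` -/
lemma apply_inv_mem_posPart {g : G} (hg : g ∈ posPart α (V : Set G)) :
    α⁻¹ g ∈ posPart α (V : Set G) :=
  (mem_posPart α V).2 fun n => by
    have h : (α⁻¹ ^ n) (α⁻¹ g) = (α⁻¹ ^ (n + 1)) g := by rw [pow_succ]; rfl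
    rw [h]; exact (mem_posPart α V).1 hg (n + 1)

lemma one_mem_v0 : (1 : G) ∈ posPart α (V : Set G) ∩ negPart α (V : Set G) :=
  ⟨one_mem_posPart α V, one_mem_negPart α V⟩

lemma mul_mem_v0 {a b : G} (ha : a ∈ posPart α (V : Set G) ∩ negPart α (V : Set G))
    (hb : b ∈ posPart α (V : Set G) ∩ negPart α (V : Set G)) :
    a * b ∈ posPart α (V : Set G) ∩ negPart α (V : Set G) :=
  ⟨mul_mem_posPart α V ha.1 hb.1, mul_mem_negPart α V ha.2 hb.2⟩

lemma inv_mem_v0 {a : G} (ha : a ∈ posPart α (V : Set G) ∩ negPart α (V : Set G)) :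
    a⁻¹ ∈ posPart α (V : Set G) ∩ negPart α (V : Set G) :=
  ⟨inv_mem_posPart α V ha.1, inv_mem_negPart α V ha.2⟩

lemma v0_apply_mem {g : G}
    (hg : g ∈ posPart α (V : Set G) ∩ negPart α (V : Set G)) :
    α g ∈ posPart α (V : Set G) ∩ negPart α (V : Set G) := by
  obtain ⟨hp, hn⟩ := hg
  constructor
  · refine (mem_posPart α V).2 fun n => ?_
    cases n with
    | zero => simpa using (mem_negPart α V).1 hn 1
    | succ m =>
        have h : (α⁻¹ ^ (m + 1)) (α g) = (α⁻¹ ^ m) g := by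
          have h2 : (α : MulAut G) g = (α ^ 1) g := by rw [pow_one]
          rw [h2, Nat.add_comm m 1, cancel₂ α 1 m g]
        rw [h]; exact (mem_posPart α V).1 hp m
  · exact apply_mem_negPart α V hn

lemma v0_apply_inv_mem {g : G}
    (hg : g ∈ posPart α (V : Set G) ∩ negPart α (V : Set G)) :
    α⁻¹ g ∈ posPart α (V : Set G) ∩ negPart α (V : Set G) := by
  obtain ⟨hp, hn⟩ := hg
  constructor
  · refine (mem_posPart α V).2 fun n => ?_
    have h : (α⁻¹ ^ n) (α⁻¹ g) = (α⁻¹ ^ (n + 1)) g := by rw [pow_succ]; rfl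
    rw [h]; exact (mem_posPart α V).1 hp (n + 1)
  · refine (mem_negPart α V).2 fun n => ?_
    cases n with
    | zero => simpa using (mem_posPart α V).1 hp 1
    | succ m =>
        have h : (α ^ (m + 1)) (α⁻¹ g) = (α ^ m) g := by
          have h2 : (α⁻¹ : MulAut G) g = (α⁻¹ ^ 1) g := by rw [pow_one]
          rw [h2, Nat.add_comm m 1, cancel₁ α 1 m g]
        rw [h]; exact (mem_negPart α V).1 hn m

lemma v0_pow_mem {g : G}
    (hg : g ∈ posPart α (V : Set G) ∩ negPart α (V : Set G)) (n : ℕ) :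
    (α ^ n) g ∈ posPart α (V : Set G) ∩ negPart α (V : Set G) := by
  induction n generalizing g with
  | zero => simpa using hg
  | succ n ih =>
      have h : (α ^ (n + 1)) g = (α ^ n) (α g) := by rw [pow_succ]; rfl
      rw [h]; exact ih (v0_apply_mem α V hg)

lemma v0_pow_inv_mem {g : G}
    (hg : g ∈ posPart α (V : Set G) ∩ negPart α (V : Set G)) (n : ℕ) :
    (α⁻¹ ^ n) g ∈ posPart α (V : Set G) ∩ negPart α (V : Set G) := by
  induction n generalizing g with
  | zero => simpa using hg
  | succ n ih =>
      have h : (α⁻¹ ^ (n + 1)) g = (α⁻¹ ^ n) (α⁻¹ g) := by rw [pow_succ]; rfl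
      rw [h]; exact ih (v0_apply_inv_mem α V hg)

end Parts

/-! ### topology of the parts -/

section PartsTop
variable [T2Space G] (α : MulAut G) (V : Subgroup G)
variable (hc : Continuous ⇑α) (hc' : Continuous ⇑(α⁻¹)) (hVc : IsCompact (V : Set G))

include hc hVc in
lemma isClosed_image_pow (n : ℕ) : IsClosed (⇑(α ^ n) '' (V : Set G)) :=
  (hVc.image (cont_pow hc n)).isClosed

include hc' hVc in
lemma isClosed_image_pow_inv (n : ℕ) : IsClosed (⇑(α⁻¹ ^ n) '' (V : Set G)) :=
  (hVc.image (cont_pow hc' n)).isClosed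

include hc hVc in
lemma isClosed_posPart : IsClosed (posPart α (V : Set G)) :=
  isClosed_iInter fun n => isClosed_image_pow α V hc hVc n

include hc' hVc in
lemma isClosed_negPart : IsClosed (negPart α (V : Set G)) :=
  isClosed_iInter fun n => isClosed_image_pow_inv α V hc' hVc n

include hc hVc in
lemma isCompact_posPart : IsCompact (posPart α (V : Set G)) :=
  hVc.of_isClosed_subset (isClosed_posPart α V hc hVc) (posPart_subset α V)

include hc' hVc in
lemma isCompact_negPart : IsCompact (negPart α (V : Set G)) :=
  hVc.of_isClosed_subset (isClosed_negPart α V hc' hVc) (negPart_subset α V)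

end PartsTop

/-! ### the chain K n = α^n(V₋) -/

section Chain
variable (α : MulAut G) (V : Subgroup G)

/-- `K n = α^n(V₋)` -/
def KC (n : ℕ) : Set G := ⇑(α ^ n) '' negPart α (V : Set G)

lemma mem_KC {n : ℕ} {g : G} : g ∈ KC α V n ↔ (α⁻¹ ^ n) g ∈ negPart α (V : Set G) :=
  mem_image_pow

lemma KC_zero : KC α V 0 = negPart α (V : Set G) := by
  simp [KC, pow_zero, MulAut.coe_one, Set.image_id]

lemma KC_antitone (n : ℕ) : KC α V (n + 1) ⊆ KC α V n := by
  rintro g hg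
  rw [mem_KC] at hg ⊢
  have h : (α⁻¹ ^ n) g = α ((α⁻¹ ^ (n + 1)) g) := by
    have h2 : (α⁻¹ ^ (n + 1)) g = α⁻¹ ((α⁻¹ ^ n) g) := by
      rw [Nat.add_comm n 1, pow_add, pow_one]; rfl
    rw [h2, MulAut.apply_inv_self]
  rw [h]
  exact apply_mem_negPart α V hg

lemma KC_le {m n : ℕ} (h : m ≤ n) : KC α V n ⊆ KC α V m := by
  induction n with
  | zero => simpa [Nat.le_zero.1 h] using subset_rfl
  | succ n ih =>
      rcases Nat.lt_or_ge m (n+1) with h1 | h2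
      · exact (KC_antitone α V n).trans (ih (Nat.lt_succ_iff.1 h1))
      · have : m = n + 1 := le_antisymm h h2
        simpa [this] using subset_rfl

lemma subset_KC_of_v0 {g : G}
    (hg : g ∈ posPart α (V : Set G) ∩ negPart α (V : Set G)) (n : ℕ) : g ∈ KC α V n := by
  rw [mem_KC]
  exact (v0_pow_inv_mem α V hg n).2

lemma mul_mem_KC {n : ℕ} {a b : G} (ha : a ∈ KC α V n) (hb : b ∈ KC α V n) :
    a * b ∈ KC α V n := by
  rw [mem_KC] at ha hb ⊢
  rw [map_mul]
  exact mul_mem_negPart α V ha hb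

lemma inv_mem_KC {n : ℕ} {a : G} (ha : a ∈ KC α V n) : a⁻¹ ∈ KC α V n := by
  rw [mem_KC] at ha ⊢
  rw [map_inv]
  exact inv_mem_negPart α V ha

lemma iInter_KC :
    (⋂ n, KC α V n) = posPart α (V : Set G) ∩ negPart α (V : Set G) := by
  apply Set.Subset.antisymm
  · intro g hg
    simp only [Set.mem_iInter, mem_KC α V] at hg
    constructor
    · refine (mem_posPart α V).2 fun n => ?_
      exact negPart_subset α V (hg n)
    · simpa using hg 0
  · intro g hg
    exact Set.mem_iInter.2 fun n => subset_KC_of_v0 α V hg n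

end Chain

section ChainTop
variable [T2Space G] (α : MulAut G) (V : Subgroup G)
variable (hc : Continuous ⇑α) (hc' : Continuous ⇑(α⁻¹)) (hVc : IsCompact (V : Set G))

include hc hc' hVc in
lemma isCompact_KC (n : ℕ) : IsCompact (KC α V n) :=
  (isCompact_negPart α V hc' hVc).image (cont_pow hc n)

include hc hc' hVc in
lemma isClosed_KC (n : ℕ) : IsClosed (KC α V n) :=
  (isCompact_KC α V hc hc' hVc n).isClosed

include hc hc' hVc in
lemma isCompact_V0 :
    IsCompact (posPart α (V : Set G) ∩ negPart α (V : Set G)) :=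
  (isCompact_posPart α V hc hVc).inter_right (isClosed_negPart α V hc' hVc)

include hc hc' hVc in
lemma isClosed_V0 :
    IsClosed (posPart α (V : Set G) ∩ negPart α (V : Set G)) :=
  (isClosed_posPart α V hc hVc).inter (isClosed_negPart α V hc' hVc)

end ChainTop

/-! ### decreasing compacts into an open set -/

lemma eventually_subset_of_iInter_subset [T2Space G] (K : ℕ → Set G)
    (hcpt : ∀ n, IsCompact (K n)) (hmono : ∀ n, K (n + 1) ⊆ K n)
    {U : Set G} (hU : IsOpen U) (hsub : (⋂ n, K n) ⊆ U) :
    ∃ N, ∀ n ≥ N, K n ⊆ U := by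
  have hle : ∀ {m n : ℕ}, m ≤ n → K n ⊆ K m := by
    intro m n h
    induction n with
    | zero => simpa [Nat.le_zero.1 h] using subset_rfl
    | succ n ih =>
        rcases Nat.lt_or_ge m (n + 1) with h1 | h2
        · exact (hmono n).trans (ih (Nat.lt_succ_iff.1 h1))
        · have : m = n + 1 := le_antisymm h h2
          simpa [this] using subset_rfl
  by_contra hcon
  push_neg at hcon
  have hne : ∀ n, (K n ∩ Uᶜ).Nonempty := by
    intro n
    obtain ⟨m, hm, hKm⟩ := hcon n
    obtain ⟨g, hg⟩ := Set.not_subset.1 hKm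
    exact ⟨g, hle hm hg.1, hg.2⟩
  have hdir : Directed (· ⊇ ·) (fun n => K n ∩ Uᶜ) := by
    intro i j
    refine ⟨max i j, ?_, ?_⟩
    · exact Set.inter_subset_inter_left _ (hle (le_max_left i j))
    · exact Set.inter_subset_inter_left _ (hle (le_max_right i j))
  have hcl : ∀ n, IsClosed (K n ∩ Uᶜ) := fun n =>
    ((hcpt n).isClosed).inter hU.isClosed_compl
  have hcpt' : ∀ n, IsCompact (K n ∩ Uᶜ) := fun n =>
    (hcpt n).inter_right hU.isClosed_compl
  obtain ⟨g, hg⟩ :=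
    IsCompact.nonempty_iInter_of_directed_nonempty_isCompact_isClosed _ hdir hne hcpt' hcl
  simp only [Set.mem_iInter, Set.mem_inter_iff] at hg
  exact (hg 0).2 (hsub (Set.mem_iInter.2 fun n => (hg n).1))

/-! ### Baire trapping: a compact subset of a closed increasing union of compact
"subgroup-sets" is contained in one of them -/

lemma trap_in_union [T2Space G] [LocallyCompactSpace G]
    (A : ℕ → Set G) (hAcl : ∀ n, IsClosed (A n))
    (hmono : ∀ n, A n ⊆ A (n + 1))
    (hmul : ∀ i j (a b : G), a ∈ A i → b ∈ A j → a * b ∈ A (max i j))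
    (hinv : ∀ i (a : G), a ∈ A i → a⁻¹ ∈ A i)
    (hone : (1 : G) ∈ A 0)
    (hHcl : IsClosed (⋃ n, A n))
    (D : Set G) (hD : IsCompact D) (hDH : D ⊆ ⋃ n, A n) :
    ∃ M, D ⊆ A M := by
  classical
  set H : Set G := ⋃ n, A n with hH
  have hle : ∀ {i j : ℕ}, i ≤ j → A i ⊆ A j := by
    intro i j h
    induction j with
    | zero => simpa [Nat.le_zero.1 h] using subset_rfl
    | succ j ih =>
        rcases Nat.lt_or_ge i (j + 1) with h1 | h2
        · exact (ih (Nat.lt_succ_iff.1 h1)).trans (hmono j)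
        · have : i = j + 1 := le_antisymm h h2
          simpa [this] using subset_rfl
  have hmulH : ∀ a b : G, a ∈ H → b ∈ H → a * b ∈ H := by
    intro a b ha hb
    obtain ⟨_, ⟨i, rfl⟩, hai⟩ := ha
    obtain ⟨_, ⟨j, rfl⟩, hbj⟩ := hb
    exact Set.mem_iUnion.2 ⟨max i j, hmul i j a b hai hbj⟩
  have hinvH : ∀ a : G, a ∈ H → a⁻¹ ∈ H := by
    intro a ha
    obtain ⟨_, ⟨i, rfl⟩, hai⟩ := ha
    exact Set.mem_iUnion.2 ⟨i, hinv i a hai⟩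
  -- Baire on the closed subspace H
  haveI : LocallyCompactSpace H := hHcl.locallyCompactSpace
  haveI : Nonempty H := ⟨⟨1, Set.mem_iUnion.2 ⟨0, hone⟩⟩⟩
  have hcover : (⋃ n, (Subtype.val ⁻¹' A n : Set H)) = Set.univ := by
    ext ⟨g, hg⟩
    simp only [Set.mem_iUnion, Set.mem_preimage, Set.mem_univ, iff_true]
    exact Set.mem_iUnion.1 hg
  obtain ⟨m, x₀, hx₀⟩ :=
    nonempty_interior_of_iUnion_of_closed
      (fun n => (hAcl n).preimage continuous_subtype_val) hcover
  -- extract an open set O ∋ x₀ in G with O ∩ H ⊆ A m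
  have hnhds : (Subtype.val ⁻¹' A m : Set H) ∈ 𝓝 x₀ := mem_interior_iff_mem_nhds.1 hx₀
  rw [mem_nhds_subtype] at hnhds
  obtain ⟨O, hO_nhds, hO_sub⟩ := hnhds
  obtain ⟨O', hO'sub, hO'open, hx₀O'⟩ := mem_nhds_iff.1 hO_nhds
  have hx₀Am : (x₀ : G) ∈ A m := by
    have := interior_subset hx₀
    exact this
  have hx₀H : (x₀ : G) ∈ H := Set.mem_iUnion.2 ⟨m, hx₀Am⟩
  -- Θ := x₀⁻¹ O', an open neighbourhood of 1 with Θ ∩ H ⊆ A m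
  set Θ : Set G := (fun g => (x₀ : G) * g) ⁻¹' O' with hΘ
  have hΘopen : IsOpen Θ := hO'open.preimage (continuous_mul_left _)
  have hΘone : (1 : G) ∈ Θ := by simpa [hΘ] using hx₀O'
  have hΘH : ∀ t : G, t ∈ Θ → t ∈ H → t ∈ A m := by
    intro t ht htH
    have h1 : (x₀ : G) * t ∈ O' := ht
    have h2 : (x₀ : G) * t ∈ H := hmulH _ _ hx₀H htH
    have h3 : (⟨(x₀ : G) * t, h2⟩ : H) ∈ (Subtype.val ⁻¹' A m : Set H) :=
      hO_sub (by simpa using hO'sub h1)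
    have h4 : (x₀ : G) * t ∈ A m := h3
    have h5 : ((x₀ : G))⁻¹ * ((x₀ : G) * t) ∈ A (max m m) :=
      hmul m m _ _ (hinv m _ hx₀Am) h4
    simpa using h5
  -- cover D by translates d • Θ
  have hmem : ∀ d ∈ D, ∃ k, d ∈ A k := by
    intro d hd
    obtain ⟨_, ⟨k, rfl⟩, hk⟩ := hDH hd
    exact ⟨k, hk⟩
  choose! kk hkk using hmem
  have hnhds2 : ∀ d ∈ D, (fun g => d⁻¹ * g) ⁻¹' Θ ∈ 𝓝 d := by
    intro d hd
    apply (hΘopen.preimage (continuous_mul_left _)).mem_nhds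
    simpa using hΘone
  obtain ⟨t, htD, htcov⟩ := hD.elim_nhds_subcover _ hnhds2
  refine ⟨max m (t.sup kk), ?_⟩
  intro g hg
  obtain ⟨d, hdt, hdg⟩ := Set.mem_iUnion₂.1 (htcov hg)
  have hdD : d ∈ D := htD d hdt
  have hgH : g ∈ H := hDH hg
  have hdH : d ∈ H := hDH hdD
  have h6 : d⁻¹ * g ∈ H := hmulH _ _ (hinvH _ hdH) hgH
  have h7 : d⁻¹ * g ∈ A m := hΘH _ hdg h6
  have h8 : d * (d⁻¹ * g) ∈ A (max (kk d) m) := hmul _ _ _ _ (hkk d hdD) h7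
  have h9 : g ∈ A (max (kk d) m) := by simpa using h8
  apply hle _ h9
  have : kk d ≤ t.sup kk := Finset.le_sup hdt
  omega

/-! ### the trapping lemma for elements of `T₊` with bounded forward orbit -/

lemma trap [T2Space G] [LocallyCompactSpace G] (α : MulAut G)
    (hc : Continuous ⇑α) (hc' : Continuous ⇑(α⁻¹))
    (T : Subgroup G) (hTc : IsCompact (T : Set G))
    (hpp : IsClosed (ppPart α (T : Set G)))
    {p : G} (hp : p ∈ posPart α (T : Set G))
    {S : Set G} (hS : IsCompact S) (hfwd : ∀ n : ℕ, (α ^ n) p ∈ S) :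
    (∀ n : ℕ, (α ^ n) p ∈ (T : Set G)) ∧ (∀ n : ℕ, (α⁻¹ ^ n) p ∈ (T : Set G)) := by
  set A : ℕ → Set G := fun n => ⇑(α ^ n) '' posPart α (T : Set G) with hA
  have hAcl : ∀ n, IsClosed (A n) := fun n =>
    ((isCompact_posPart α T hc hTc).image (cont_pow hc n)).isClosed
  have hmono : ∀ n, A n ⊆ A (n + 1) := by
    intro n g hg
    rw [hA, mem_image_pow] at hg ⊢
    have h : (α⁻¹ ^ (n + 1)) g = α⁻¹ ((α⁻¹ ^ n) g) := by
      rw [pow_succ']; rfl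
    rw [h]
    exact apply_inv_mem_posPart α T hg
  have hle : ∀ {i j : ℕ}, i ≤ j → A i ⊆ A j := by
    intro i j h
    induction j with
    | zero => simpa [Nat.le_zero.1 h] using subset_rfl
    | succ j ih =>
        rcases Nat.lt_or_ge i (j + 1) with h1 | h2
        · exact (ih (Nat.lt_succ_iff.1 h1)).trans (hmono j)
        · have : i = j + 1 := le_antisymm h h2
          simpa [this] using subset_rfl
  have hmulA : ∀ M (a b : G), a ∈ A M → b ∈ A M → a * b ∈ A M := by
    intro M a b ha hb
    rw [hA, mem_image_pow] at ha hb ⊢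
    rw [map_mul]
    exact mul_mem_posPart α T ha hb
  have hinvA : ∀ i (a : G), a ∈ A i → a⁻¹ ∈ A i := by
    intro i a ha
    rw [hA, mem_image_pow] at ha ⊢
    rw [map_inv]
    exact inv_mem_posPart α T ha
  have hmul : ∀ i j (a b : G), a ∈ A i → b ∈ A j → a * b ∈ A (max i j) := by
    intro i j a b ha hb
    exact hmulA _ _ _ (hle (le_max_left i j) ha) (hle (le_max_right i j) hb)
  have hone : (1 : G) ∈ A 0 := by
    rw [hA, mem_image_pow, map_one]
    exact one_mem_posPart α T
  have hHcl : IsClosed (⋃ n, A n) := hpp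
  have hDsub : ((⋃ n, A n) ∩ S) ⊆ ⋃ n, A n := Set.inter_subset_left
  have hDcpt : IsCompact ((⋃ n, A n) ∩ S) := hS.inter_left hHcl
  obtain ⟨M, hM⟩ := trap_in_union A hAcl hmono hmul hinvA hone hHcl _ hDcpt hDsub
  have hporb : ∀ n : ℕ, (α ^ n) p ∈ A M := by
    intro n
    apply hM
    refine ⟨Set.mem_iUnion.2 ⟨n, ⟨p, hp, rfl⟩⟩, hfwd n⟩
  set p' : G := (α⁻¹ ^ M) p with hp'def
  have hp' : ∀ n : ℕ, (α ^ n) p' ∈ posPart α (T : Set G) := by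
    intro n
    have h1 : (α ^ n) p' = (α⁻¹ ^ M) ((α ^ n) p) := by
      rw [hp'def, pow_comm_apply]
    rw [h1]
    exact mem_image_pow.1 (hporb n)
  constructor
  · intro n
    have h1 : (α ^ (M + n)) p' = (α ^ n) p := by
      rw [hp'def, cancel₁]
    have := posPart_subset α T (hp' (M + n))
    rwa [h1] at this
  · intro n
    rcases Nat.le_total n M with h | h
    · have h1 : (α ^ (M - n)) p' = (α⁻¹ ^ n) p := by
        rw [hp'def]
        have h2 : (α⁻¹ ^ M) p = (α⁻¹ ^ (M - n)) ((α⁻¹ ^ n) p) := by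
          rw [← apply_pow_add α⁻¹ (M - n) n, Nat.sub_add_cancel h]
        rw [h2, pow_cancel_self]
      have := posPart_subset α T (hp' (M - n))
      rwa [h1] at this
    · have h1 : (α⁻¹ ^ n) p = (α⁻¹ ^ (n - M)) p' := by
        rw [hp'def, ← apply_pow_add α⁻¹ (n - M) M, Nat.sub_add_cancel h]
      rw [h1]
      have hp'pos : p' ∈ posPart α (T : Set G) := by
        have := hp' 0
        simpa using this
      exact (mem_posPart α T).1 hp'pos (n - M)

/-! ### bounded orbits of elements of a tidy subgroup stay in the subgroup -/

lemma orbit_in_tidy [T2Space G] [LocallyCompactSpace G] (α : MulAut G)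
    (hc : Continuous ⇑α) (hc' : Continuous ⇑(α⁻¹))
    (T : Subgroup G) (hT : IsTidyFor α T)
    {v : G} {C : Set G} (hC : IsCompact C)
    (horb : ∀ n : ℕ, (α ^ n) v ∈ C ∧ (α⁻¹ ^ n) v ∈ C)
    (hv : v ∈ (T : Set G)) :
    ∀ n : ℕ, (α ^ n) v ∈ (T : Set G) ∧ (α⁻¹ ^ n) v ∈ (T : Set G) := by
  have hcc : Continuous ⇑(α⁻¹⁻¹) := by rw [inv_inv]; exact hc
  have hv' : v ∈ posPart α (T : Set G) * negPart α (T : Set G) := by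
    rw [← hT.2.2.1]; exact hv
  obtain ⟨p, hp, q, hq, hpq⟩ := Set.mem_mul.1 hv'
  have hfwd_p : ∀ n : ℕ, (α ^ n) p ∈ C * (T : Set G) := by
    intro n
    have h1 : (α ^ n) p = (α ^ n) v * ((α ^ n) q)⁻¹ := by
      rw [← hpq, map_mul]; group
    rw [h1]
    exact Set.mul_mem_mul (horb n).1 (by
      simpa using inv_mem ((mem_negPart α T).1 hq n))
  obtain ⟨hpf, hpb⟩ := trap α hc hc' T hT.1 hT.2.2.2.1 hp (hC.mul hT.1) hfwd_p
  have hq' : q ∈ posPart α⁻¹ (T : Set G) := hq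
  have hfwd_q : ∀ n : ℕ, (α⁻¹ ^ n) q ∈ (T : Set G) * C := by
    intro n
    have h1 : (α⁻¹ ^ n) q = ((α⁻¹ ^ n) p)⁻¹ * (α⁻¹ ^ n) v := by
      rw [← hpq, map_mul]; group
    rw [h1]
    exact Set.mul_mem_mul (by simpa using inv_mem (SetLike.mem_coe.1 (hpb n))) (horb n).2
  have hppinv : IsClosed (ppPart α⁻¹ (T : Set G)) := hT.2.2.2.2
  obtain ⟨hqf, _⟩ := trap α⁻¹ hc' hcc T hT.1 hppinv hq' (hT.1.mul hC) hfwd_q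
  intro n
  constructor
  · have h1 : (α ^ n) v = (α ^ n) p * (α ^ n) q := by rw [← hpq, map_mul]
    rw [h1]
    exact mul_mem (hpf n) ((mem_negPart α T).1 hq n)
  · have h1 : (α⁻¹ ^ n) v = (α⁻¹ ^ n) p * (α⁻¹ ^ n) q := by rw [← hpq, map_mul]
    rw [h1]
    exact mul_mem (hpb n) (hqf n)

/-! ### compact open subgroups basis, separation lemma -/

lemma basis_of_isTidy (α : MulAut G) (hα : IsTidy α) :
    ∀ U ∈ 𝓝 (1 : G), ∃ Ω : Subgroup G,
      IsCompact (Ω : Set G) ∧ IsOpen (Ω : Set G) ∧ (Ω : Set G) ⊆ U := by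
  intro U hU
  obtain ⟨W, hW, hsub⟩ := hα U hU
  exact ⟨W, hW.1, hW.2.1, hsub⟩

lemma sep (α : MulAut G) (hc : Continuous ⇑α) (hα : IsTidy α)
    {T : Set G} (hTopen : IsOpen T) {O : Set G} (hO : IsCompact O) (hOT : O ⊆ T) :
    ∃ Ω : Subgroup G, IsOpen (Ω : Set G) ∧
      ∀ a ∈ (Ω : Set G), ∀ o ∈ O, ∀ b ∈ (Ω : Set G), a * o * α b ∈ T := by
  classical
  have hcont : Continuous (fun x : G × G × G => x.1 * x.2.1 * α x.2.2) :=
    (continuous_fst.mul (continuous_fst.comp continuous_snd)).mul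
      (hc.comp (continuous_snd.comp continuous_snd))
  have hexists : ∀ o ∈ O, ∃ (A Y B : Set G),
      A ∈ 𝓝 (1 : G) ∧ Y ∈ 𝓝 o ∧ B ∈ 𝓝 (1 : G) ∧
      ∀ a ∈ A, ∀ y ∈ Y, ∀ b ∈ B, a * y * α b ∈ T := by
    intro o ho
    have hmem : (fun x : G × G × G => x.1 * x.2.1 * α x.2.2) ⁻¹' T ∈
        𝓝 ((1 : G), (o, (1 : G))) := by
      apply hcont.continuousAt.preimage_mem_nhds
      apply hTopen.mem_nhds
      simpa using hOT ho
    obtain ⟨A, hA, v, hv, hAv⟩ := mem_nhds_prod_iff.1 hmem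
    obtain ⟨Y, hY, B, hB, hYB⟩ := mem_nhds_prod_iff.1 hv
    refine ⟨A, Y, B, hA, hY, hB, fun a ha y hy b hb => ?_⟩
    have : (a, (y, b)) ∈ A ×ˢ (Y ×ˢ B) := ⟨ha, hy, hb⟩
    exact hAv (Set.prod_mono subset_rfl hYB this)
  choose! A Y B hA hY hB hprop using hexists
  obtain ⟨t, htO, htcov⟩ := hO.elim_nhds_subcover Y (fun o ho => hY o ho)
  have hN : (⋂ o ∈ t, (A o ∩ B o)) ∈ 𝓝 (1 : G) := by
    refine (Filter.biInter_finset_mem t).2 fun o ho => ?_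
    exact Filter.inter_mem (hA o (htO o ho)) (hB o (htO o ho))
  obtain ⟨Ω, _, hΩopen, hΩsub⟩ := basis_of_isTidy α hα _ hN
  refine ⟨Ω, hΩopen, fun a ha o' ho' b hb => ?_⟩
  obtain ⟨o, hot, ho'Y⟩ := Set.mem_iUnion₂.1 (htcov ho')
  have ha' : a ∈ A o := ((Set.mem_iInter₂.1 (hΩsub ha)) o hot).1
  have hb' : b ∈ B o := ((Set.mem_iInter₂.1 (hΩsub hb)) o hot).2
  exact hprop o (htO o hot) a ha' o' ho'Y b hb'

/-! ### Step A: single-target approximation -/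

lemma stepA [T2Space G] [LocallyCompactSpace G] (α : MulAut G)
    (hc : Continuous ⇑α) (hc' : Continuous ⇑(α⁻¹)) (hα : IsTidy α)
    (V : Subgroup G) (hVc : IsCompact (V : Set G))
    {x : G} (hx : x ∈ negPart α (V : Set G))
    (T : Subgroup G) (hT : IsTidyFor α T) :
    ∃ N : ℕ, ∃ y ∈ posPart α (V : Set G) ∩ negPart α (V : Set G),
      ∀ n ≥ N, (α ^ n) x * ((α ^ n) y)⁻¹ ∈ (T : Set G) := by
  classical
  set V0 : Set G := posPart α (V : Set G) ∩ negPart α (V : Set G) with hV0def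
  set O : Set G := V0 ∩ (T : Set G) with hOdef
  have hV0c : IsCompact V0 := isCompact_V0 α V hc hc' hVc
  have hOpow : ∀ g ∈ O, ∀ n : ℕ, ((α ^ n) g ∈ O ∧ (α⁻¹ ^ n) g ∈ O) := by
    intro g hg n
    have h1 := v0_pow_mem α V hg.1 n
    have h2 := v0_pow_inv_mem α V hg.1 n
    have h3 := orbit_in_tidy α hc hc' T hT (hV0c)
      (fun m => ⟨v0_pow_mem α V hg.1 m, v0_pow_inv_mem α V hg.1 m⟩) hg.2 n
    exact ⟨⟨h1, h3.1⟩, ⟨h2, h3.2⟩⟩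
  have hOmul : ∀ a b : G, a ∈ O → b ∈ O → a * b ∈ O := fun a b ha hb =>
    ⟨mul_mem_v0 α V ha.1 hb.1, mul_mem ha.2 hb.2⟩
  have hOinv : ∀ a : G, a ∈ O → a⁻¹ ∈ O := fun a ha =>
    ⟨inv_mem_v0 α V ha.1, inv_mem ha.2⟩
  have hOone : (1 : G) ∈ O := ⟨one_mem_v0 α V, one_mem T⟩
  have hOc : IsCompact O := hV0c.inter_right (hT.1.isClosed)
  have hOT : O ⊆ (T : Set G) := fun g hg => hg.2
  -- separation subgroup Ω
  obtain ⟨Ω, hΩopen, hΩ⟩ := sep α hc hα hT.2.1 hOc hOT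
  -- N_a : K n ⊆ T * V0
  have hTV0open : IsOpen ((T : Set G) * V0) := hT.2.1.mul_right
  have hsub1 : (⋂ n, KC α V n) ⊆ (T : Set G) * V0 := by
    rw [iInter_KC]
    intro g hg
    have : (1 : G) * g ∈ (T : Set G) * V0 := Set.mul_mem_mul (one_mem T) hg
    simpa using this
  obtain ⟨Na, hNa⟩ := eventually_subset_of_iInter_subset (KC α V)
    (isCompact_KC α V hc hc' hVc) (KC_antitone α V) hTV0open hsub1
  -- N_b' : T ∩ K n ⊆ O * Ω
  have hOΩopen : IsOpen (O * (Ω : Set G)) := IsOpen.mul_left hΩopen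
  have hsub2 : (⋂ n, ((T : Set G) ∩ KC α V n)) ⊆ O * (Ω : Set G) := by
    intro g hg
    simp only [Set.mem_iInter, Set.mem_inter_iff] at hg
    have hgV0 : g ∈ V0 := by
      rw [hV0def, ← iInter_KC α V]
      exact Set.mem_iInter.2 fun n => (hg n).2
    have : g * (1 : G) ∈ O * (Ω : Set G) :=
      Set.mul_mem_mul ⟨hgV0, (hg 0).1⟩ (one_mem Ω)
    simpa using this
  obtain ⟨Nb', hNb'⟩ := eventually_subset_of_iInter_subset
    (fun n => (T : Set G) ∩ KC α V n)
    (fun n => (isCompact_KC α V hc hc' hVc n).inter_left hT.1.isClosed)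
    (fun n => Set.inter_subset_inter_right _ (KC_antitone α V n))
    hOΩopen hsub2
  -- choose the V0-components z n
  have hchoice : ∀ n : ℕ, ∃ z : G, z ∈ V0 ∧
      (n ≥ Na → (α ^ n) x * z⁻¹ ∈ (T : Set G) ∩ KC α V n) := by
    intro n
    by_cases hn : n ≥ Na
    · have hmem : (α ^ n) x ∈ KC α V n := ⟨x, hx, rfl⟩
      obtain ⟨tt, htt, zz, hzz, heq⟩ := Set.mem_mul.1 (hNa n hn hmem)
      refine ⟨zz, hzz, fun _ => ?_⟩
      have h1 : (α ^ n) x * zz⁻¹ = tt := by rw [← heq]; group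
      rw [h1]
      constructor
      · exact htt
      · rw [← h1]
        exact mul_mem_KC α V hmem (inv_mem_KC α V (subset_KC_of_v0 α V hzz n))
    · exact ⟨1, one_mem_v0 α V, fun h => absurd h hn⟩
  choose z hzV0 hzT using hchoice
  set Nb : ℕ := max Na Nb' with hNbdef
  -- the defects lie in O
  have hδ : ∀ n ≥ Nb, z (n + 1) * (α (z n))⁻¹ ∈ O := by
    intro n hn
    have hna : n ≥ Na := le_trans (le_max_left _ _) hn
    have hnb : n ≥ Nb' := le_trans (le_max_right _ _) hn
    have ht1 : (α ^ n) x * (z n)⁻¹ ∈ O * (Ω : Set G) :=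
      hNb' n hnb (hzT n hna)
    have ht2 : (α ^ (n + 1)) x * (z (n + 1))⁻¹ ∈ O * (Ω : Set G) :=
      hNb' (n + 1) (le_trans hnb (Nat.le_succ n)) (hzT (n + 1) (le_trans hna (Nat.le_succ n)))
    obtain ⟨o1, ho1, w1, hw1, he1⟩ := Set.mem_mul.1 ht2
    obtain ⟨o2, ho2, w2, hw2, he2⟩ := Set.mem_mul.1 ht1
    -- z (n+1) * (α (z n))⁻¹ = (o1 w1)⁻¹ * α (o2 w2)
    have e5 : α ((α ^ n) x) = (α ^ (n + 1)) x := by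
      rw [pow_succ']; rfl
    have e6 : α o2 * α w2 = (α ^ (n + 1)) x * (α (z n))⁻¹ := by
      have e7 := congrArg (⇑α) he2
      simp only [map_mul, map_inv] at e7
      rw [e5] at e7
      exact e7
    have hkey : z (n + 1) * (α (z n))⁻¹ = w1⁻¹ * (o1⁻¹ * α o2) * α w2 := by
      calc z (n + 1) * (α (z n))⁻¹
          = ((α ^ (n + 1)) x * (z (n + 1))⁻¹)⁻¹ * ((α ^ (n + 1)) x * (α (z n))⁻¹) := by
            group
        _ = (o1 * w1)⁻¹ * (α o2 * α w2) := by rw [he1, e6]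
        _ = w1⁻¹ * (o1⁻¹ * α o2) * α w2 := by group
    rw [hkey]
    have hmid : o1⁻¹ * α o2 ∈ O := by
      apply hOmul
      · exact hOinv _ ho1
      · have := hOpow o2 ho2 1
        simpa using this.1
    have hsep := hΩ w1⁻¹ (by simpa using inv_mem (SetLike.mem_coe.1 hw1)) _ hmid w2 hw2
    refine ⟨?_, hsep⟩
    -- also in V0
    have hzv1 : z (n + 1) ∈ V0 := hzV0 (n + 1)
    have hzv2 : α (z n) ∈ V0 := by
      have := v0_pow_mem α V (hzV0 n) 1
      simpa [hV0def] using this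
    rw [← hkey]
    exact mul_mem_v0 α V hzv1 (inv_mem_v0 α V hzv2)
  -- equivariance by induction
  have hzy : ∀ k : ℕ, z (Nb + k) * ((α ^ k) (z Nb))⁻¹ ∈ O := by
    intro k
    induction k with
    | zero => simpa using hOone
    | succ k ih =>
        have hδ' := hδ (Nb + k) (Nat.le_add_right _ _)
        have hkey : z (Nb + (k + 1)) * ((α ^ (k + 1)) (z Nb))⁻¹ =
            (z (Nb + k + 1) * (α (z (Nb + k)))⁻¹) *
              α (z (Nb + k) * ((α ^ k) (z Nb))⁻¹) := by
          rw [map_mul, map_inv]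
          have e5 : α ((α ^ k) (z Nb)) = (α ^ (k + 1)) (z Nb) := by
            rw [pow_succ']; rfl
          rw [e5]
          have : Nb + (k + 1) = Nb + k + 1 := by omega
          rw [this]
          group
        rw [hkey]
        apply hOmul _ _ hδ'
        have := hOpow _ ih 1
        simpa using this.1
  -- assemble
  refine ⟨Nb, (α⁻¹ ^ Nb) (z Nb), v0_pow_inv_mem α V (hzV0 Nb) Nb, ?_⟩
  intro n hn
  obtain ⟨k, rfl⟩ := Nat.exists_eq_add_of_le hn
  have hy : (α ^ (Nb + k)) ((α⁻¹ ^ Nb) (z Nb)) = (α ^ k) (z Nb) := cancel₁ α Nb k (z Nb)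
  rw [hy]
  have hsplit : (α ^ (Nb + k)) x * ((α ^ k) (z Nb))⁻¹ =
      ((α ^ (Nb + k)) x * (z (Nb + k))⁻¹) * (z (Nb + k) * ((α ^ k) (z Nb))⁻¹) := by
    group
  rw [hsplit]
  exact mul_mem (SetLike.mem_coe.1 ((hzT (Nb + k) (le_trans (le_max_left _ _) (Nat.le_add_right _ _))).1))
    (hOT (hzy k))

/-! ### the key decomposition: V₋ ⊆ U_α · V₀ -/

lemma key [T2Space G] [LocallyCompactSpace G] (α : MulAut G)
    (hc : Continuous ⇑α) (hc' : Continuous ⇑(α⁻¹)) (hα : IsTidy α)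
    (V : Subgroup G) (hV : IsTidyFor α V)
    {x : G} (hx : x ∈ negPart α (V : Set G)) :
    ∃ u y : G, u ∈ contractionGroup α ∧
      y ∈ posPart α (V : Set G) ∩ negPart α (V : Set G) ∧ x = u * y := by
  classical
  set V0 : Set G := posPart α (V : Set G) ∩ negPart α (V : Set G) with hV0def
  have hV0c : IsCompact V0 := isCompact_V0 α V hc hc' hV.1
  have hV0cl : IsClosed V0 := isClosed_V0 α V hc hc' hV.1
  haveI hne : Nonempty {T : Subgroup G // IsTidyFor α T} := by
    obtain ⟨T, hT, _⟩ := hα Set.univ Filter.univ_mem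
    exact ⟨⟨T, hT⟩⟩
  have hex : ∀ T : {T : Subgroup G // IsTidyFor α T}, ∃ N : ℕ, ∃ y ∈ V0,
      ∀ n ≥ N, (α ^ n) x * ((α ^ n) y)⁻¹ ∈ (T.1 : Set G) := fun T =>
    stepA α hc hc' hα V hV.1 hx T.1 T.2
  set NT : {T : Subgroup G // IsTidyFor α T} → ℕ := fun T => Nat.find (hex T) with hNT
  set Z : {T : Subgroup G // IsTidyFor α T} → Set G := fun T =>
    V0 ∩ ⋂ (n : ℕ), ⋂ (_ : n ≥ NT T), {y | (α ^ n) x * ((α ^ n) y)⁻¹ ∈ (T.1 : Set G)}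
    with hZ
  have hZmem : ∀ T y, y ∈ Z T ↔ (y ∈ V0 ∧
      ∀ n ≥ NT T, (α ^ n) x * ((α ^ n) y)⁻¹ ∈ (T.1 : Set G)) := by
    intro T y
    simp only [hZ, Set.mem_inter_iff, Set.mem_iInter, Set.mem_setOf_eq]
  have hZne : ∀ T, (Z T).Nonempty := by
    intro T
    obtain ⟨y, hy1, hy2⟩ := Nat.find_spec (hex T)
    exact ⟨y, (hZmem T y).2 ⟨hy1, hy2⟩⟩
  have hZcl : ∀ T, IsClosed (Z T) := by
    intro T
    apply hV0cl.inter
    apply isClosed_iInter; intro n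
    apply isClosed_iInter; intro _
    have hcont : Continuous fun y : G => (α ^ n) x * ((α ^ n) y)⁻¹ :=
      continuous_const.mul ((cont_pow hc n).inv)
    exact (T.2.1.isClosed).preimage hcont
  have hZcpt : ∀ T, IsCompact (Z T) := fun T =>
    hV0c.of_isClosed_subset (hZcl T) (fun y hy => ((hZmem T y).1 hy).1)
  -- bridging
  have hbridge : ∀ (T T' : {T : Subgroup G // IsTidyFor α T}),
      (T'.1 : Set G) ⊆ (T.1 : Set G) → Z T' ⊆ Z T := by
    intro T T' hsub y' hy'
    obtain ⟨hy'V0, hy'T'⟩ := (hZmem T' y').1 hy'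
    obtain ⟨y, hy⟩ := hZne T
    obtain ⟨hyV0, hyT⟩ := (hZmem T y).1 hy
    set m : ℕ := max (NT T) (NT T')
    set d : G := y' * y⁻¹ with hd
    have hdV0 : d ∈ V0 := mul_mem_v0 α V hy'V0 (inv_mem_v0 α V hyV0)
    set w : G := (α ^ m) d with hw
    have hwT : w ∈ (T.1 : Set G) := by
      have hA : (α ^ m) x * ((α ^ m) y')⁻¹ ∈ (T.1 : Set G) :=
        hsub (hy'T' m (le_max_right _ _))
      have hB : (α ^ m) x * ((α ^ m) y)⁻¹ ∈ (T.1 : Set G) :=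
        hyT m (le_max_left _ _)
      have hcalc : w = ((α ^ m) x * ((α ^ m) y')⁻¹)⁻¹ *
          ((α ^ m) x * ((α ^ m) y)⁻¹) := by
        rw [hw, hd, map_mul, map_inv]; group
      rw [hcalc]
      exact mul_mem (inv_mem (SetLike.mem_coe.1 hA)) (SetLike.mem_coe.1 hB)
    have hwall := orbit_in_tidy α hc hc' T.1 T.2 hV0c
      (fun k => ⟨v0_pow_mem α V ((v0_pow_mem α V hdV0 m)) k,
        v0_pow_inv_mem α V ((v0_pow_mem α V hdV0 m)) k⟩) hwT
    have hdall : ∀ n : ℕ, (α ^ n) d ∈ (T.1 : Set G) := by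
      intro n
      rcases Nat.le_total n m with h | h
      · have h1 : (α ^ n) d = (α⁻¹ ^ (m - n)) w := by
          rw [hw]
          have h2 : (α ^ m) d = (α ^ (m - n)) ((α ^ n) d) := by
            rw [← apply_pow_add α (m - n) n, Nat.sub_add_cancel h]
          rw [h2, pow_cancel_self']
        rw [h1]
        exact (hwall (m - n)).2
      · have h1 : (α ^ n) d = (α ^ (n - m)) w := by
          rw [hw, ← apply_pow_add α (n - m) m, Nat.sub_add_cancel h]
        rw [h1]
        exact (hwall (n - m)).1
    refine (hZmem T y').2 ⟨hy'V0, fun n hn => ?_⟩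
    have hsplit : (α ^ n) x * ((α ^ n) y')⁻¹ =
        ((α ^ n) x * ((α ^ n) y)⁻¹) * ((α ^ n) d)⁻¹ := by
      rw [hd, map_mul, map_inv]; group
    rw [hsplit]
    exact mul_mem (SetLike.mem_coe.1 (hyT n hn))
      (inv_mem (SetLike.mem_coe.1 (hdall n)))
  have hdir : Directed (· ⊇ ·) Z := by
    intro T1 T2
    have hUopen : IsOpen ((T1.1 : Set G) ∩ (T2.1 : Set G)) := T1.2.2.1.inter T2.2.2.1
    have hUmem : ((T1.1 : Set G) ∩ (T2.1 : Set G)) ∈ 𝓝 (1 : G) :=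
      hUopen.mem_nhds ⟨one_mem T1.1, one_mem T2.1⟩
    obtain ⟨T3, hT3, hT3sub⟩ := hα _ hUmem
    exact ⟨⟨T3, hT3⟩,
      hbridge T1 ⟨T3, hT3⟩ (fun g hg => (hT3sub hg).1),
      hbridge T2 ⟨T3, hT3⟩ (fun g hg => (hT3sub hg).2)⟩
  obtain ⟨y, hy⟩ := IsCompact.nonempty_iInter_of_directed_nonempty_isCompact_isClosed
    Z hdir hZne hZcpt hZcl
  have hyV0 : y ∈ V0 := by
    obtain ⟨T⟩ := hne
    exact ((hZmem T y).1 (Set.mem_iInter.1 hy T)).1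
  refine ⟨x * y⁻¹, y, ?_, hyV0, by group⟩
  -- contraction
  rw [contractionGroup, Set.mem_setOf_eq, Filter.tendsto_def]
  intro U hU
  obtain ⟨T, hT, hTsub⟩ := hα U hU
  rw [Filter.mem_atTop_sets]
  refine ⟨NT ⟨T, hT⟩, fun n hn => ?_⟩
  have hyT := ((hZmem ⟨T, hT⟩ y).1 (Set.mem_iInter.1 hy ⟨T, hT⟩)).2 n hn
  have h1 : (α ^ n) (x * y⁻¹) = (α ^ n) x * ((α ^ n) y)⁻¹ := by
    rw [map_mul, map_inv]
  simp only [Set.mem_preimage]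
  rw [h1]
  exact hTsub hyT

/-! ### inversion lemmas and final assembly -/

lemma posPart_inv (α : MulAut G) (S : Set G) : posPart α⁻¹ S = negPart α S := rfl

lemma negPart_inv (α : MulAut G) (S : Set G) : negPart α⁻¹ S = posPart α S := by
  show (⋂ n : ℕ, ⇑(α⁻¹⁻¹ ^ n) '' S) = ⋂ n : ℕ, ⇑(α ^ n) '' S
  rw [inv_inv]

lemma ppPart_inv (α : MulAut G) (S : Set G) : ppPart α⁻¹ S = mmPart α S := rfl

lemma mmPart_inv (α : MulAut G) (S : Set G) : mmPart α⁻¹ S = ppPart α S := by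
  show (⋃ n : ℕ, ⇑(α⁻¹⁻¹ ^ n) '' negPart α⁻¹ S) = ⋃ n : ℕ, ⇑(α ^ n) '' posPart α S
  rw [inv_inv, negPart_inv]

lemma isTidyFor_inv (α : MulAut G) (V : Subgroup G) (hV : IsTidyFor α V) :
    IsTidyFor α⁻¹ V := by
  refine ⟨hV.1, hV.2.1, ?_, hV.2.2.2.2, ?_⟩
  · rw [posPart_inv, negPart_inv]
    -- V = V₋ V₊ from V = V₊ V₋
    apply Set.Subset.antisymm
    · intro g hg
      have hginv : g⁻¹ ∈ posPart α (V : Set G) * negPart α (V : Set G) := by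
        rw [← hV.2.2.1]
        exact inv_mem (SetLike.mem_coe.1 hg)
      obtain ⟨p, hp, q, hq, hpq⟩ := Set.mem_mul.1 hginv
      have : g = q⁻¹ * p⁻¹ := by
        have h2 := congrArg (·⁻¹) hpq
        simpa [mul_inv_rev] using h2.symm
      rw [this]
      exact Set.mul_mem_mul (inv_mem_negPart α V hq) (inv_mem_posPart α V hp)
    · intro g hg
      obtain ⟨q, hq, p, hp, hpq⟩ := Set.mem_mul.1 hg
      rw [← hpq]
      exact mul_mem (SetLike.mem_coe.1 (negPart_subset α V hq))
        (SetLike.mem_coe.1 (posPart_subset α V hp))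
  · rw [mmPart_inv]
    exact hV.2.2.2.1

lemma isTidy_inv (α : MulAut G) (hα : IsTidy α) : IsTidy α⁻¹ := by
  intro U hU
  obtain ⟨V, hV, hsub⟩ := hα U hU
  exact ⟨V, isTidyFor_inv α V hV, hsub⟩

lemma inv_mem_contraction (β : MulAut G) {u : G} (hu : u ∈ contractionGroup β) :
    u⁻¹ ∈ contractionGroup β := by
  have h1 : (fun n : ℕ => (β ^ n) u⁻¹) = fun n : ℕ => ((β ^ n) u)⁻¹ := by
    funext n; rw [map_inv]
  have h2 := Filter.Tendsto.inv hu
  rw [inv_one] at h2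
  rw [contractionGroup, Set.mem_setOf_eq, h1]
  exact h2

lemma v0_zpow_mem (α : MulAut G) (V : Subgroup G) {g : G}
    (hg : g ∈ posPart α (V : Set G) ∩ negPart α (V : Set G)) (n : ℤ) :
    (α ^ n) g ∈ posPart α (V : Set G) ∩ negPart α (V : Set G) := by
  cases n with
  | ofNat k =>
      rw [Int.ofNat_eq_coe, zpow_natCast]
      exact v0_pow_mem α V hg k
  | negSucc k =>
      rw [zpow_negSucc, ← inv_pow]
      exact v0_pow_inv_mem α V hg (k + 1)

lemma v0_subset_levSet [T2Space G] (α : MulAut G) (V : Subgroup G)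
    (hc : Continuous ⇑α) (hc' : Continuous ⇑(α⁻¹)) (hVc : IsCompact (V : Set G)) :
    (posPart α (V : Set G) ∩ negPart α (V : Set G)) ⊆ levSet α := by
  intro g hg
  have hrange : (Set.range fun n : ℤ => (α ^ n) g) ⊆
      posPart α (V : Set G) ∩ negPart α (V : Set G) := by
    rintro _ ⟨n, rfl⟩
    exact v0_zpow_mem α V hg n
  have hcl : closure (Set.range fun n : ℤ => (α ^ n) g) ⊆
      posPart α (V : Set G) ∩ negPart α (V : Set G) :=
    closure_minimal hrange (isClosed_V0 α V hc hc' hVc)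
  exact (isCompact_V0 α V hc hc' hVc).of_isClosed_subset isClosed_closure hcl

end St12

/-- If `α` is tidy, every subgroup `V` tidy for `α` satisfies
`V = (U_α ∩ V)(M_α ∩ V)(U_{α⁻¹} ∩ V)`; in particular `V ⊆ U_α · M_α · U_{α⁻¹}`. -/
theorem tidy_subgroup_decomposition
    {G : Type*} [Group G] [TopologicalSpace G] [IsTopologicalGroup G]
    [T2Space G] [LocallyCompactSpace G] [TotallyDisconnectedSpace G]
    (α : MulAut G) (hc : Continuous ⇑α) (hc' : Continuous ⇑α⁻¹)
    (hα : IsTidy α) (V : Subgroup G) (hV : IsTidyFor α V) :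
    (V : Set G) =
        (contractionGroup α ∩ V) * (levSet α ∩ V) * (contractionGroup α⁻¹ ∩ V) ∧
      (V : Set G) ⊆ contractionGroup α * levSet α * contractionGroup α⁻¹ := by
  have heq : (V : Set G) =
      (contractionGroup α ∩ V) * (levSet α ∩ V) * (contractionGroup α⁻¹ ∩ V) := by
    apply Set.Subset.antisymm
    · intro x hxV
      have hxinv : x⁻¹ ∈ posPart α (V : Set G) * negPart α (V : Set G) := by
        rw [← hV.2.2.1]
        exact inv_mem (SetLike.mem_coe.1 hxV)
      obtain ⟨p, hp, q, hq, hpq⟩ := Set.mem_mul.1 hxinv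
      have hq' : q⁻¹ ∈ negPart α (V : Set G) := St12.inv_mem_negPart α V hq
      obtain ⟨u, y, hu, hy, huy⟩ := St12.key α hc hc' hα V hV hq'
      have hα' : IsTidy α⁻¹ := St12.isTidy_inv α hα
      have hV' : IsTidyFor α⁻¹ V := St12.isTidyFor_inv α V hV
      have hcc : Continuous ⇑α⁻¹⁻¹ := by rw [inv_inv]; exact hc
      have hp' : p ∈ negPart α⁻¹ (V : Set G) := by
        rw [St12.negPart_inv]; exact hp
      obtain ⟨u₂, y₂, hu₂, hy₂, hpy⟩ := St12.key α⁻¹ hc' hcc hα' V hV' hp'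
      have hy₂' : y₂ ∈ posPart α (V : Set G) ∩ negPart α (V : Set G) := by
        constructor
        · have h3 := hy₂.2
          rw [St12.negPart_inv] at h3
          exact h3
        · exact hy₂.1
      have hmV0 : y * y₂⁻¹ ∈ posPart α (V : Set G) ∩ negPart α (V : Set G) :=
        St12.mul_mem_v0 α V hy (St12.inv_mem_v0 α V hy₂')
      have hxeq : x = u * (y * y₂⁻¹) * u₂⁻¹ := by
        have h1 : x = q⁻¹ * p⁻¹ := by
          have h2 := congrArg (·⁻¹) hpq
          simpa [mul_inv_rev] using h2.symm
        rw [h1, huy, hpy]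
        group
      have hv0V : ∀ g, g ∈ posPart α (V : Set G) ∩ negPart α (V : Set G) →
          g ∈ (V : Set G) := fun g hg => St12.posPart_subset α V hg.1
      have huV : u ∈ (V : Set G) := by
        have h4 : u = q⁻¹ * y⁻¹ := by rw [huy]; group
        rw [h4]
        exact mul_mem (SetLike.mem_coe.1 (St12.negPart_subset α V hq'))
          (inv_mem (SetLike.mem_coe.1 (hv0V y hy)))
      have hu₂V : u₂⁻¹ ∈ (V : Set G) := by
        have h4 : u₂ = p * y₂⁻¹ := by rw [hpy]; group
        apply inv_mem (SetLike.mem_coe.1 _)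
        rw [h4]
        exact mul_mem (SetLike.mem_coe.1 (St12.posPart_subset α V hp))
          (inv_mem (SetLike.mem_coe.1 (hv0V y₂ hy₂')))
      rw [hxeq]
      refine Set.mul_mem_mul (Set.mul_mem_mul ⟨hu, huV⟩ ?_) ?_
      · exact ⟨St12.v0_subset_levSet α V hc hc' hV.1 hmV0, hv0V _ hmV0⟩
      · exact ⟨St12.inv_mem_contraction α⁻¹ hu₂, hu₂V⟩
    · intro g hg
      obtain ⟨ab, hab, c, hc3, rfl⟩ := Set.mem_mul.1 hg
      obtain ⟨a, ha, b, hb, rfl⟩ := Set.mem_mul.1 hab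
      exact mul_mem (mul_mem (SetLike.mem_coe.1 ha.2) (SetLike.mem_coe.1 hb.2))
        (SetLike.mem_coe.1 hc3.2)
  refine ⟨heq, ?_⟩
  rw [heq]
  exact Set.mul_subset_mul (Set.mul_subset_mul Set.inter_subset_left Set.inter_subset_left)
    Set.inter_subset_left
end
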